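/- arXiv:2001.07477 — 6 statements merged into one kernel-verified Lean document; each statement's English description precedes it below -/
import Mathlib

section
/- (Emulator segment dichotomy, Lemma 3.1) There exist absolute constants c, c' ≥ 1 such that the following holds for every Thorup–Zwick hierarchy over a finite connected simple graph G as in the context. For every integer t ≥ 7, every integer i with 0 ≤ i ≤ ℓ−2, and all vertices x, y with d_G(x,y) ≤ t^i, at least one of the following holds: (1) d_H(x,y) ≤ d_G(x,y) + c·i·t^{i−1} (the segment is successful); or (2) d_G(x, p_{i+1}(x)) ≤ c'·t^i (the segment fails). -/
/-- The total weight of a walk, where `w x y` is the weight of the edge `(x,y)`. -/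
noncomputable def walkWeight {V : Type} {G : SimpleGraph V} (w : V → V → ℝ) {u v : V}
    (p : G.Walk u v) : ℝ :=
  (p.darts.map fun d => w d.toProd.1 d.toProd.2).sum

/-- The edge set of the Thorup–Zwick emulator for a hierarchy `A 0 ⊇ A 1 ⊇ ⋯` with
pivots `p` over an unweighted graph `G`: for `u ∈ A i \ A (i+1)` with `i ≤ ℓ-2`, `u` is
joined to every `v` in its bunch
`{v ∈ A i : d_G(u,v) < d_G(u, A (i+1))} ∪ {p (i+1) u}`, and all pairs of vertices of
`A (ℓ-1)` are joined. -/
def tzEdges {V : Type} (G : SimpleGraph V) (ℓ : ℕ) (A : ℕ → Set V) (p : ℕ → V → V) :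
    Set (Sym2 V) :=
  {e | ∃ u v : V, v ≠ u ∧ e = s(u, v) ∧
    ((∃ i, i ≤ ℓ - 2 ∧ u ∈ A i ∧ u ∉ A (i + 1) ∧
        ((v ∈ A i ∧ ∀ z ∈ A (i + 1), G.dist u v < G.dist u z) ∨ v = p (i + 1) u)) ∨
      (u ∈ A (ℓ - 1) ∧ v ∈ A (ℓ - 1)))}

/-!
Induction on the level `m`, with the failure alternative strengthened to a `Straddle`: emulator
walks from both ends of the segment into `A (m + 1)` that end near two points of a geodesic and
cost little more than the distance along it. For the step to `m + 1`, march along a geodesic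
from `x` in pieces of length `t ^ m` up to the first failing piece, and likewise from `y` back
towards it. Unless all pieces succeed, this reaches two vertices of `A (m + 1)`: either they are
joined by a bunch edge, and the segment succeeds, or each has a vertex of `A (m + 2)` at most
their distance away, one pivot edge off, and the segment fails at level `m + 1`.
-/

open SimpleGraph

namespace ThorupZwick

variable {V : Type} {G H : SimpleGraph V}

noncomputable def distWeight (G : SimpleGraph V) {u v : V} (q : H.Walk u v) : ℕ :=
  (q.darts.map fun d => G.dist d.toProd.1 d.toProd.2).sum

@[simp] lemma distWeight_nil {u : V} : distWeight G (Walk.nil : H.Walk u u) = 0 := rfl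

@[simp] lemma distWeight_cons {u v w : V} (h : H.Adj u v) (q : H.Walk v w) :
    distWeight G (Walk.cons h q) = G.dist u v + distWeight G q := rfl

@[simp] lemma distWeight_append {u v w : V} (q : H.Walk u v) (r : H.Walk v w) :
    distWeight G (q.append r) = distWeight G q + distWeight G r := by
  simp [distWeight, Walk.darts_append]

@[simp] lemma distWeight_reverse {u v : V} (q : H.Walk u v) :
    distWeight G q.reverse = distWeight G q := by
  simp [distWeight, Walk.darts_reverse, List.sum_reverse, Function.comp_def, dist_comm]

lemma walkWeight_eq_distWeight {u v : V} (q : H.Walk u v) :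
    walkWeight (fun a b => (G.dist a b : ℝ)) q = distWeight G q := by
  simp [walkWeight, distWeight, Function.comp_def]

lemma _root_.SimpleGraph.Connected.dist_le_distWeight (hc : G.Connected) {u v : V}
    (q : H.Walk u v) : G.dist u v ≤ distWeight G q := by
  induction q with
  | nil => simp
  | cons _ _ ih =>
    rw [distWeight_cons]
    exact hc.dist_triangle.trans (Nat.add_le_add_left ih _)

lemma _root_.SimpleGraph.Connected.exists_dist_eq_of_le_dist (hc : G.Connected) {x y : V}
    {k : ℕ} (hk : k ≤ G.dist x y) :
    ∃ b, G.dist x b = k ∧ G.dist x b + G.dist b y = G.dist x y := by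
  obtain ⟨q, hq⟩ := hc.exists_walk_length_eq_dist x y
  have hx := dist_le (q.take k)
  have hy := dist_le (q.drop k)
  have hxy : G.dist x y ≤ G.dist x (q.getVert k) + G.dist (q.getVert k) y := hc.dist_triangle
  rw [Walk.take_length] at hx
  rw [Walk.drop_length] at hy
  exact ⟨q.getVert k, by omega, by omega⟩

-- `e ≤ γ * s` charges the additive error of each full piece to its length.
lemma _root_.SimpleGraph.Connected.exists_walk_or_exists_failing_segment (hc : G.Connected)
    {P : V → V → Prop} {t s c e γ : ℕ} (hs : 0 < s) (he : e ≤ γ * s)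
    (hseg : ∀ x y, G.dist x y ≤ s →
      (∃ q : H.Walk x y, t * distWeight G q ≤ (t + c) * G.dist x y + e) ∨ P x y)
    (x y : V) :
    (∃ q : H.Walk x y, t * distWeight G q ≤ (t + (c + γ)) * G.dist x y + e) ∨
    ∃ u v : V, ∃ pre : H.Walk x u,
      G.dist x u + G.dist u y = G.dist x y ∧ G.dist u v + G.dist v y = G.dist u y ∧
      G.dist u v ≤ s ∧ t * distWeight G pre ≤ (t + (c + γ)) * G.dist x u ∧ P u v := by
  induction hn : G.dist x y using Nat.strong_induction_on generalizing x with
  | _ n ih =>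
  subst hn
  by_cases hshort : G.dist x y ≤ s
  · rcases hseg x y hshort with ⟨q, hq⟩ | hP
    · refine .inl ⟨q, hq.trans ?_⟩
      gcongr
      omega
    · exact .inr ⟨x, y, .nil, by simp, by simp, hshort, by simp, hP⟩
  obtain ⟨b, hxb, hbxy⟩ := hc.exists_dist_eq_of_le_dist (le_of_not_ge hshort)
  rcases hseg x b hxb.le with ⟨q₁, hq₁⟩ | hP
  · have hq₁' : t * distWeight G q₁ ≤ (t + (c + γ)) * G.dist x b := by
      rw [hxb] at hq₁ ⊢
      linarith
    rcases ih _ (by omega) b rfl with ⟨q₂, hq₂⟩ | ⟨u, v, pre, hbuy, huvy, huv, hpre, hP⟩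
    · refine .inl ⟨q₁.append q₂, ?_⟩
      rw [distWeight_append, ← hbxy]
      linarith
    · have : G.dist x u ≤ G.dist x b + G.dist b u := hc.dist_triangle
      have : G.dist x y ≤ G.dist x u + G.dist u y := hc.dist_triangle
      have hxu : G.dist x u = G.dist x b + G.dist b u := by omega
      refine .inr ⟨u, v, q₁.append pre, by omega, huvy, huv, ?_, hP⟩
      rw [distWeight_append, hxu]
      linarith
  · exact .inr ⟨x, b, .nil, by simp, hbxy, hxb.le, by simp, hP⟩

-- Weights are multiplied by `t` to keep errors such as `50 * m * d / t` in `ℕ`; the third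
-- condition puts `a` before `b` up to `r`.
def Straddle (G H : SimpleGraph V) (S : Set V) (t r E : ℕ) (x y : V) : Prop :=
  ∃ a b w w' : V, ∃ (qL : H.Walk x w) (qR : H.Walk y w'),
    G.dist x a + G.dist a y = G.dist x y ∧ G.dist x b + G.dist b y = G.dist x y ∧
    G.dist x a + G.dist a b + G.dist b y ≤ G.dist x y + r ∧
    w ∈ S ∧ w' ∈ S ∧ G.dist a w ≤ r ∧ G.dist b w' ≤ r ∧
    t * (distWeight G qL + distWeight G qR) ≤ t * (G.dist x a + G.dist b y) + E

section Straddle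

variable {S : Set V} {t r r' c e E E' K : ℕ} {x y u v u' v' : V}

lemma Straddle.mono (hS : Straddle G H S t r E x y) (hr : r ≤ r') (hE : E ≤ E') :
    Straddle G H S t r' E' x y := by
  obtain ⟨a, b, w, w', qL, qR, ha, hb, hab, hw, hw', haw, hbw, hq⟩ := hS
  exact ⟨a, b, w, w', qL, qR, ha, hb, by omega, hw, hw', by omega, by omega, by omega⟩

lemma straddle_of_mem (hx : x ∈ S) (hy : y ∈ S) : Straddle G H S t 0 0 x y :=
  ⟨x, y, x, y, .nil, .nil, by simp, by simp, by simp, hx, hy, by simp, by simp, by simp⟩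

lemma Straddle.exists_mem_dist_le (hc : G.Connected) (hS : Straddle G H S t r E x y) :
    ∃ w ∈ S, G.dist x w ≤ G.dist x y + r := by
  obtain ⟨a, -, w, -, -, -, ha, -, -, hw, -, haw, -, -⟩ := hS
  have : G.dist x w ≤ G.dist x a + G.dist a w := hc.dist_triangle
  exact ⟨w, hw, by omega⟩

lemma Straddle.extend (hc : G.Connected) (hS : Straddle G H S t r (c * G.dist u v + K) u v)
    (hxuy : G.dist x u + G.dist u y = G.dist x y) (huvy : G.dist u v + G.dist v y = G.dist u y)
    (pre : H.Walk x u) (hpre : t * distWeight G pre ≤ (t + c) * G.dist x u)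
    (suf : H.Walk y v) (hsuf : t * distWeight G suf ≤ (t + c) * G.dist y v + e) :
    Straddle G H S t r (c * G.dist x y + K + e) x y := by
  obtain ⟨a, b, w, w', qL, qR, ha, hb, hab, hw, hw', haw, hbw, hq⟩ := hS
  have : G.dist x a ≤ G.dist x u + G.dist u a := hc.dist_triangle
  have : G.dist a y ≤ G.dist a v + G.dist v y := hc.dist_triangle
  have : G.dist x b ≤ G.dist x u + G.dist u b := hc.dist_triangle
  have : G.dist b y ≤ G.dist b v + G.dist v y := hc.dist_triangle
  have : G.dist x y ≤ G.dist x a + G.dist a y := hc.dist_triangle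
  have : G.dist x y ≤ G.dist x b + G.dist b y := hc.dist_triangle
  have hyv : G.dist y v = G.dist v y := dist_comm
  have hxa : G.dist x a = G.dist x u + G.dist u a := by omega
  have hby : G.dist b y = G.dist b v + G.dist v y := by omega
  have hxy : G.dist x y = G.dist x u + G.dist u v + G.dist v y := by omega
  refine ⟨a, b, w, w', pre.append qL, suf.append qR, by omega, by omega, by omega, hw, hw', haw,
    hbw, ?_⟩
  rw [distWeight_append, distWeight_append, hxa, hby, hxy]
  rw [hyv] at hsuf
  linarith

-- The walks from `v` and `v'` are dropped, at the cost of the term `t * (d u v + d u' v')`.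
lemma Straddle.join (hc : G.Connected) (hS : Straddle G H S t r (c * G.dist u v + K) u v)
    (hS' : Straddle G H S t r (c * G.dist u' v' + K) u' v')
    (hxuy : G.dist x u + G.dist u y = G.dist x y) (huvy : G.dist u v + G.dist v y = G.dist u y)
    (hyu'v : G.dist y u' + G.dist u' v = G.dist y v)
    (hu'v'v : G.dist u' v' + G.dist v' v = G.dist u' v)
    (pre : H.Walk x u) (hpre : t * distWeight G pre ≤ (t + c) * G.dist x u)
    (pre' : H.Walk y u') (hpre' : t * distWeight G pre' ≤ (t + c) * G.dist y u') :
    Straddle G H S t r (c * G.dist x y + 2 * K + t * (G.dist u v + G.dist u' v')) x y := by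
  obtain ⟨a, b, w, z, qL, qR, ha, hb, -, hw, -, haw, -, hq⟩ := hS
  obtain ⟨a', b', w', z', qL', qR', ha', hb', -, hw', -, ha'w', -, hq'⟩ := hS'
  have : G.dist v' a' = G.dist a' v' := dist_comm
  have : G.dist x a ≤ G.dist x u + G.dist u a := hc.dist_triangle
  have : G.dist a y ≤ G.dist a v + G.dist v y := hc.dist_triangle
  have : G.dist a a' ≤ G.dist a v + G.dist v a' := hc.dist_triangle
  have : G.dist v a' ≤ G.dist v v' + G.dist v' a' := hc.dist_triangle
  have : G.dist x a' ≤ G.dist x v + G.dist v a' := hc.dist_triangle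
  have : G.dist x v ≤ G.dist x u + G.dist u v := hc.dist_triangle
  have : G.dist a' y ≤ G.dist a' u' + G.dist u' y := hc.dist_triangle
  have : G.dist x y ≤ G.dist x a + G.dist a y := hc.dist_triangle
  have : G.dist x y ≤ G.dist x a' + G.dist a' y := hc.dist_triangle
  have : G.dist v a' = G.dist a' v := dist_comm
  have : G.dist v v' = G.dist v' v := dist_comm
  have : G.dist v y = G.dist y v := dist_comm
  have : G.dist a' u' = G.dist u' a' := dist_comm
  have : G.dist u' y = G.dist y u' := dist_comm
  have hxa : G.dist x a = G.dist x u + G.dist u a := by omega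
  have ha'y : G.dist a' y = G.dist y u' + G.dist u' a' := by omega
  have hsplit : G.dist x u + G.dist u v + G.dist u' v' + G.dist y u' ≤ G.dist x y := by omega
  have hc' := Nat.mul_le_mul_left c hsplit
  have : t * G.dist b v ≤ t * G.dist u v := Nat.mul_le_mul_left t (by omega)
  have : t * G.dist b' v' ≤ t * G.dist u' v' := Nat.mul_le_mul_left t (by omega)
  have := Nat.zero_le (t * distWeight G qR)
  have := Nat.zero_le (t * distWeight G qR')
  refine ⟨a, a', w, w', pre.append qL, pre'.append qL', by omega, by omega, by omega, hw, hw',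
    haw, ha'w', ?_⟩
  rw [distWeight_append, distWeight_append, hxa, ha'y]
  linarith

end Straddle

-- The error grows with `d` rather than with the number of pieces, so it adds up along a march.
def SegmentDichotomy (G H : SimpleGraph V) (A : ℕ → Set V) (t m : ℕ) : Prop :=
  ∀ x y, G.dist x y ≤ t ^ m →
    (∃ q : H.Walk x y,
      t * distWeight G q ≤ (t + 50 * m) * G.dist x y + 50 * (t ^ m - 1)) ∨
    Straddle G H (A (m + 1)) t (2 * t ^ m) (50 * m * G.dist x y + 10 * t ^ (m + 1)) x y

lemma SegmentDichotomy.good_or_straddle_succ {A : ℕ → Set V} {t m : ℕ} (hc : G.Connected)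
    (ht : 0 < t) (ih : SegmentDichotomy G H A t m) (x y : V) :
    (∃ q : H.Walk x y, t * distWeight G q ≤
        (t + 50 * (m + 1)) * G.dist x y + 50 * (t ^ (m + 1) - 1)) ∨
      Straddle G H (A (m + 1)) t (2 * t ^ m)
        ((50 * m + 50) * G.dist x y + 22 * t ^ (m + 1) + 50 * t ^ m) x y := by
  have hT0 : 1 ≤ t ^ m := Nat.one_le_pow _ _ ht
  have hT1 : t ^ (m + 1) = t * t ^ m := pow_succ' t m
  have hT01 : t ^ m ≤ t ^ (m + 1) := hT1 ▸ Nat.le_mul_of_pos_left _ ht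
  have hmarch := hc.exists_walk_or_exists_failing_segment (t := t) (γ := 50)
    (P := fun u v => Straddle G H (A (m + 1)) t (2 * t ^ m)
      (50 * m * G.dist u v + 10 * t ^ (m + 1)) u v) (by omega) (by omega) ih
  have hweaken : ∀ {u v}, Straddle G H (A (m + 1)) t (2 * t ^ m)
      (50 * m * G.dist u v + 10 * t ^ (m + 1)) u v →
      Straddle G H (A (m + 1)) t (2 * t ^ m)
        ((50 * m + 50) * G.dist u v + 10 * t ^ (m + 1)) u v := fun hS =>
    hS.mono le_rfl (by gcongr; omega)
  rcases hmarch x y with ⟨q, hq⟩ | ⟨u, v, pre, hxuy, huvy, huv, hpre, hS⟩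
  · refine .inl ⟨q, hq.trans ?_⟩
    rw [show t + (50 * m + 50) = t + 50 * (m + 1) by ring]
    omega
  rcases hmarch y v with ⟨suf, hsuf⟩ | ⟨u', v', pre', hyu'v, hu'v'v, hu'v', hpre', hS'⟩
  · exact .inr (((hweaken hS).extend hc hxuy huvy pre hpre suf hsuf).mono le_rfl (by omega))
  · have : t * (G.dist u v + G.dist u' v') ≤ 2 * t ^ (m + 1) := by
      rw [hT1, mul_left_comm]
      exact Nat.mul_le_mul_left t (by omega)
    exact .inr (((hweaken hS).join hc (hweaken hS') hxuy huvy hyu'v hu'v'v pre hpre pre'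
      hpre').mono le_rfl (by omega))

lemma distWeight_le_of_scaled_bound {t i : ℕ} {x y : V} (ht : 0 < t) (hxy : G.dist x y ≤ t ^ i)
    {q : H.Walk x y} (hq : t * distWeight G q ≤ (t + 50 * i) * G.dist x y + 50 * (t ^ i - 1)) :
    distWeight G q ≤ G.dist x y + 100 * i * t ^ (i - 1) := by
  cases i with
  | zero => simpa using Nat.le_of_mul_le_mul_left (by simpa using hq) ht
  | succ j =>
    have hT : t ^ (j + 1) = t * t ^ j := pow_succ' t j
    have := Nat.mul_le_mul_left (50 * (j + 1)) hxy
    refine Nat.le_of_mul_le_mul_left ?_ ht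
    simp only [Nat.add_sub_cancel]
    rw [hT] at this hq
    have hsub : 50 * (t * t ^ j - 1) ≤ 50 * (t * t ^ j) := by omega
    have := Nat.zero_le (j * (t * t ^ j))
    linarith

section Emulator

variable {ℓ : ℕ} {A : ℕ → Set V} {p : ℕ → V → V} {k t : ℕ}

lemma tzEdges_adj_of_mem_bunch (hk : k + 2 ≤ ℓ) {u v : V} (hu : u ∈ A k) (hu' : u ∉ A (k + 1))
    (hv : v ∈ A k) (huv : u ≠ v) (hlt : ∀ z ∈ A (k + 1), G.dist u v < G.dist u z) :
    (fromEdgeSet (tzEdges G ℓ A p)).Adj u v :=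
  (fromEdgeSet_adj _).2
    ⟨⟨u, v, huv.symm, rfl, .inl ⟨k, by omega, hu, hu', .inl ⟨hv, hlt⟩⟩⟩, huv⟩

lemma tzEdges_adj_pivot (hk : k + 2 ≤ ℓ) {u : V} (hu : u ∈ A k) (hu' : u ∉ A (k + 1))
    (hne : p (k + 1) u ≠ u) : (fromEdgeSet (tzEdges G ℓ A p)).Adj u (p (k + 1) u) :=
  (fromEdgeSet_adj _).2 ⟨⟨u, _, hne, rfl, .inl ⟨k, by omega, hu, hu', .inr rfl⟩⟩, hne.symm⟩

lemma exists_walk_or_exists_near_next_level (hk : k + 2 ≤ ℓ) {w w' : V} (hw : w ∈ A k)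
    (hw' : w' ∈ A k) :
    (∃ q : (fromEdgeSet (tzEdges G ℓ A p)).Walk w w', distWeight G q ≤ G.dist w w') ∨
      ∃ ζ ∈ A (k + 1), G.dist w ζ ≤ G.dist w w' := by
  by_cases hww : w = w'
  · subst hww
    exact .inl ⟨.nil, by simp⟩
  by_cases hbunch : w ∉ A (k + 1) ∧ ∀ z ∈ A (k + 1), G.dist w w' < G.dist w z
  · exact .inl ⟨.cons (tzEdges_adj_of_mem_bunch hk hw hbunch.1 hw' hww hbunch.2) .nil, by simp⟩
  rw [not_and_or, not_not] at hbunch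
  push Not at hbunch
  rcases hbunch with hw₁ | hnear
  · exact .inr ⟨w, hw₁, by simp⟩
  · exact .inr hnear

variable (hp : ∀ i, 1 ≤ i → i ≤ ℓ - 1 → ∀ v : V,
  p i v ∈ A i ∧ ∀ z ∈ A i, G.dist v (p i v) ≤ G.dist v z)
include hp

lemma exists_walk_to_next_level (hk : k + 2 ≤ ℓ) {v ζ : V} (hv : v ∈ A k)
    (hζ : ζ ∈ A (k + 1)) :
    ∃ W ∈ A (k + 1), ∃ q : (fromEdgeSet (tzEdges G ℓ A p)).Walk v W,
      distWeight G q ≤ G.dist v ζ := by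
  by_cases hv' : v ∈ A (k + 1)
  · exact ⟨v, hv', .nil, by simp⟩
  obtain ⟨hpv, hopt⟩ := hp (k + 1) (by omega) (by omega) v
  have hne : p (k + 1) v ≠ v := fun h => hv' (h ▸ hpv)
  exact ⟨_, hpv, .cons (tzEdges_adj_pivot hk hv hv' hne) .nil, by simpa using hopt ζ hζ⟩

lemma Straddle.hop_or_climb (hc : G.Connected) (hk : k + 2 ≤ ℓ) {r E : ℕ} {x y : V}
    (hS : Straddle G (fromEdgeSet (tzEdges G ℓ A p)) (A k) t r E x y) :
    (∃ q : (fromEdgeSet (tzEdges G ℓ A p)).Walk x y,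
        t * distWeight G q ≤ t * (G.dist x y + 3 * r) + E) ∨
      Straddle G (fromEdgeSet (tzEdges G ℓ A p)) (A (k + 1)) t (3 * r + G.dist x y)
        (E + 2 * (t * (2 * r + G.dist x y))) x y := by
  obtain ⟨a, b, w, w', qL, qR, ha, hb, hab, hw, hw', haw, hbw, hq⟩ := hS
  have : G.dist w w' ≤ G.dist w a + G.dist a w' := hc.dist_triangle
  have : G.dist a w' ≤ G.dist a b + G.dist b w' := hc.dist_triangle
  have : G.dist a b ≤ G.dist a x + G.dist x b := hc.dist_triangle
  have : G.dist a b ≤ G.dist a y + G.dist y b := hc.dist_triangle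
  have : G.dist w a = G.dist a w := dist_comm
  have : G.dist a x = G.dist x a := dist_comm
  have : G.dist y b = G.dist b y := dist_comm
  have hww : G.dist w w' ≤ 2 * r + G.dist a b := by omega
  have hww' : G.dist w w' ≤ 2 * r + G.dist x y := by omega
  have hop : ∀ br : (fromEdgeSet (tzEdges G ℓ A p)).Walk w w', distWeight G br ≤ G.dist w w' →
      ∃ q : (fromEdgeSet (tzEdges G ℓ A p)).Walk x y,
        t * distWeight G q ≤ t * (G.dist x y + 3 * r) + E := fun br hbr => by
    refine ⟨qL.append (br.append qR.reverse), ?_⟩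
    have := Nat.mul_le_mul_left t (show distWeight G br + G.dist x a + G.dist b y ≤
      G.dist x y + 3 * r by omega)
    simp only [distWeight_append, distWeight_reverse]
    linarith
  obtain ⟨br, hbr⟩ | ⟨ζ, hζ, hwζ⟩ := exists_walk_or_exists_near_next_level hk hw hw'
  · exact .inl (hop br hbr)
  obtain ⟨br, hbr⟩ | ⟨ζ', hζ', hw'ζ'⟩ := exists_walk_or_exists_near_next_level hk hw' hw
  · exact .inl (hop br.reverse (by rw [distWeight_reverse, dist_comm]; exact hbr))
  obtain ⟨W, hW, qW, hqW⟩ := exists_walk_to_next_level hp hk hw hζ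
  obtain ⟨W', hW', qW', hqW'⟩ := exists_walk_to_next_level hp hk hw' hζ'
  have : G.dist w W ≤ distWeight G qW := hc.dist_le_distWeight qW
  have : G.dist w' W' ≤ distWeight G qW' := hc.dist_le_distWeight qW'
  have : G.dist a W ≤ G.dist a w + G.dist w W := hc.dist_triangle
  have : G.dist b W' ≤ G.dist b w' + G.dist w' W' := hc.dist_triangle
  have : G.dist w' w = G.dist w w' := dist_comm
  have := Nat.mul_le_mul_left t (show distWeight G qW ≤ 2 * r + G.dist x y by omega)
  have := Nat.mul_le_mul_left t (show distWeight G qW' ≤ 2 * r + G.dist x y by omega)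
  refine .inr ⟨a, b, W, W', qL.append qW, qR.append qW', ha, hb, by omega, hW, hW', by omega,
    by omega, ?_⟩
  simp only [distWeight_append]
  linarith

variable (hc : G.Connected)
include hc

lemma segmentDichotomy_zero (hl : 2 ≤ ℓ) (hA0 : A 0 = Set.univ) :
    SegmentDichotomy G (fromEdgeSet (tzEdges G ℓ A p)) A t 0 := by
  intro x y hxy
  have hS : Straddle G (fromEdgeSet (tzEdges G ℓ A p)) (A 0) t 0 0 x y :=
    straddle_of_mem (by simp [hA0]) (by simp [hA0])
  rcases hS.hop_or_climb hp hc (by omega) with ⟨q, hq⟩ | hS'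
  · exact .inl ⟨q, by simpa using hq⟩
  · refine .inr (hS'.mono (by simp at hxy ⊢; omega) ?_)
    have : t * G.dist x y ≤ t * 1 := Nat.mul_le_mul_left t (by simpa using hxy)
    simp only [zero_add, pow_one, mul_zero, zero_mul]
    omega

lemma segmentDichotomy_succ (ht : 7 ≤ t) {m : ℕ} (hm : m + 3 ≤ ℓ)
    (ih : SegmentDichotomy G (fromEdgeSet (tzEdges G ℓ A p)) A t m) :
    SegmentDichotomy G (fromEdgeSet (tzEdges G ℓ A p)) A t (m + 1) := by
  intro x y hxy
  have hT0 : 1 ≤ t ^ m := Nat.one_le_pow _ _ (by omega)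
  have hT1 : t ^ (m + 1) = t * t ^ m := pow_succ' t m
  have hT2 : t ^ (m + 1 + 1) = t * t ^ (m + 1) := pow_succ' t (m + 1)
  have h7 : 7 * t ^ m ≤ t ^ (m + 1) := hT1 ▸ Nat.mul_le_mul_right _ ht
  have h7' : 7 * t ^ (m + 1) ≤ t ^ (m + 1 + 1) := hT2 ▸ Nat.mul_le_mul_right _ ht
  have htd : t * G.dist x y ≤ t ^ (m + 1 + 1) := hT2 ▸ Nat.mul_le_mul_left t hxy
  have hsub : 50 * (t ^ (m + 1) - 1) + 50 = 50 * t ^ (m + 1) := by omega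
  rcases ih.good_or_straddle_succ hc (by omega) x y with hgood | hS
  · exact .inl hgood
  rcases hS.hop_or_climb hp hc (by omega) with ⟨q, hq⟩ | hS'
  · refine .inl ⟨q, ?_⟩
    linarith
  · refine .inr (hS'.mono (by omega) ?_)
    linarith

lemma segmentDichotomy_of_add_two_le (hA0 : A 0 = Set.univ) (ht : 7 ≤ t) :
    ∀ m, m + 2 ≤ ℓ → SegmentDichotomy G (fromEdgeSet (tzEdges G ℓ A p)) A t m
  | 0, hl => segmentDichotomy_zero hp hc hl hA0
  | m + 1, hm => segmentDichotomy_succ hp hc ht (by omega)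
      (segmentDichotomy_of_add_two_le hA0 ht m (by omega))

end Emulator

end ThorupZwick

/-- **Emulator segment dichotomy (Lemma 3.1).**
There are absolute constants `c, c' ≥ 1` such that for every Thorup–Zwick hierarchy over a
finite connected simple graph `G`, every integer `t ≥ 7`, every `i ≤ ℓ-2` and all vertices
`x, y` with `d_G(x,y) ≤ t^i`, either the segment is successful, i.e. the emulator `H`
contains a path from `x` to `y` of length at most `d_G(x,y) + c·i·t^(i-1)`, or it fails,
i.e. `d_G(x, p_{i+1}(x)) ≤ c'·t^i`. -/
theorem emulator_segment_dichotomy :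
    ∃ c c' : ℝ, 1 ≤ c ∧ 1 ≤ c' ∧
      ∀ (V : Type) [Fintype V] (G : SimpleGraph V), G.Connected →
      ∀ ℓ : ℕ, 2 ≤ ℓ →
      ∀ A : ℕ → Set V,
        A 0 = Set.univ → A ℓ = ∅ → (∀ i, A (i + 1) ⊆ A i) →
        (∀ i ≤ ℓ - 1, (A i).Nonempty) →
      ∀ p : ℕ → V → V,
        (∀ i, 1 ≤ i → i ≤ ℓ - 1 → ∀ v : V,
          p i v ∈ A i ∧ ∀ z ∈ A i, G.dist v (p i v) ≤ G.dist v z) →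
      ∀ t : ℕ, 7 ≤ t →
      ∀ i ≤ ℓ - 2, ∀ x y : V,
        (G.dist x y : ℝ) ≤ (t : ℝ) ^ i →
        (∃ q : (SimpleGraph.fromEdgeSet (tzEdges G ℓ A p)).Walk x y,
            walkWeight (fun a b => (G.dist a b : ℝ)) q ≤
              (G.dist x y : ℝ) + c * (i : ℝ) * (t : ℝ) ^ (i - 1)) ∨
        (G.dist x (p (i + 1) x) : ℝ) ≤ c' * (t : ℝ) ^ i := by
  refine ⟨100, 3, by norm_num, by norm_num, ?_⟩
  intro V _ G hc ℓ hℓ A hA0 _ _ _ p hp t ht i hi x y hxy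
  have hxy' : G.dist x y ≤ t ^ i := by exact_mod_cast hxy
  rcases ThorupZwick.segmentDichotomy_of_add_two_le hp hc hA0 ht i (by omega) x y hxy' with
    ⟨q, hq⟩ | hS
  · refine .inl ⟨q, ?_⟩
    rw [ThorupZwick.walkWeight_eq_distWeight]
    exact_mod_cast ThorupZwick.distWeight_le_of_scaled_bound (by omega) hxy' hq
  · obtain ⟨w, hw, hxw⟩ := hS.exists_mem_dist_le hc
    have := (hp (i + 1) (by omega) (by omega) x).2 w hw
    exact .inr (by exact_mod_cast (show G.dist x (p (i + 1) x) ≤ 3 * t ^ i by omega))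
end

section
/- (Top-level segments never fail, emulator) There exists an absolute constant c ≥ 1 such that the following holds for every Thorup–Zwick hierarchy over a finite connected simple graph G as in the context. For every integer t ≥ 7 and all vertices x, y with d_G(x,y) ≤ t^{ℓ−1}, one has d_H(x,y) ≤ d_G(x,y) + c·(ℓ−1)·t^{ℓ−2}. -/
open scoped Classical

open SimpleGraph

namespace TZProof

/-- cumulative ladder radius -/
def rr (t : ℕ) : ℕ → ℕ
  | 0 => 0
  | m+1 => 3 * rr t m + t ^ m

/-- rung threshold at level `m` -/
def th (t m : ℕ) : ℕ := t ^ m + 2 * rr t m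

noncomputable def lad {V : Type} (A : ℕ → Set V) (p : ℕ → V → V) : ℕ → V → V
  | 0, v => v
  | m+1, v => if lad A p m v ∈ A (m+1) then lad A p m v else p (m+1) (lad A p m v)

/-- the ladder of `v` is cheap up to level `m` -/
def twr {V : Type} (G : SimpleGraph V) (A : ℕ → Set V) (p : ℕ → V → V) (t : ℕ)
    (m : ℕ) (v : V) : Prop :=
  ∀ k, k < m → lad A p k v ∈ A (k+1) ∨
    G.dist (lad A p k v) (p (k+1) (lad A p k v)) ≤ th t k

/-- weight of a walk in an auxiliary graph, measured by `G.dist` -/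
noncomputable def wN {V : Type} (G : SimpleGraph V) {H : SimpleGraph V} {u v : V} (w : H.Walk u v) : ℕ :=
  (w.darts.map fun d => G.dist d.toProd.1 d.toProd.2).sum

lemma rr_succ (t m : ℕ) : rr t (m+1) = rr t m + th t m := by
  simp only [rr, th]; ring

lemma rr_mono (t : ℕ) {m n : ℕ} (h : m ≤ n) : rr t m ≤ rr t n := by
  induction n with
  | zero =>
    have hm : m = 0 := by omega
    subst hm; exact le_refl _
  | succ n IH =>
    rcases Nat.lt_or_ge m (n+1) with h' | h'
    · have h2 := IH (by omega)
      have h3 : rr t n ≤ rr t (n+1) := by rw [rr_succ]; omega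
      omega
    · have hm : m = n+1 := by omega
      subst hm; exact le_refl _

lemma rr_le {t : ℕ} (ht : 6 ≤ t) : ∀ m, rr t (m+1) ≤ 2 * t ^ m := by
  intro m
  induction m with
  | zero => simp [rr]
  | succ m IH =>
    have h1 : 6 * t ^ m ≤ t ^ (m+1) := by
      have : t ^ (m+1) = t * t ^ m := by ring
      rw [this]; exact Nat.mul_le_mul_right _ ht
    simp only [rr] at *
    omega

lemma th_le {t : ℕ} (ht : 6 ≤ t) : ∀ m, th t m ≤ 2 * t ^ m := by
  intro m
  cases m with
  | zero => simp [th, rr]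
  | succ m =>
    have h1 := rr_le ht m
    have h2 : 4 * t ^ m ≤ t ^ (m+1) := by
      have : t ^ (m+1) = t * t ^ m := by ring
      rw [this]; exact Nat.mul_le_mul_right _ (by omega)
    simp only [th]; omega

lemma one_le_pow {t : ℕ} (ht : 1 ≤ t) (m : ℕ) : 1 ≤ t ^ m :=
  Nat.one_le_pow _ _ (by omega)

lemma pow_mono {t : ℕ} (ht : 1 ≤ t) {a b : ℕ} (h : a ≤ b) : t ^ a ≤ t ^ b :=
  Nat.pow_le_pow_right (by omega) h

section Graph

variable {V : Type} {G : SimpleGraph V} {A : ℕ → Set V} {p : ℕ → V → V} {t ℓ : ℕ}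

lemma lad_mem (hA0 : A 0 = Set.univ)
    (hp : ∀ i, 1 ≤ i → i ≤ ℓ-1 → ∀ v : V, p i v ∈ A i ∧ ∀ z ∈ A i, G.dist v (p i v) ≤ G.dist v z)
    {m : ℕ} (hm : m ≤ ℓ - 1) (v : V) : lad A p m v ∈ A m := by
  induction m with
  | zero => simp [lad, hA0]
  | succ m IH =>
    by_cases h : lad A p m v ∈ A (m+1)
    · simpa [lad, h] using h
    · simp only [lad, if_neg h]
      exact (hp (m+1) (by omega) (by omega) _).1

lemma twr_mono {m' m : ℕ} (h : m' ≤ m) {v : V} (htw : twr G A p t m v) : twr G A p t m' v :=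
  fun k hk => htw k (by omega)

lemma twr_zero (v : V) : twr G A p t 0 v := fun k hk => by omega

lemma dist_lad (hG : G.Connected) {m : ℕ} {v : V} (htw : twr G A p t m v) :
    G.dist v (lad A p m v) ≤ rr t m := by
  induction m with
  | zero => simp [lad, rr]
  | succ m IH =>
    have h1 : G.dist v (lad A p m v) ≤ rr t m := IH (twr_mono (by omega) htw)
    by_cases h : lad A p m v ∈ A (m+1)
    · simp only [lad, if_pos h]
      calc G.dist v (lad A p m v) ≤ rr t m := h1
        _ ≤ rr t (m+1) := rr_mono t (by omega)
    · have h2 : G.dist (lad A p m v) (p (m+1) (lad A p m v)) ≤ th t m := by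
        rcases htw m (by omega) with h' | h'
        · exact absurd h' h
        · exact h'
      simp only [lad, if_neg h]
      calc G.dist v (p (m+1) (lad A p m v))
          ≤ G.dist v (lad A p m v) + G.dist (lad A p m v) (p (m+1) (lad A p m v)) :=
            hG.dist_triangle
        _ ≤ rr t m + th t m := by omega
        _ = rr t (m+1) := (rr_succ t m).symm

lemma rung_adj (hℓ : 2 ≤ ℓ) (hA0 : A 0 = Set.univ)
    (hp : ∀ i, 1 ≤ i → i ≤ ℓ-1 → ∀ v : V, p i v ∈ A i ∧ ∀ z ∈ A i, G.dist v (p i v) ≤ G.dist v z)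
    {k : ℕ} (hk : k + 1 ≤ ℓ - 1) {v : V} (htw : twr G A p t (k+1) v) :
    lad A p (k+1) v = lad A p k v ∨
    ((SimpleGraph.fromEdgeSet (tzEdges G ℓ A p)).Adj (lad A p k v) (lad A p (k+1) v) ∧
      G.dist (lad A p k v) (lad A p (k+1) v) ≤ th t k) := by
  by_cases h : lad A p k v ∈ A (k+1)
  · left; simp [lad, h]
  · right
    have hlad : lad A p (k+1) v = p (k+1) (lad A p k v) := by simp [lad, h]
    have hpm : p (k+1) (lad A p k v) ∈ A (k+1) := (hp (k+1) (by omega) (by omega) _).1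
    have hne : p (k+1) (lad A p k v) ≠ lad A p k v := fun he => h (he ▸ hpm)
    have hmem : s(lad A p k v, p (k+1) (lad A p k v)) ∈ tzEdges G ℓ A p := by
      refine ⟨lad A p k v, p (k+1) (lad A p k v), hne, rfl, Or.inl ⟨k, by omega,
        lad_mem hA0 hp (by omega) v, h, Or.inr rfl⟩⟩
    have hdist : G.dist (lad A p k v) (p (k+1) (lad A p k v)) ≤ th t k := by
      rcases htw k (by omega) with h' | h'
      · exact absurd h' h
      · exact h'
    rw [hlad]
    exact ⟨(SimpleGraph.fromEdgeSet_adj _).2 ⟨hmem, fun he => hne he.symm⟩, hdist⟩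

lemma wN_nil {H : SimpleGraph V} {v : V} : wN G (SimpleGraph.Walk.nil : H.Walk v v) = 0 := by
  simp [wN]

lemma wN_cons {H : SimpleGraph V} {u v w : V} (h : H.Adj u v) (q : H.Walk v w) :
    wN G (SimpleGraph.Walk.cons h q) = G.dist u v + wN G q := by
  simp [wN, SimpleGraph.Walk.darts_cons]

lemma ladder_walk (hG : G.Connected) (hℓ : 2 ≤ ℓ) (hA0 : A 0 = Set.univ)
    (hp : ∀ i, 1 ≤ i → i ≤ ℓ-1 → ∀ v : V, p i v ∈ A i ∧ ∀ z ∈ A i, G.dist v (p i v) ≤ G.dist v z)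
    {j : ℕ} (hj : j ≤ ℓ - 1) {v : V} (htw : twr G A p t j v) :
    ∃ w : (SimpleGraph.fromEdgeSet (tzEdges G ℓ A p)).Walk (lad A p j v) v,
      wN G w ≤ rr t j := by
  induction j with
  | zero => exact ⟨SimpleGraph.Walk.nil, by simp [wN, rr]; rfl⟩
  | succ j IH =>
    obtain ⟨w, hw⟩ := IH (by omega) (twr_mono (by omega) htw)
    rcases rung_adj hℓ hA0 hp (by omega) htw with he | ⟨hadj, hd⟩
    · refine ⟨w.copy he.symm rfl, ?_⟩
      have : wN G (w.copy he.symm rfl) = wN G w := by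
        simp [wN, SimpleGraph.Walk.darts_copy]
      rw [this]
      exact le_trans hw (rr_mono t (by omega))
    · refine ⟨SimpleGraph.Walk.cons hadj.symm w, ?_⟩
      rw [wN_cons]
      have hd' : G.dist (lad A p (j+1) v) (lad A p j v) ≤ th t j := by
        rwa [SimpleGraph.dist_comm] at hd
      rw [rr_succ]
      omega

lemma clique_adj (hne : ∀ u₁ u₂ : V, True) {u₁ u₂ : V} (h1 : u₁ ∈ A (ℓ-1)) (h2 : u₂ ∈ A (ℓ-1))
    (hne12 : u₁ ≠ u₂) :
    (SimpleGraph.fromEdgeSet (tzEdges G ℓ A p)).Adj u₁ u₂ :=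
  (SimpleGraph.fromEdgeSet_adj _).2 ⟨⟨u₁, u₂, hne12.symm, rfl, Or.inr ⟨h1, h2⟩⟩, hne12⟩

lemma dich (hG : G.Connected) (hℓ : 2 ≤ ℓ) (hA0 : A 0 = Set.univ)
    (hp : ∀ i, 1 ≤ i → i ≤ ℓ-1 → ∀ v : V, p i v ∈ A i ∧ ∀ z ∈ A i, G.dist v (p i v) ≤ G.dist v z)
    {j : ℕ} (hj : j ≤ ℓ - 1) {v₁ v₂ : V} (h1 : twr G A p t j v₁) (h2 : twr G A p t j v₂)
    (hd : G.dist (lad A p j v₁) (lad A p j v₂) ≤ th t j)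
    (hne : lad A p j v₁ ≠ lad A p j v₂)
    (hnadj : ¬ (SimpleGraph.fromEdgeSet (tzEdges G ℓ A p)).Adj (lad A p j v₁) (lad A p j v₂)) :
    j + 1 ≤ ℓ - 1 ∧ twr G A p t (j+1) v₁ ∧ twr G A p t (j+1) v₂ := by
  set u₁ := lad A p j v₁ with hu₁
  set u₂ := lad A p j v₂ with hu₂
  have hm1 : u₁ ∈ A j := lad_mem hA0 hp hj v₁
  have hm2 : u₂ ∈ A j := lad_mem hA0 hp hj v₂
  have hnmem : s(u₁, u₂) ∉ tzEdges G ℓ A p := fun h =>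
    hnadj ((SimpleGraph.fromEdgeSet_adj _).2 ⟨h, hne⟩)
  have hjlt : j + 1 ≤ ℓ - 1 := by
    rcases Nat.lt_or_ge j (ℓ-1) with h' | h'
    · omega
    · exfalso
      have hj' : j = ℓ - 1 := by omega
      exact hnmem ⟨u₁, u₂, hne.symm, rfl, Or.inr ⟨hj' ▸ hm1, hj' ▸ hm2⟩⟩
  have key : ∀ (a b : V), a ∈ A j → b ∈ A j → b ≠ a →
      s(a, b) ∉ tzEdges G ℓ A p → G.dist a b ≤ th t j →
      (a ∈ A (j+1) ∨ G.dist a (p (j+1) a) ≤ th t j) := by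
    intro a b ha hb hab hnm hdab
    by_cases hmem : a ∈ A (j+1)
    · exact Or.inl hmem
    · right
      have hnb : ¬ (∀ w ∈ A (j+1), G.dist a b < G.dist a w) := by
        intro hall
        exact hnm ⟨a, b, hab, rfl, Or.inl ⟨j, by omega, ha, hmem, Or.inl ⟨hb, hall⟩⟩⟩
      push_neg at hnb
      obtain ⟨w, hw, hwd⟩ := hnb
      calc G.dist a (p (j+1) a) ≤ G.dist a w := (hp (j+1) (by omega) (by omega) a).2 w hw
        _ ≤ G.dist a b := hwd
        _ ≤ th t j := hdab
  have hnmem' : s(u₂, u₁) ∉ tzEdges G ℓ A p := by rwa [Sym2.eq_swap]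
  have hd' : G.dist u₂ u₁ ≤ th t j := by rwa [SimpleGraph.dist_comm] at hd
  have k1 := key u₁ u₂ hm1 hm2 hne.symm hnmem hd
  have k2 := key u₂ u₁ hm2 hm1 hne hnmem' hd'
  refine ⟨hjlt, ?_, ?_⟩
  · intro k hk
    rcases Nat.lt_or_ge k j with h' | h'
    · exact h1 k h'
    · have : k = j := by omega
      subst this; exact k1
  · intro k hk
    rcases Nat.lt_or_ge k j with h' | h'
    · exact h2 k h'
    · have : k = j := by omega
      subst this; exact k2

lemma dist_getVert (hG : G.Connected) {x y : V} (w₀ : G.Walk x y) :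
    ∀ a b, a ≤ b → b ≤ w₀.length → G.dist (w₀.getVert a) (w₀.getVert b) ≤ b - a := by
  have key : ∀ a k, a + k ≤ w₀.length →
      G.dist (w₀.getVert a) (w₀.getVert (a + k)) ≤ k := by
    intro a k
    induction k with
    | zero => simp
    | succ k IH =>
      intro h
      have h1 : G.dist (w₀.getVert a) (w₀.getVert (a+k)) ≤ k := IH (by omega)
      have hadj : G.Adj (w₀.getVert (a+k)) (w₀.getVert (a+k+1)) :=
        w₀.adj_getVert_succ (by omega)
      have h2 : G.dist (w₀.getVert (a+k)) (w₀.getVert (a+k+1)) ≤ 1 := by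
        have := SimpleGraph.dist_le (SimpleGraph.Walk.cons hadj SimpleGraph.Walk.nil)
        simpa using this
      calc G.dist (w₀.getVert a) (w₀.getVert (a+k+1))
          ≤ G.dist (w₀.getVert a) (w₀.getVert (a+k)) +
            G.dist (w₀.getVert (a+k)) (w₀.getVert (a+k+1)) := hG.dist_triangle
        _ ≤ k + 1 := by omega
  intro a b hab hb
  have := key a (b - a) (by omega)
  rwa [Nat.add_sub_cancel' hab] at this

end Graph

/-- hop-barrier potential term -/
def lam (D q b T : ℕ) : ℕ := 12 * ((D - q) + (D - max b q) + (if b < D then T else 0))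

/-- descend-barrier potential term -/
def psi (D T : ℕ) : Option ℕ → ℕ
  | none => 8 * (D + T)
  | some b => 8 * (D - b)

/-- battery potential -/
def SSP (t ℓ j : ℕ) : ℕ := rr t j + 2 * (rr t (ℓ - 1) - rr t j)

lemma SSP_climb {t ℓ j : ℕ} (hj : j + 1 ≤ ℓ - 1) : SSP t ℓ (j+1) + th t j = SSP t ℓ j := by
  have h1 : rr t (j+1) = rr t j + th t j := rr_succ t j
  have h2 : rr t (j+1) ≤ rr t (ℓ-1) := rr_mono t hj
  simp only [SSP]; omega

lemma SSP_descend {t ℓ k : ℕ} (hk : k + 1 ≤ ℓ - 1) : SSP t ℓ k = SSP t ℓ (k+1) + th t k := by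
  have h1 : rr t (k+1) = rr t k + th t k := rr_succ t k
  have h2 : rr t (k+1) ≤ rr t (ℓ-1) := rr_mono t hk
  simp only [SSP]; omega

lemma rr_le_SSP (t ℓ j : ℕ) : rr t j ≤ SSP t ℓ j := by simp only [SSP]; omega

lemma SSP_le {t ℓ : ℕ} (hℓ : 2 ≤ ℓ) (ht : 6 ≤ t) (j : ℕ) (hj : j ≤ ℓ - 1) :
    SSP t ℓ j ≤ 4 * t ^ (ℓ - 2) := by
  have h1 : rr t (ℓ-1) ≤ 2 * t ^ (ℓ-2) := by
    have : ℓ - 1 = (ℓ - 2) + 1 := by omega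
    rw [this]; exact rr_le ht _
  have h2 : rr t j ≤ rr t (ℓ-1) := rr_mono t hj
  simp only [SSP]; omega

lemma lam_mono {D q q' b T : ℕ} (h : q ≤ q') : lam D q' b T ≤ lam D q b T := by
  have h1 : max b q ≤ max b q' := max_le_max (le_refl b) h
  simp only [lam]
  by_cases hbD : b < D <;> simp only [if_pos, if_neg, hbD, if_true, if_false] <;> omega

lemma lam_hop {D q q' b T : ℕ} (h1 : q < q') (h2 : q' ≤ q + T) (h3 : q' ≤ D) (h4 : b < q') :
    lam D q' (min (q + T) D) T + 12 * T ≤ lam D q b T := by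
  have hM : max b q < q' := max_lt h4 h1
  have hMb : b ≤ max b q := le_max_left _ _
  have hMq : q ≤ max b q := le_max_right _ _
  have hbD : b < D := by omega
  rcases le_or_gt (q + T) D with hc | hc
  · rw [Nat.min_eq_left hc]
    have hmax2 : max (q + T) q' = q + T := Nat.max_eq_left h2
    simp only [lam, hmax2, if_pos hbD]
    by_cases hc2 : q + T < D
    · simp only [if_pos hc2]; omega
    · simp only [if_neg hc2]; omega
  · rw [Nat.min_eq_right (by omega : D ≤ q + T)]
    have hmax2 : max D q' = D := Nat.max_eq_left h3
    simp only [lam, hmax2, if_pos hbD, lt_irrefl, if_false, if_neg (lt_irrefl D)]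
    omega

lemma psi_upd {D T q : ℕ} (hq : q ≤ D) (o : Option ℕ) (ho : ∀ b, o = some b → b + T < q) :
    psi D T (some q) + 8 * T ≤ psi D T o := by
  cases o with
  | none => simp only [psi]; omega
  | some b =>
    have := ho b rfl
    simp only [psi]; omega

lemma trr {t : ℕ} (ht : 6 ≤ t) (j : ℕ) : t * (2 * rr t j) ≤ 4 * t ^ j := by
  cases j with
  | zero => simp [rr]
  | succ j =>
    have h1 : rr t (j+1) ≤ 2 * t ^ j := rr_le ht j
    calc t * (2 * rr t (j+1)) ≤ t * (4 * t ^ j) := Nat.mul_le_mul_left _ (by omega)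
      _ = 4 * t ^ (j+1) := by ring

lemma tth {t : ℕ} (ht : 6 ≤ t) (k : ℕ) : t * th t k ≤ 2 * t ^ (k+1) := by
  have h1 : th t k ≤ 2 * t ^ k := th_le ht k
  calc t * th t k ≤ t * (2 * t ^ k) := Nat.mul_le_mul_left _ h1
    _ = 2 * t ^ (k+1) := by ring

lemma meas_step {a b k : ℕ} (h : b + 1 ≤ a) : b * k + k ≤ a * k := by
  calc b * k + k = (b + 1) * k := by ring
    _ ≤ a * k := Nat.mul_le_mul_right _ h

/-- there is a target at level `j` within the capped window -/
abbrev hasT {V : Type} (G : SimpleGraph V) (A : ℕ → Set V) (p : ℕ → V → V) (t : ℕ)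
    (z : ℕ → V) (D j q : ℕ) : Prop :=
  ∃ s, q < s ∧ s ≤ min (q + t ^ j) D ∧ twr G A p t j (z s)


section Master

variable {V : Type} {G : SimpleGraph V} {ℓ : ℕ} {A : ℕ → Set V} {p : ℕ → V → V} {t : ℕ}

lemma master (hG : G.Connected) (hℓ : 2 ≤ ℓ) (hA0 : A 0 = Set.univ)
    (hp : ∀ i, 1 ≤ i → i ≤ ℓ-1 → ∀ v : V, p i v ∈ A i ∧ ∀ z ∈ A i, G.dist v (p i v) ≤ G.dist v z)
    (ht : 7 ≤ t) {y : V} {D : ℕ} {z : ℕ → V} (hzD : z D = y)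
    (hdz : ∀ a b, a ≤ b → b ≤ D → G.dist (z a) (z b) ≤ b - a) :
    ∀ μ q j : ℕ, ∀ βh : ℕ → ℕ, ∀ βd : ℕ → Option ℕ,
    q ≤ D → j ≤ ℓ - 1 → twr G A p t j (z q) →
    (∀ m s, q < s → s ≤ βh m → s ≤ D → ¬ twr G A p t m (z s)) →
    (∀ m b, βd m = some b → ∀ s, b < s → s ≤ b + t ^ m → s ≤ D → ¬ twr G A p t m (z s)) →
    (∀ m b, βd m = some b → b ≤ q) →
    (∀ m b, βd m = some b → m ≤ j → b + t ^ m < q) →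
    (D - q) * (4*ℓ+4) + (if hasT G A p t z D j q then 2*ℓ - j else 2*ℓ + j) ≤ μ →
    ∃ w : (SimpleGraph.fromEdgeSet (tzEdges G ℓ A p)).Walk (lad A p j (z q)) y,
      t * wN G w ≤ t * (D - q) + t * SSP t ℓ j
        + (∑ m ∈ Finset.range ℓ, lam D q (βh m) (t ^ m))
        + (∑ m ∈ Finset.range ℓ, psi D (t ^ m) (βd m)) := by
  intro μ
  induction μ using Nat.strong_induction_on with
  | _ μ IH =>
  intro q j βh βd hq hj htw H4 H5 H6 H7 hμ
  rcases Nat.lt_or_ge q D with hqD | hqD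
  swap
  · -- terminal: q = D
    have hqD' : q = D := by omega
    subst hqD'
    obtain ⟨w, hw⟩ := ladder_walk hG hℓ hA0 hp hj htw
    refine ⟨w.copy rfl hzD, ?_⟩
    have hwc : wN G (w.copy rfl hzD) = wN G w := by
      simp [wN, SimpleGraph.Walk.darts_copy]
    rw [hwc]
    have h1 : t * wN G w ≤ t * SSP t ℓ j :=
      Nat.mul_le_mul_left _ (le_trans hw (rr_le_SSP t ℓ j))
    omega
  · by_cases hT : hasT G A p t z D j q
    · -- there is a target in the window
      obtain ⟨s₀, hs₀1, hs₀2, hs₀3⟩ := hT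
      have hT : hasT G A p t z D j q := ⟨s₀, hs₀1, hs₀2, hs₀3⟩
      have hPq' : q < Nat.findGreatest (fun s => q < s ∧ twr G A p t j (z s)) (min (q + t ^ j) D) ∧
          twr G A p t j (z (Nat.findGreatest (fun s => q < s ∧ twr G A p t j (z s)) (min (q + t ^ j) D))) :=
        Nat.findGreatest_spec (P := fun s => q < s ∧ twr G A p t j (z s)) (m := s₀) hs₀2 (show q < s₀ ∧ twr G A p t j (z s₀) from ⟨hs₀1, hs₀3⟩)
      set q' := Nat.findGreatest (fun s => q < s ∧ twr G A p t j (z s)) (min (q + t ^ j) D) with hq'def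
      obtain ⟨hqq', htwq'⟩ := hPq'
      have hq'n : q' ≤ min (q + t ^ j) D := Nat.findGreatest_le _
      have hq'D : q' ≤ D := le_trans hq'n (min_le_right _ _)
      have hq'T : q' ≤ q + t ^ j := le_trans hq'n (min_le_left _ _)
      have hgr : ∀ s, q' < s → s ≤ min (q + t ^ j) D → ¬ (q < s ∧ twr G A p t j (z s)) :=
        fun s h1 h2 => Nat.findGreatest_is_greatest h1 h2
      have hd1 : G.dist (z q) (lad A p j (z q)) ≤ rr t j := dist_lad hG htw
      have hd2 : G.dist (z q') (lad A p j (z q')) ≤ rr t j := dist_lad hG htwq'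
      have hdzz : G.dist (z q) (z q') ≤ q' - q := hdz q q' (by omega) hq'D
      have hdu : G.dist (lad A p j (z q)) (lad A p j (z q')) ≤ (q' - q) + 2 * rr t j := by
        have c1 : G.dist (lad A p j (z q)) (z q) ≤ rr t j := by
          rwa [SimpleGraph.dist_comm] at hd1
        have c2 : G.dist (z q) (lad A p j (z q')) ≤ (q' - q) + rr t j := by
          calc G.dist (z q) (lad A p j (z q'))
              ≤ G.dist (z q) (z q') + G.dist (z q') (lad A p j (z q')) := hG.dist_triangle
            _ ≤ (q' - q) + rr t j := by omega
        calc G.dist (lad A p j (z q)) (lad A p j (z q'))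
            ≤ G.dist (lad A p j (z q)) (z q) + G.dist (z q) (lad A p j (z q')) :=
              hG.dist_triangle
          _ ≤ (q' - q) + 2 * rr t j := by omega
      have hduth : G.dist (lad A p j (z q)) (lad A p j (z q')) ≤ th t j := by
        have hqt : q' - q ≤ t ^ j := by omega
        simp only [th]; omega
      have hjℓ : j ∈ Finset.range ℓ := Finset.mem_range.mpr (by omega)
      by_cases heq : lad A p j (z q') = lad A p j (z q)
      · -- CASE A : same stone, free advance
        have hmeas : (D - q') * (4*ℓ+4) +
            (if hasT G A p t z D j q' then 2*ℓ - j else 2*ℓ + j) < μ := by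
          rw [if_pos hT] at hμ
          have hstep : (D - q') * (4*ℓ+4) + (4*ℓ+4) ≤ (D - q) * (4*ℓ+4) :=
            meas_step (by omega)
          have hifb : (if hasT G A p t z D j q' then 2*ℓ - j else 2*ℓ + j) ≤ 2*ℓ + j := by
            split <;> omega
          omega
        obtain ⟨w, hw⟩ := IH _ hmeas q' j βh βd hq'D hj htwq'
          (fun m s h1 h2 h3 => H4 m s (by omega) h2 h3) H5
          (fun m b hb => le_trans (H6 m b hb) (by omega))
          (fun m b hb hm => lt_of_lt_of_le (H7 m b hb hm) (by omega))
          (le_refl _)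
        refine ⟨w.copy heq rfl, ?_⟩
        have hwc : wN G (w.copy heq rfl) = wN G w := by
          simp [wN, SimpleGraph.Walk.darts_copy]
        rw [hwc]
        have hsum1 : (∑ m ∈ Finset.range ℓ, lam D q' (βh m) (t ^ m)) ≤
            ∑ m ∈ Finset.range ℓ, lam D q (βh m) (t ^ m) :=
          Finset.sum_le_sum (fun m _ => lam_mono (by omega))
        have hDq : t * (D - q') ≤ t * (D - q) := Nat.mul_le_mul_left _ (by omega)
        omega
      · by_cases hadj : (SimpleGraph.fromEdgeSet (tzEdges G ℓ A p)).Adj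
            (lad A p j (z q)) (lad A p j (z q'))
        · -- CASE B : hop
          have hβj : βh j < q' := by
            by_contra hc
            exact H4 j q' (by omega) (by omega) hq'D htwq'
          have hmeas : (D - q') * (4*ℓ+4) +
              (if hasT G A p t z D j q' then 2*ℓ - j else 2*ℓ + j) < μ := by
            rw [if_pos hT] at hμ
            have hstep : (D - q') * (4*ℓ+4) + (4*ℓ+4) ≤ (D - q) * (4*ℓ+4) :=
              meas_step (by omega)
            have hifb : (if hasT G A p t z D j q' then 2*ℓ - j else 2*ℓ + j) ≤ 2*ℓ + j := by
              split <;> omega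
            omega
          have H4' : ∀ m s, q' < s → s ≤ (if m = j then min (q + t ^ j) D else βh m) →
              s ≤ D → ¬ twr G A p t m (z s) := by
            intro m s h1 h2 h3
            by_cases hm : m = j
            · subst hm
              rw [if_pos rfl] at h2
              intro htws
              exact hgr s (by omega) (by omega) ⟨by omega, htws⟩
            · rw [if_neg hm] at h2
              exact H4 m s (by omega) h2 h3
          obtain ⟨w, hw⟩ := IH _ hmeas q' j
            (fun m => if m = j then min (q + t ^ j) D else βh m) βd hq'D hj htwq'
            H4' H5
            (fun m b hb => le_trans (H6 m b hb) (by omega))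
            (fun m b hb hm => lt_of_lt_of_le (H7 m b hb hm) (by omega))
            (le_refl _)
          refine ⟨SimpleGraph.Walk.cons hadj w, ?_⟩
          rw [wN_cons, Nat.mul_add]
          -- rewrite the new lam-sum
          have hsplit1 : (∑ m ∈ Finset.range ℓ,
              lam D q' ((fun m => if m = j then min (q + t ^ j) D else βh m) m) (t ^ m))
              = (∑ m ∈ Finset.range ℓ \ {j}, lam D q' (βh m) (t ^ m))
                + lam D q' (min (q + t ^ j) D) (t ^ j) := by
            rw [Finset.sum_eq_sum_sdiff_singleton_add hjℓ]
            simp only [if_pos rfl]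
            congr 1
            refine Finset.sum_congr rfl (fun m hm => ?_)
            have : m ≠ j := by
              intro h; subst h
              exact (Finset.mem_sdiff.mp hm).2 (Finset.mem_singleton_self _)
            simp only [if_neg this]
          have hsplit2 : (∑ m ∈ Finset.range ℓ, lam D q (βh m) (t ^ m))
              = (∑ m ∈ Finset.range ℓ \ {j}, lam D q (βh m) (t ^ m))
                + lam D q (βh j) (t ^ j) :=
            Finset.sum_eq_sum_sdiff_singleton_add hjℓ _
          rw [hsplit1] at hw
          rw [hsplit2]
          have hrest : (∑ m ∈ Finset.range ℓ \ {j}, lam D q' (βh m) (t ^ m)) ≤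
              (∑ m ∈ Finset.range ℓ \ {j}, lam D q (βh m) (t ^ m)) :=
            Finset.sum_le_sum (fun m _ => lam_mono (by omega))
          have core : lam D q' (min (q + t ^ j) D) (t ^ j) + 12 * t ^ j
              ≤ lam D q (βh j) (t ^ j) := lam_hop hqq' hq'T hq'D hβj
          have hE1 : t * G.dist (lad A p j (z q)) (lad A p j (z q'))
              ≤ t * (q' - q) + 4 * t ^ j := by
            have e1 : t * G.dist (lad A p j (z q)) (lad A p j (z q'))
                ≤ t * ((q' - q) + 2 * rr t j) := Nat.mul_le_mul_left _ hdu
            have e2 : t * ((q' - q) + 2 * rr t j) = t * (q' - q) + t * (2 * rr t j) := by ring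
            have e3 := trr (by omega : 6 ≤ t) j
            omega
          have hE2 : t * (D - q) = t * (q' - q) + t * (D - q') := by
            have e : D - q = (q' - q) + (D - q') := by omega
            rw [e, Nat.mul_add]
          have hE3 : 4 * t ^ j ≤ 12 * t ^ j := by omega
          omega
        · -- CASE C : climb
          have hne : lad A p j (z q) ≠ lad A p j (z q') := fun h => heq h.symm
          obtain ⟨hjl, htw1, htw2⟩ := dich hG hℓ hA0 hp hj htw htwq' hduth hne hadj
          have hpow : t ^ j ≤ t ^ (j+1) := pow_mono (by omega) (by omega)
          have hT' : hasT G A p t z D (j+1) q := by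
            refine ⟨q', hqq', ?_, htw2⟩
            rw [le_min_iff]
            omega
          have hmeas : (D - q) * (4*ℓ+4) +
              (if hasT G A p t z D (j+1) q then 2*ℓ - (j+1) else 2*ℓ + (j+1)) < μ := by
            rw [if_pos hT] at hμ
            rw [if_pos hT']
            omega
          have H7' : ∀ m b, βd m = some b → m ≤ j+1 → b + t ^ m < q := by
            intro m b hb hm
            rcases Nat.lt_or_ge m (j+1) with h' | h'
            · exact H7 m b hb (by omega)
            · have hmj : m = j + 1 := by omega
              subst hmj
              have hbq : b ≤ q := H6 _ _ hb
              have hbne : b ≠ q := by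
                intro hbeq
                subst hbeq
                exact H5 _ _ hb q' (by omega) (by omega) hq'D htw2
              rcases Nat.lt_or_ge (b + t ^ (j+1)) q with h'' | h''
              · exact h''
              · exact absurd htw1 (H5 _ _ hb q (by omega) (by omega) (by omega))
          obtain ⟨w, hw⟩ := IH _ hmeas q (j+1) βh βd hq hjl htw1 H4 H5 H6 H7' (le_refl _)
          rcases rung_adj hℓ hA0 hp hjl htw1 with he | ⟨hadj', hd'⟩
          · refine ⟨w.copy he rfl, ?_⟩
            have hwc : wN G (w.copy he rfl) = wN G w := by
              simp [wN, SimpleGraph.Walk.darts_copy]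
            rw [hwc]
            have hS : SSP t ℓ (j+1) ≤ SSP t ℓ j := by
              have := SSP_climb (t := t) hjl; omega
            have hS' : t * SSP t ℓ (j+1) ≤ t * SSP t ℓ j := Nat.mul_le_mul_left _ hS
            omega
          · refine ⟨SimpleGraph.Walk.cons hadj' w, ?_⟩
            rw [wN_cons, Nat.mul_add]
            have hSSP : t * SSP t ℓ (j+1) + t * th t j = t * SSP t ℓ j := by
              rw [← Nat.mul_add, SSP_climb (t := t) hjl]
            have hd'' : t * G.dist (lad A p j (z q)) (lad A p (j+1) (z q)) ≤ t * th t j :=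
              Nat.mul_le_mul_left _ hd'
            omega
    · -- CASE D : no target, descend
      have hj1 : 1 ≤ j := by
        by_contra hc
        have hj0 : j = 0 := by omega
        apply hT
        subst hj0
        refine ⟨q + 1, by omega, ?_, twr_zero _⟩
        rw [le_min_iff, pow_zero]
        omega
      obtain ⟨k, rfl⟩ : ∃ k, j = k + 1 := ⟨j - 1, by omega⟩
      have hβd'k : (fun m => if m = k + 1 then some q else βd m) (k+1) = some q := if_pos rfl
      have hβd'm : ∀ m, m ≠ k+1 → (fun m => if m = k + 1 then some q else βd m) m = βd m :=
        fun m hm => if_neg hm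
      have H5' : ∀ m b, (if m = k + 1 then some q else βd m) = some b →
          ∀ s, b < s → s ≤ b + t ^ m → s ≤ D → ¬ twr G A p t m (z s) := by
        intro m b hb
        by_cases hm : m = k+1
        · subst hm
          rw [if_pos rfl] at hb
          injection hb with hb
          subst hb
          intro s h1 h2 h3 htws
          exact hT ⟨s, h1, by rw [le_min_iff]; omega, htws⟩
        · rw [if_neg hm] at hb
          exact H5 m b hb
      have H6' : ∀ m b, (if m = k + 1 then some q else βd m) = some b → b ≤ q := by
        intro m b hb
        by_cases hm : m = k+1
        · subst hm; rw [if_pos rfl] at hb; injection hb with hb; omega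
        · rw [if_neg hm] at hb; exact H6 m b hb
      have H7' : ∀ m b, (if m = k + 1 then some q else βd m) = some b →
          m ≤ k → b + t ^ m < q := by
        intro m b hb hm
        rw [if_neg (by omega : ¬ m = k + 1)] at hb
        exact H7 m b hb (by omega)
      have hmeas : (D - q) * (4*ℓ+4) +
          (if hasT G A p t z D k q then 2*ℓ - k else 2*ℓ + k) < μ := by
        rw [if_neg hT] at hμ
        have : (if hasT G A p t z D k q then 2*ℓ - k else 2*ℓ + k) < 2*ℓ + (k+1) := by
          split <;> omega
        omega
      obtain ⟨w, hw⟩ := IH _ hmeas q k βh (fun m => if m = k + 1 then some q else βd m)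
        hq (by omega) (twr_mono (by omega) htw) H4 H5' H6' H7' (le_refl _)
      have hkℓ : k + 1 ∈ Finset.range ℓ := Finset.mem_range.mpr (by omega)
      have hsplit1 : (∑ m ∈ Finset.range ℓ,
          psi D (t ^ m) ((fun m => if m = k + 1 then some q else βd m) m))
          = (∑ m ∈ Finset.range ℓ \ {k+1}, psi D (t ^ m) (βd m)) + psi D (t ^ (k+1)) (some q) := by
        rw [Finset.sum_eq_sum_sdiff_singleton_add hkℓ]
        simp only [if_pos rfl]
        congr 1
        refine Finset.sum_congr rfl (fun m hm => ?_)
        have : m ≠ k+1 := by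
          intro h; subst h
          exact (Finset.mem_sdiff.mp hm).2 (Finset.mem_singleton_self _)
        simp only [if_neg this]
      have hsplit2 : (∑ m ∈ Finset.range ℓ, psi D (t ^ m) (βd m))
          = (∑ m ∈ Finset.range ℓ \ {k+1}, psi D (t ^ m) (βd m)) + psi D (t ^ (k+1)) (βd (k+1)) :=
        Finset.sum_eq_sum_sdiff_singleton_add hkℓ _
      rw [hsplit1] at hw
      rw [hsplit2]
      have hpsiupd : psi D (t ^ (k+1)) (some q) + 8 * t ^ (k+1)
          ≤ psi D (t ^ (k+1)) (βd (k+1)) :=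
        psi_upd hq _ (fun b hb => H7 (k+1) b hb (le_refl _))
      have hSSP : t * SSP t ℓ k = t * SSP t ℓ (k+1) + t * th t k := by
        rw [← Nat.mul_add, ← SSP_descend (t := t) hj]
      have htth : t * th t k ≤ 2 * t ^ (k+1) := tth (by omega) k
      rcases rung_adj hℓ hA0 hp hj htw with he | ⟨hadj', hd'⟩
      · refine ⟨w.copy he.symm rfl, ?_⟩
        have hwc : wN G (w.copy he.symm rfl) = wN G w := by
          simp [wN, SimpleGraph.Walk.darts_copy]
        rw [hwc]
        omega
      · refine ⟨SimpleGraph.Walk.cons hadj'.symm w, ?_⟩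
        rw [wN_cons, Nat.mul_add]
        have hdc : G.dist (lad A p (k+1) (z q)) (lad A p k (z q)) ≤ th t k := by
          rwa [SimpleGraph.dist_comm] at hd'
        have hdc' : t * G.dist (lad A p (k+1) (z q)) (lad A p k (z q)) ≤ t * th t k :=
          Nat.mul_le_mul_left _ hdc
        omega

end Master

lemma geom_sum_le {t : ℕ} (ht : 2 ≤ t) (L : ℕ) :
    (∑ m ∈ Finset.range (L+1), t ^ m) ≤ 2 * t ^ L := by
  induction L with
  | zero => simp
  | succ L IH =>
    rw [Finset.sum_range_succ]
    have h1 : 2 * t ^ L ≤ t ^ (L+1) := by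
      have : t ^ (L+1) = t * t ^ L := by ring
      rw [this]
      exact Nat.mul_le_mul_right _ ht
    omega

lemma tz_main {V : Type} {G : SimpleGraph V} (hG : G.Connected) {ℓ : ℕ} (hℓ : 2 ≤ ℓ)
    {A : ℕ → Set V} (hA0 : A 0 = Set.univ) {p : ℕ → V → V}
    (hp : ∀ i, 1 ≤ i → i ≤ ℓ-1 → ∀ v : V, p i v ∈ A i ∧ ∀ z ∈ A i, G.dist v (p i v) ≤ G.dist v z)
    {t : ℕ} (ht : 7 ≤ t) (x y : V) (hxy : G.dist x y ≤ t ^ (ℓ-1)) :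
    ∃ w : (SimpleGraph.fromEdgeSet (tzEdges G ℓ A p)).Walk x y,
      wN G w ≤ G.dist x y + 1000 * (ℓ-1) * t ^ (ℓ-2) := by
  obtain ⟨w₀, hw₀⟩ := hG.exists_walk_length_eq_dist x y
  set D := G.dist x y with hD
  have hzD : w₀.getVert D = y := by
    rw [← hw₀]
    exact w₀.getVert_length
  have hdz : ∀ a b, a ≤ b → b ≤ D → G.dist (w₀.getVert a) (w₀.getVert b) ≤ b - a := by
    intro a b hab hb
    exact dist_getVert hG w₀ a b hab (by omega)
  obtain ⟨w, hw⟩ := master hG hℓ hA0 hp ht hzD hdz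
    ((D - 0) * (4*ℓ+4) + (if hasT G A p t w₀.getVert D 0 0 then 2*ℓ - 0 else 2*ℓ + 0))
    0 0 (fun _ => 0) (fun _ => none)
    (by omega) (by omega) (twr_zero _)
    (fun m s h1 h2 _ => absurd (show s ≤ 0 from h2) (by omega))
    (fun m b hb => by simp at hb)
    (fun m b hb => by simp at hb)
    (fun m b hb _ => by simp at hb)
    (le_refl _)
  have hx0 : w₀.getVert 0 = x := w₀.getVert_zero
  have hlad0 : lad A p 0 (w₀.getVert 0) = x := by rw [hx0]; rfl
  refine ⟨w.copy hlad0 rfl, ?_⟩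
  have hwc : wN G (w.copy hlad0 rfl) = wN G w := by
    simp [wN, SimpleGraph.Walk.darts_copy]
  rw [hwc]
  -- numeric estimates
  have hgeo : (∑ m ∈ Finset.range ℓ, t ^ m) ≤ 2 * t ^ (ℓ-1) := by
    have he : ℓ = (ℓ - 1) + 1 := by omega
    rw [he]
    exact geom_sum_le (by omega) _
  have hlam1 : ∀ m, lam D 0 0 (t ^ m) ≤ 24 * D + 12 * t ^ m := by
    intro m
    simp only [lam, Nat.sub_zero, Nat.max_self]
    split <;> omega
  have hlamS : (∑ m ∈ Finset.range ℓ, lam D 0 0 (t ^ m)) ≤ 24 * D * ℓ + 24 * t ^ (ℓ-1) := by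
    calc (∑ m ∈ Finset.range ℓ, lam D 0 0 (t ^ m))
        ≤ (∑ m ∈ Finset.range ℓ, (24 * D + 12 * t ^ m)) :=
          Finset.sum_le_sum (fun m _ => hlam1 m)
      _ = 24 * D * ℓ + 12 * (∑ m ∈ Finset.range ℓ, t ^ m) := by
          rw [Finset.sum_add_distrib, Finset.sum_const, Finset.card_range, ← Finset.mul_sum]
          simp only [smul_eq_mul]
          ring
      _ ≤ 24 * D * ℓ + 24 * t ^ (ℓ-1) := by omega
  have hpsiS : (∑ m ∈ Finset.range ℓ, psi D (t ^ m) none) ≤ 8 * D * ℓ + 16 * t ^ (ℓ-1) := by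
    calc (∑ m ∈ Finset.range ℓ, psi D (t ^ m) none)
        = (∑ m ∈ Finset.range ℓ, (8 * D + 8 * t ^ m)) := by
          refine Finset.sum_congr rfl (fun m _ => ?_)
          simp [psi]
          ring
      _ = 8 * D * ℓ + 8 * (∑ m ∈ Finset.range ℓ, t ^ m) := by
          rw [Finset.sum_add_distrib, Finset.sum_const, Finset.card_range, ← Finset.mul_sum]
          simp only [smul_eq_mul]
          ring
      _ ≤ 8 * D * ℓ + 16 * t ^ (ℓ-1) := by omega
  have hSSP0 : t * SSP t ℓ 0 ≤ 4 * t ^ (ℓ-1) := by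
    have h1 : SSP t ℓ 0 ≤ 4 * t ^ (ℓ-2) := SSP_le hℓ (by omega) 0 (by omega)
    have h2 : t * SSP t ℓ 0 ≤ t * (4 * t ^ (ℓ-2)) := Nat.mul_le_mul_left _ h1
    have h3 : t * (4 * t ^ (ℓ-2)) = 4 * t ^ ((ℓ-2)+1) := by ring
    have h4 : (ℓ-2)+1 = ℓ-1 := by omega
    rw [h3, h4] at h2
    exact h2
  have hDb : 32 * D * ℓ ≤ 32 * ℓ * t ^ (ℓ-1) := by
    calc 32 * D * ℓ ≤ 32 * t ^ (ℓ-1) * ℓ := by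
          have := Nat.mul_le_mul_right ℓ (Nat.mul_le_mul_left 32 hxy)
          omega
      _ = 32 * ℓ * t ^ (ℓ-1) := by ring
  have hmain : t * wN G w ≤ t * D + (32 * ℓ + 44) * t ^ (ℓ-1) := by
    have := hw
    simp only [Nat.sub_zero] at this
    nlinarith [this, hlamS, hpsiS, hSSP0, hDb]
  have hsplit : t * wN G w ≤ t * (D + (32 * ℓ + 44) * t ^ (ℓ-2)) := by
    have h4 : (32 * ℓ + 44) * t ^ (ℓ-1) = t * ((32 * ℓ + 44) * t ^ (ℓ-2)) := by
      have h5 : ℓ - 1 = (ℓ-2)+1 := by omega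
      rw [h5]
      ring
    rw [Nat.mul_add, ← h4]
    exact hmain
  have hfin : wN G w ≤ D + (32 * ℓ + 44) * t ^ (ℓ-2) :=
    Nat.le_of_mul_le_mul_left hsplit (by omega)
  have hc : (32 * ℓ + 44) * t ^ (ℓ-2) ≤ 1000 * (ℓ-1) * t ^ (ℓ-2) := by
    have : 32 * ℓ + 44 ≤ 1000 * (ℓ-1) := by omega
    exact Nat.mul_le_mul_right _ this
  omega

end TZProof

/-- **Top-level segments never fail (emulator).**
There is an absolute constant `c ≥ 1` such that for every Thorup–Zwick hierarchy over a
finite connected simple graph `G`, every integer `t ≥ 7` and all vertices `x, y` with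
`d_G(x,y) ≤ t^(ℓ-1)`, the emulator `H` contains a path from `x` to `y` of length at most
`d_G(x,y) + c·(ℓ-1)·t^(ℓ-2)`. -/
theorem emulator_top_level_segments_never_fail :
    ∃ c : ℝ, 1 ≤ c ∧
      ∀ (V : Type) [Fintype V] (G : SimpleGraph V), G.Connected →
      ∀ ℓ : ℕ, 2 ≤ ℓ →
      ∀ A : ℕ → Set V,
        A 0 = Set.univ → A ℓ = ∅ → (∀ i, A (i + 1) ⊆ A i) →
        (∀ i ≤ ℓ - 1, (A i).Nonempty) →
      ∀ p : ℕ → V → V,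
        (∀ i, 1 ≤ i → i ≤ ℓ - 1 → ∀ v : V,
          p i v ∈ A i ∧ ∀ z ∈ A i, G.dist v (p i v) ≤ G.dist v z) →
      ∀ t : ℕ, 7 ≤ t →
      ∀ x y : V,
        (G.dist x y : ℝ) ≤ (t : ℝ) ^ (ℓ - 1) →
        ∃ q : (SimpleGraph.fromEdgeSet (tzEdges G ℓ A p)).Walk x y,
          walkWeight (fun a b => (G.dist a b : ℝ)) q ≤
            (G.dist x y : ℝ) + c * ((ℓ : ℝ) - 1) * (t : ℝ) ^ (ℓ - 2) := by
  refine ⟨1000, by norm_num, ?_⟩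
  intro V _ G hG ℓ hℓ A hA0 hAℓ hAsub hAne p hp t ht x y hxy
  have hxy' : G.dist x y ≤ t ^ (ℓ-1) := by
    have h1 : ((t ^ (ℓ-1) : ℕ) : ℝ) = (t : ℝ) ^ (ℓ-1) := by push_cast; ring
    have h2 : ((G.dist x y : ℕ) : ℝ) ≤ ((t ^ (ℓ-1) : ℕ) : ℝ) := by rw [h1]; exact hxy
    exact_mod_cast h2
  obtain ⟨w, hw⟩ := TZProof.tz_main hG hℓ hA0 hp ht x y hxy'
  refine ⟨w, ?_⟩
  have hcast : walkWeight (fun a b => (G.dist a b : ℝ)) w = (TZProof.wN G w : ℝ) := by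
    unfold walkWeight TZProof.wN
    rw [Nat.cast_list_sum, List.map_map]
    rfl
  rw [hcast]
  have hℝ : ((G.dist x y + 1000 * (ℓ-1) * t ^ (ℓ-2) : ℕ) : ℝ)
      = (G.dist x y : ℝ) + 1000 * ((ℓ : ℝ) - 1) * (t : ℝ) ^ (ℓ-2) := by
    push_cast [Nat.cast_sub (by omega : 1 ≤ ℓ)]
    ring
  calc (TZProof.wN G w : ℝ) ≤ ((G.dist x y + 1000 * (ℓ-1) * t ^ (ℓ-2) : ℕ) : ℝ) := by
        exact_mod_cast hw
    _ = (G.dist x y : ℝ) + 1000 * ((ℓ : ℝ) - 1) * (t : ℝ) ^ (ℓ-2) := hℝ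
end

section
/- (Deterministic hopset stretch and hopbound for an arbitrary hierarchy) There exists an absolute constant c ≥ 1 such that the following holds for every Thorup–Zwick hierarchy over a finite connected weighted graph G as in the context. For every real ε with 0 < ε < 1/6 and all vertices u, v, there exists an m-hop path from u to v in G ∪ H with m ≤ c·ℓ·⌈ε^{−(ℓ−1)}⌉ and length at most (1 + c·ℓ·ε)·d_G(u,v). -/
/-- The weighted shortest-path distance in `G` with edge weights `w`. -/
noncomputable def wdist {V : Type} (G : SimpleGraph V) (w : V → V → ℝ) (u v : V) : ℝ :=
  sInf {L : ℝ | ∃ p : G.Walk u v, L = walkWeight w p}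

/-- The Thorup–Zwick hopset for a hierarchy `A 0 ⊇ A 1 ⊇ ⋯` with pivots `p` over a
weighted graph `(G, w)`: for `u ∈ A i \ A (i+1)` with `i ≤ ℓ-2`, `u` is joined to every
`v` in its bunch `{v ∈ A i : d_G(u,v) < d_G(u, A (i+1))} ∪ {p (i+1) u}`, and all pairs of
vertices of `A (ℓ-1)` are joined. -/
noncomputable def tzHopset {V : Type} (G : SimpleGraph V) (w : V → V → ℝ) (ℓ : ℕ)
    (A : ℕ → Set V) (p : ℕ → V → V) : Set (Sym2 V) :=
  {e | ∃ u v : V, v ≠ u ∧ e = s(u, v) ∧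
    ((∃ i, i ≤ ℓ - 2 ∧ u ∈ A i ∧ u ∉ A (i + 1) ∧
        ((v ∈ A i ∧ ∀ z ∈ A (i + 1), wdist G w u v < wdist G w u z) ∨ v = p (i + 1) u)) ∨
      (u ∈ A (ℓ - 1) ∧ v ∈ A (ℓ - 1)))}

/-!
Fix a walk `P` from `u` to `v` of weight `D ≤ (1 + ε) d(u, v)` and the geometric thresholds
`s j = ε ^ (ℓ - 1 - j) * D`. From a vertex `z`, climb the hierarchy, moving to the pivot whenever
the current vertex does not survive to the next level. Below its stall level `t` each step of the
climb has length at most `s j`; if `t < ℓ - 1`, the vertex reached is outside `A (t + 1)` and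
farther than `s t` from all of it, so its bunch contains every vertex of `A t` within `s t`, and
if `t = ℓ - 1` it lies in the clique `A (ℓ - 1)`. Hence two vertices `x, y` with
`d(x, y) < s m / 2`, where `m` is the smaller stall level, are joined by at most `2 m + 1` hops of
total length `d(x, y) + O(ε s m)`.

Walk along `P`, jumping greedily to the farthest vertex reachable in this way, or else along one
edge of `P`. By maximality, two visited vertices at least two jumps apart whose thresholds are at
least `θ` are at least `θ` apart along `P`, so there are `O(D / θ)` of them. For `θ = s 0` this
bounds the number of jumps by `O(ε ^ (-(ℓ - 1)))`, and summing the overheads `O(ε s m)` level by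
level bounds the extra length by `O(ℓ ε D)`.
-/

section WeightedDistance

variable {V : Type} {G : SimpleGraph V} {w : V → V → ℝ}

@[simp] lemma walkWeight_nil {u : V} : walkWeight w (SimpleGraph.Walk.nil : G.Walk u u) = 0 := rfl

@[simp] lemma walkWeight_cons {u x v : V} (h : G.Adj u x) (q : G.Walk x v) :
    walkWeight w (SimpleGraph.Walk.cons h q) = w u x + walkWeight w q := by
  simp [walkWeight]

lemma walkWeight_append {u x v : V} (p : G.Walk u x) (q : G.Walk x v) :
    walkWeight w (p.append q) = walkWeight w p + walkWeight w q := by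
  simp [walkWeight, SimpleGraph.Walk.darts_append]

lemma walkWeight_reverse (hsymm : ∀ x y, w x y = w y x) {u v : V} (p : G.Walk u v) :
    walkWeight w p.reverse = walkWeight w p := by
  simp only [walkWeight, SimpleGraph.Walk.darts_reverse, List.map_reverse, List.sum_reverse,
    List.map_map]
  exact congrArg List.sum (List.map_congr_left fun d _ => hsymm _ _)

lemma walkWeight_nonneg (hpos : ∀ x y, G.Adj x y → 0 < w x y) {u v : V} (p : G.Walk u v) :
    0 ≤ walkWeight w p :=
  List.sum_nonneg <| by simpa using fun d _ => (hpos _ _ d.adj).le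

lemma walkWeight_eq_sum_getVert {u v : V} (p : G.Walk u v) :
    walkWeight w p = ∑ i ∈ Finset.range p.length, w (p.getVert i) (p.getVert (i + 1)) := by
  induction p with
  | nil => simp
  | cons h q ih =>
    rw [walkWeight_cons, ih, SimpleGraph.Walk.length_cons, Finset.sum_range_succ', add_comm]
    simp [SimpleGraph.Walk.getVert_cons_succ]

lemma wdist_le_walkWeight (hpos : ∀ x y, G.Adj x y → 0 < w x y) {u v : V} (p : G.Walk u v) :
    wdist G w u v ≤ walkWeight w p :=
  csInf_le ⟨0, by rintro _ ⟨q, rfl⟩; exact walkWeight_nonneg hpos q⟩ ⟨p, rfl⟩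

lemma wdist_nonneg (hpos : ∀ x y, G.Adj x y → 0 < w x y) (u v : V) : 0 ≤ wdist G w u v :=
  Real.sInf_nonneg <| by rintro _ ⟨q, rfl⟩; exact walkWeight_nonneg hpos q

lemma wdist_self (hpos : ∀ x y, G.Adj x y → 0 < w x y) (u : V) : wdist G w u u = 0 :=
  le_antisymm (by simpa using wdist_le_walkWeight hpos (.nil : G.Walk u u)) (wdist_nonneg hpos u u)

lemma wdist_le_of_adj (hpos : ∀ x y, G.Adj x y → 0 < w x y) {x y : V} (h : G.Adj x y) :
    wdist G w x y ≤ w x y := by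
  simpa using wdist_le_walkWeight hpos (.cons h .nil)

lemma exists_walkWeight_lt (hconn : G.Connected) (u v : V) {η : ℝ} (hη : 0 < η) :
    ∃ p : G.Walk u v, walkWeight w p < wdist G w u v + η := by
  obtain ⟨p⟩ := hconn.preconnected u v
  obtain ⟨_, ⟨q, rfl⟩, hq⟩ :=
    Real.lt_sInf_add_pos (s := {L | ∃ q : G.Walk u v, L = walkWeight w q}) ⟨_, p, rfl⟩ hη
  exact ⟨q, hq⟩

lemma wdist_triangle (hconn : G.Connected) (hpos : ∀ x y, G.Adj x y → 0 < w x y) (u x v : V) :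
    wdist G w u v ≤ wdist G w u x + wdist G w x v := by
  refine le_of_forall_pos_le_add fun η hη => ?_
  obtain ⟨p, hp⟩ := exists_walkWeight_lt (w := w) hconn u x (half_pos hη)
  obtain ⟨q, hq⟩ := exists_walkWeight_lt (w := w) hconn x v (half_pos hη)
  have := wdist_le_walkWeight hpos (p.append q)
  rw [walkWeight_append] at this
  linarith

lemma wdist_comm (hconn : G.Connected) (hsymm : ∀ x y, w x y = w y x)
    (hpos : ∀ x y, G.Adj x y → 0 < w x y) (u v : V) : wdist G w u v = wdist G w v u := by
  suffices h : ∀ a b, wdist G w a b ≤ wdist G w b a from le_antisymm (h u v) (h v u)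
  refine fun a b => le_of_forall_pos_le_add fun η hη => ?_
  obtain ⟨p, hp⟩ := exists_walkWeight_lt (w := w) hconn b a hη
  linarith [walkWeight_reverse hsymm p ▸ wdist_le_walkWeight hpos p.reverse]

lemma wdist_pos [Fintype V] (hconn : G.Connected) (hpos : ∀ x y, G.Adj x y → 0 < w x y)
    {u v : V} (huv : u ≠ v) : 0 < wdist G w u v := by
  classical
  obtain ⟨p⟩ := hconn.preconnected u v
  obtain ⟨x, hx, hmin⟩ := (Finset.univ.filter (G.Adj u)).exists_min_image (w u) <| by
    cases p with
    | nil => exact absurd rfl huv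
    | cons h _ => exact ⟨_, by simpa using h⟩
  refine (hpos u x (by simpa using hx)).trans_le <| le_csInf ⟨_, p, rfl⟩ ?_
  rintro _ ⟨q, rfl⟩
  cases q with
  | nil => exact absurd rfl huv
  | cons h q =>
    rw [walkWeight_cons]
    linarith [hmin _ (by simpa using h), walkWeight_nonneg hpos q]

end WeightedDistance

section BoundedWalks

variable {V : Type} {H : SimpleGraph V} {d : V → V → ℝ} {x y z : V} {N N' : ℕ} {C C' : ℝ}

def HasWalkWithin (H : SimpleGraph V) (d : V → V → ℝ) (x y : V) (N : ℕ) (C : ℝ) : Prop :=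
  ∃ q : H.Walk x y, q.length ≤ N ∧ walkWeight d q ≤ C

namespace HasWalkWithin

lemma refl (x : V) : HasWalkWithin H d x x 0 0 := ⟨.nil, le_rfl, le_rfl⟩

lemma mono (h : HasWalkWithin H d x y N C) (hN : N ≤ N') (hC : C ≤ C') :
    HasWalkWithin H d x y N' C' :=
  let ⟨q, hq, hw⟩ := h
  ⟨q, hq.trans hN, hw.trans hC⟩

lemma trans {N₁ N₂ : ℕ} {C₁ C₂ : ℝ} (h₁ : HasWalkWithin H d x y N₁ C₁)
    (h₂ : HasWalkWithin H d y z N₂ C₂) : HasWalkWithin H d x z (N₁ + N₂) (C₁ + C₂) := by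
  obtain ⟨q₁, hq₁, hw₁⟩ := h₁
  obtain ⟨q₂, hq₂, hw₂⟩ := h₂
  exact ⟨q₁.append q₂, by rw [SimpleGraph.Walk.length_append]; omega,
    by rw [walkWeight_append]; linarith⟩

lemma symm (hd : ∀ x y, d x y = d y x) (h : HasWalkWithin H d x y N C) :
    HasWalkWithin H d y x N C :=
  let ⟨q, hq, hw⟩ := h
  ⟨q.reverse, by simpa using hq, by rwa [walkWeight_reverse hd]⟩

lemma of_adj_or_eq (h : H.Adj x y ∨ x = y) (hd : d x y ≤ C) (hC : 0 ≤ C) :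
    HasWalkWithin H d x y 1 C := by
  rcases h with h | rfl
  · exact ⟨.cons h .nil, le_rfl, by simpa using hd⟩
  · exact (refl x).mono zero_le_one hC

lemma of_forall_range {f : ℕ → V} {N : ℕ → ℕ} {C : ℕ → ℝ} (M : ℕ)
    (h : ∀ i < M, HasWalkWithin H d (f i) (f (i + 1)) (N i) (C i)) :
    HasWalkWithin H d (f 0) (f M) (∑ i ∈ Finset.range M, N i) (∑ i ∈ Finset.range M, C i) := by
  induction M with
  | zero => simpa using refl (f 0)
  | succ M ih =>
    rw [Finset.sum_range_succ, Finset.sum_range_succ]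
    exact (ih fun i hi => h i (by omega)).trans (h M M.lt_succ_self)

lemma exists_seq (h : HasWalkWithin H d x y N C) :
    ∃ (m : ℕ) (σ : ℕ → V), σ 0 = x ∧ σ m = y ∧ m ≤ N ∧ (∀ j < m, H.Adj (σ j) (σ (j + 1))) ∧
      ∑ j ∈ Finset.range m, d (σ j) (σ (j + 1)) ≤ C := by
  obtain ⟨q, hq, hw⟩ := h
  exact ⟨q.length, q.getVert, q.getVert_zero, q.getVert_length, hq,
    fun j hj => q.adj_getVert_succ hj, walkWeight_eq_sum_getVert q ▸ hw⟩

end HasWalkWithin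

end BoundedWalks

section GreedyJumps

lemma exists_greedy_jumps (J : ℕ → ℕ → Prop) {k n : ℕ} (hk : k ≤ n) :
    ∃ (M : ℕ) (K : ℕ → ℕ), StrictMono K ∧ K 0 = k ∧ K M = n ∧
      (∀ i < M, K (i + 1) = K i + 1 ∨ J (K i) (K (i + 1))) ∧
      ∀ i j, i + 2 ≤ j → j ≤ M → ¬ J (K i) (K j) := by
  classical
  induction hd : n - k using Nat.strong_induction_on generalizing k with | _ d ih => ?_
  rcases hk.eq_or_lt with rfl | hlt
  · exact ⟨0, (k + ·), strictMono_id.const_add k, rfl, rfl, by simp, by omega⟩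
  set T := (Finset.Ioc k n).filter (fun k' => k' = k + 1 ∨ J k k')
  obtain ⟨k', hk'T, hk'max⟩ : ∃ k' ∈ T, ∀ x ∈ T, x ≤ k' :=
    have hT : T.Nonempty :=
      ⟨k + 1, Finset.mem_filter.2 ⟨Finset.mem_Ioc.2 ⟨by omega, hlt⟩, Or.inl rfl⟩⟩
    ⟨T.max' hT, T.max'_mem hT, T.le_max'⟩
  simp only [T, Finset.mem_filter, Finset.mem_Ioc] at hk'T hk'max
  obtain ⟨M, K, hK, hK0, hKM, hstep, hskip⟩ := ih _ (by omega) hk'T.1.2 rfl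
  refine ⟨M + 1, fun i => if i = 0 then k else K (i - 1), ?_, rfl, by simpa, ?_, ?_⟩
  · refine strictMono_nat_of_lt_succ fun i => ?_
    rcases i with _ | i
    · simp [hK0, hk'T.1.1]
    · simpa using hK i.lt_succ_self
  · rintro (_ | i) hi
    · simpa [hK0] using hk'T.2
    · simpa using hstep i (by omega)
  · rintro (_ | i) (_ | _ | j) hij hj
    all_goals simp only [Nat.add_one_ne_zero, if_true, if_false, Nat.add_sub_cancel]
    all_goals try omega
    · intro hJ
      have hfar : k' < K (j + 1) := hK0 ▸ hK (Nat.succ_pos j)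
      have hle : K (j + 1) ≤ n := hKM ▸ hK.monotone (by omega)
      exact hfar.not_ge (hk'max _ ⟨⟨by omega, hle⟩, Or.inr hJ⟩)
    · exact hskip i (j + 1) (by omega) (by omega)

lemma card_le_of_separated {S : Finset ℕ} {g : ℕ → ℝ} {R θ : ℝ} (hθ : 0 < θ) (hR : 0 ≤ R)
    (hg : ∀ i ∈ S, 0 ≤ g i ∧ g i ≤ R) (hsep : ∀ a ∈ S, ∀ c ∈ S, a + 2 ≤ c → g a + θ ≤ g c) :
    (S.card : ℝ) ≤ 2 * (R / θ) + 2 := by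
  classical
  -- each band `[bθ, (b+1)θ)` contains `g i` for at most two `i ∈ S`
  set f : ℕ → ℕ := fun i => ⌊g i / θ⌋₊
  have hfiber : ∀ b ∈ S.image f, (S.filter (f · = b)).card ≤ 2 := by
    intro b _
    by_contra! h
    obtain ⟨x, hx, y, hy, z, hz, hxy, hxz, hyz⟩ := Finset.two_lt_card.1 h
    obtain ⟨a, ha, c, hc, hac⟩ : ∃ a ∈ S.filter (f · = b), ∃ c ∈ S.filter (f · = b), a + 2 ≤ c := by
      rcases (by omega : x + 2 ≤ y ∨ y + 2 ≤ x ∨ x + 2 ≤ z ∨ z + 2 ≤ x ∨ y + 2 ≤ z ∨ z + 2 ≤ y)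
        with h | h | h | h | h | h
      exacts [⟨x, hx, y, hy, h⟩, ⟨y, hy, x, hx, h⟩, ⟨x, hx, z, hz, h⟩, ⟨z, hz, x, hx, h⟩,
        ⟨y, hy, z, hz, h⟩, ⟨z, hz, y, hy, h⟩]
    simp only [Finset.mem_filter] at ha hc
    have hband : f a + 1 ≤ f c := by
      rw [← Nat.floor_add_one (div_nonneg (hg a ha.1).1 hθ.le)]
      refine Nat.floor_le_floor ?_
      rw [div_add_one hθ.ne', div_le_div_iff_of_pos_right hθ]
      exact hsep a ha.1 c hc.1 hac
    omega
  have himage : S.image f ⊆ Finset.range (⌊R / θ⌋₊ + 1) := by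
    simp only [Finset.subset_iff, Finset.mem_image, Finset.mem_range, forall_exists_index, and_imp]
    rintro _ i hi rfl
    exact Nat.lt_succ_of_le (Nat.floor_le_floor (div_le_div_of_nonneg_right (hg i hi).2 hθ.le))
  have hcard : S.card ≤ 2 * (⌊R / θ⌋₊ + 1) := by
    simpa using (S.card_le_mul_card_image 2 hfiber).trans
      (Nat.mul_le_mul_left 2 (Finset.card_le_card himage))
  have hfloor := Nat.floor_le (div_nonneg hR hθ.le)
  have : (S.card : ℝ) ≤ 2 * (⌊R / θ⌋₊ + 1) := by exact_mod_cast hcard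
  linarith

lemma sum_comp_le_of_card_fiber_mul_le {ι : Type*} {S : Finset ι} {m : ι → ℕ} {ℓ : ℕ}
    (hm : ∀ i ∈ S, m i < ℓ) {s : ℕ → ℝ} {C : ℝ}
    (hfiber : ∀ l < ℓ, ((S.filter (m · = l)).card : ℝ) * s l ≤ C) :
    ∑ i ∈ S, s (m i) ≤ ℓ * C := by
  classical
  rw [← Finset.sum_fiberwise_of_maps_to (t := Finset.range ℓ)
    (fun i hi => Finset.mem_range.2 (hm i hi))]
  calc ∑ l ∈ Finset.range ℓ, ∑ i ∈ S with m i = l, s (m i)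
      = ∑ l ∈ Finset.range ℓ, ((S.filter (m · = l)).card : ℝ) * s l := by
        refine Finset.sum_congr rfl fun l _ => ?_
        rw [Finset.sum_congr rfl fun i hi => congrArg s (Finset.mem_filter.1 hi).2]
        simp
    _ ≤ ∑ _l ∈ Finset.range ℓ, C := Finset.sum_le_sum fun l hl => hfiber l (Finset.mem_range.1 hl)
    _ = ℓ * C := by simp

lemma card_filter_le_of_greedy {M : ℕ} {K : ℕ → ℕ} {ρ r : ℕ → ℝ} {R θ : ℝ} (hθ : 0 < θ)
    (hR : 0 ≤ R) (hρ : ∀ i < M, 0 ≤ ρ (K i) ∧ ρ (K i) ≤ R)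
    (hskip : ∀ i j, i + 2 ≤ j → j ≤ M → ¬ ρ (K j) - ρ (K i) < min (r (K i)) (r (K j))) :
    (((Finset.range M).filter (fun i => θ ≤ r (K i))).card : ℝ) ≤ 2 * (R / θ) + 2 := by
  refine card_le_of_separated hθ hR (fun i hi => hρ i (by simpa using (Finset.mem_filter.1 hi).1))
    fun a ha c hc hac => ?_
  simp only [Finset.mem_filter, Finset.mem_range] at ha hc
  linarith [not_lt.1 (hskip a c hac hc.1.le), le_min ha.2 hc.2]

end GreedyJumps

section LevelCounting

variable {M ℓ : ℕ} {t : ℕ → ℕ} {s : ℕ → ℝ} {R : ℝ}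

lemma card_le_of_card_filter_scale_le (hs : Monotone s) (hs0 : 0 < s 0)
    (hcount : ∀ θ > 0, (((Finset.range M).filter (fun i => θ ≤ s (t i) / 2)).card : ℝ) ≤
      2 * (R / θ) + 2) :
    (M : ℝ) ≤ 4 * (R / s 0) + 2 := by
  have h := hcount (s 0 / 2) (half_pos hs0)
  rw [Finset.filter_true_of_mem fun i _ => div_le_div_of_nonneg_right (hs (Nat.zero_le _))
    zero_le_two, Finset.card_range, div_div_eq_mul_div, mul_div_right_comm] at h
  linarith

lemma sum_scale_min_le (ht : ∀ i, t i < ℓ) (hs : Monotone s) (hspos : ∀ l, 0 < s l)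
    (hsR : ∀ l, s l ≤ R)
    (hcount : ∀ θ > 0, (((Finset.range M).filter (fun i => θ ≤ s (t i) / 2)).card : ℝ) ≤
      2 * (R / θ) + 2)
    {S : Finset ℕ} (hS : S ⊆ Finset.range M) :
    ∑ i ∈ S, s (min (t i) (t (i + 1))) ≤ ℓ * (6 * R) := by
  classical
  refine sum_comp_le_of_card_fiber_mul_le (m := fun i => min (t i) (t (i + 1)))
    (fun i _ => (min_le_left _ _).trans_lt (ht i)) fun l _ => ?_
  have hsub : S.filter (fun i => min (t i) (t (i + 1)) = l) ⊆
      (Finset.range M).filter (fun i => s l / 2 ≤ s (t i) / 2) := fun i hi => by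
    simp only [Finset.mem_filter] at hi ⊢
    exact ⟨hS hi.1, div_le_div_of_nonneg_right (hs (hi.2 ▸ min_le_left _ _)) zero_le_two⟩
  have hcard := (Nat.cast_le.2 (Finset.card_le_card hsub)).trans (hcount _ (half_pos (hspos l)))
  calc _ ≤ (2 * (R / (s l / 2)) + 2) * s l := mul_le_mul_of_nonneg_right hcard (hspos l).le
    _ = 4 * R + 2 * s l := by field_simp [(hspos l).ne']; ring
    _ ≤ 6 * R := by linarith [hsR l]

end LevelCounting

section Hierarchy

variable {V : Type} (G : SimpleGraph V) (w : V → V → ℝ) (ℓ : ℕ) (A : ℕ → Set V) (p : ℕ → V → V)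

/-- The graph `G ∪ H` whose walks are the hop paths. -/
def hopGraph : SimpleGraph V := G ⊔ SimpleGraph.fromEdgeSet (tzHopset G w ℓ A p)

def IsPivotMap : Prop :=
  ∀ i, 1 ≤ i → i ≤ ℓ - 1 → ∀ v : V, p i v ∈ A i ∧ ∀ z ∈ A i, wdist G w v (p i v) ≤ wdist G w v z

open Classical in
noncomputable def pivotChain : ℕ → V → V
  | 0, z => z
  | j + 1, z => if pivotChain j z ∈ A (j + 1) then pivotChain j z else p (j + 1) (pivotChain j z)

noncomputable def stallLevel (s : ℕ → ℝ) (z : V) : ℕ :=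
  sInf {j | j = ℓ - 1 ∨ s j < wdist G w (pivotChain A p j z) (pivotChain A p (j + 1) z)}

variable {G w ℓ A p}

lemma pivotChain_succ_of_mem {j : ℕ} {z : V} (h : pivotChain A p j z ∈ A (j + 1)) :
    pivotChain A p (j + 1) z = pivotChain A p j z := by
  simp [pivotChain, h]

lemma pivotChain_succ_of_notMem {j : ℕ} {z : V} (h : pivotChain A p j z ∉ A (j + 1)) :
    pivotChain A p (j + 1) z = p (j + 1) (pivotChain A p j z) := by
  simp [pivotChain, h]

lemma hopGraph_adj_or_eq {x y : V} (h : x ≠ y → s(x, y) ∈ tzHopset G w ℓ A p) :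
    (hopGraph G w ℓ A p).Adj x y ∨ x = y := by
  by_cases hxy : x = y
  · exact Or.inr hxy
  · exact Or.inl (Or.inr ⟨h hxy, hxy⟩)

lemma adj_or_mem_tzHopset_of_hopGraph_adj {x y : V} (h : (hopGraph G w ℓ A p).Adj x y) :
    G.Adj x y ∨ s(x, y) ∈ tzHopset G w ℓ A p :=
  h.imp_right And.left

lemma pivotChain_mem (hA0 : A 0 = Set.univ) (hp : IsPivotMap G w ℓ A p) {j : ℕ} (hj : j ≤ ℓ - 1)
    (z : V) : pivotChain A p j z ∈ A j := by
  induction j with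
  | zero => simp [pivotChain, hA0]
  | succ j ih =>
    by_cases h : pivotChain A p j z ∈ A (j + 1)
    · rwa [pivotChain_succ_of_mem h]
    · rw [pivotChain_succ_of_notMem h]
      exact (hp (j + 1) (by omega) hj _).1

lemma pivotChain_adj_or_eq (hA0 : A 0 = Set.univ) (hp : IsPivotMap G w ℓ A p) {j : ℕ}
    (hj : j < ℓ - 1) (z : V) :
    (hopGraph G w ℓ A p).Adj (pivotChain A p j z) (pivotChain A p (j + 1) z) ∨
      pivotChain A p j z = pivotChain A p (j + 1) z := by
  by_cases h : pivotChain A p j z ∈ A (j + 1)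
  · exact Or.inr (pivotChain_succ_of_mem h).symm
  · rw [pivotChain_succ_of_notMem h]
    exact hopGraph_adj_or_eq fun hne => ⟨_, _, hne.symm, rfl,
      Or.inl ⟨j, by omega, pivotChain_mem hA0 hp (by omega) z, h, Or.inr rfl⟩⟩

variable {s : ℕ → ℝ}

lemma stallLevel_le (z : V) : stallLevel G w ℓ A p s z ≤ ℓ - 1 :=
  Nat.sInf_le (Or.inl rfl)

lemma wdist_pivotChain_succ_le {z : V} {j : ℕ} (hj : j < stallLevel G w ℓ A p s z) :
    wdist G w (pivotChain A p j z) (pivotChain A p (j + 1) z) ≤ s j := by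
  have h := Nat.notMem_of_lt_sInf hj
  simp only [Set.mem_ofPred_eq, not_or, not_lt] at h
  exact h.2

lemma stallLevel_spec (hpos : ∀ x y, G.Adj x y → 0 < w x y) (hp : IsPivotMap G w ℓ A p)
    (hs : ∀ j, 0 ≤ s j) {z : V} (h : stallLevel G w ℓ A p s z < ℓ - 1) :
    pivotChain A p (stallLevel G w ℓ A p s z) z ∉ A (stallLevel G w ℓ A p s z + 1) ∧
      ∀ y ∈ A (stallLevel G w ℓ A p s z + 1),
        s (stallLevel G w ℓ A p s z) <
          wdist G w (pivotChain A p (stallLevel G w ℓ A p s z) z) y := by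
  set t := stallLevel G w ℓ A p s z
  have hlong : s t < wdist G w (pivotChain A p t z) (pivotChain A p (t + 1) z) :=
    (Nat.sInf_mem (s := {j | j = ℓ - 1 ∨
      s j < wdist G w (pivotChain A p j z) (pivotChain A p (j + 1) z)})
      ⟨_, Or.inl rfl⟩).resolve_left h.ne
  have hout : pivotChain A p t z ∉ A (t + 1) := by
    intro hin
    rw [pivotChain_succ_of_mem hin, wdist_self hpos] at hlong
    exact (hs t).not_gt hlong
  rw [pivotChain_succ_of_notMem hout] at hlong
  exact ⟨hout, fun y hy => hlong.trans_le ((hp (t + 1) (by omega) (by omega) _).2 y hy)⟩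

end Hierarchy

section HopWalks

variable {V : Type} {G : SimpleGraph V} {w : V → V → ℝ} {ℓ : ℕ} {A : ℕ → Set V} {p : ℕ → V → V}
  {s : ℕ → ℝ}

lemma wdist_le_walkWeight_wdist {H : SimpleGraph V} (hconn : G.Connected)
    (hpos : ∀ x y, G.Adj x y → 0 < w x y) {x y : V} (q : H.Walk x y) :
    wdist G w x y ≤ walkWeight (wdist G w) q := by
  induction q with
  | nil => simp [wdist_self hpos]
  | @cons a b c _ q ih => rw [walkWeight_cons]; linarith [wdist_triangle hconn hpos a b c]

lemma HasWalkWithin.wdist_le {H : SimpleGraph V} (hconn : G.Connected)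
    (hpos : ∀ x y, G.Adj x y → 0 < w x y) {x y : V} {N : ℕ} {C : ℝ}
    (h : HasWalkWithin H (wdist G w) x y N C) : wdist G w x y ≤ C :=
  let ⟨q, _, hq⟩ := h
  (wdist_le_walkWeight_wdist hconn hpos q).trans hq

lemma hasWalkWithin_pivotChain (hA0 : A 0 = Set.univ) (hp : IsPivotMap G w ℓ A p)
    (hs : ∀ j, 0 ≤ s j) {z : V} {j : ℕ} (hj : j ≤ stallLevel G w ℓ A p s z) :
    HasWalkWithin (hopGraph G w ℓ A p) (wdist G w) z (pivotChain A p j z) j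
      (∑ i ∈ Finset.range j, s i) := by
  induction j with
  | zero => simpa [pivotChain] using HasWalkWithin.refl z
  | succ j ih =>
    rw [Finset.sum_range_succ]
    have hjℓ : j < ℓ - 1 := (Nat.lt_of_succ_le hj).trans_le (stallLevel_le z)
    exact (ih (by omega)).trans <| .of_adj_or_eq (pivotChain_adj_or_eq hA0 hp hjℓ z)
      (wdist_pivotChain_succ_le hj) (hs j)

lemma pivotChain_adj_or_eq_of_wdist_lt (hconn : G.Connected) (hsymm : ∀ x y, w x y = w y x)
    (hpos : ∀ x y, G.Adj x y → 0 < w x y) (hA0 : A 0 = Set.univ) (hp : IsPivotMap G w ℓ A p)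
    (hs : ∀ j, 0 ≤ s j) {x y : V} {m : ℕ}
    (hm : m = min (stallLevel G w ℓ A p s x) (stallLevel G w ℓ A p s y))
    (h : wdist G w (pivotChain A p m x) (pivotChain A p m y) < s m) :
    (hopGraph G w ℓ A p).Adj (pivotChain A p m x) (pivotChain A p m y) ∨
      pivotChain A p m x = pivotChain A p m y := by
  wlog hxy : stallLevel G w ℓ A p s x ≤ stallLevel G w ℓ A p s y generalizing x y
  · refine (this (min_comm (α := ℕ) _ _ ▸ hm) ?_ (le_of_not_ge hxy)).imp
      SimpleGraph.Adj.symm Eq.symm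
    rwa [wdist_comm hconn hsymm hpos]
  rw [min_eq_left hxy] at hm
  subst hm
  have hmem : ∀ z, pivotChain A p (stallLevel G w ℓ A p s x) z ∈ A (stallLevel G w ℓ A p s x) :=
    pivotChain_mem hA0 hp (stallLevel_le x)
  refine hopGraph_adj_or_eq fun hne => ⟨_, _, hne.symm, rfl, ?_⟩
  by_cases htop : stallLevel G w ℓ A p s x = ℓ - 1
  · -- both chains have reached the top level, which is a clique of `H`
    exact Or.inr ⟨htop ▸ hmem x, htop ▸ hmem y⟩
  · have hlt := lt_of_le_of_ne (stallLevel_le x) htop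
    obtain ⟨hout, hfar⟩ := stallLevel_spec hpos hp hs hlt
    exact Or.inl ⟨_, by omega, hmem x, hout, Or.inl ⟨hmem y, fun z hz => h.trans (hfar z hz)⟩⟩

lemma hasWalkWithin_of_near (hconn : G.Connected) (hsymm : ∀ x y, w x y = w y x)
    (hpos : ∀ x y, G.Adj x y → 0 < w x y) (hA0 : A 0 = Set.univ) (hp : IsPivotMap G w ℓ A p)
    (hs : ∀ j, 0 ≤ s j) {x y : V} {m : ℕ}
    (hm : m = min (stallLevel G w ℓ A p s x) (stallLevel G w ℓ A p s y))
    (h : 2 * ∑ i ∈ Finset.range m, s i + wdist G w x y < s m) :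
    HasWalkWithin (hopGraph G w ℓ A p) (wdist G w) x y (2 * m + 1)
      (4 * ∑ i ∈ Finset.range m, s i + wdist G w x y) := by
  have hx := hasWalkWithin_pivotChain hA0 hp hs (z := x) (hm ▸ min_le_left _ _)
  have hy := hasWalkWithin_pivotChain hA0 hp hs (z := y) (hm ▸ min_le_right _ _)
  have hS : 0 ≤ ∑ i ∈ Finset.range m, s i := Finset.sum_nonneg fun i _ => hs i
  have hd : wdist G w (pivotChain A p m x) (pivotChain A p m y) ≤
      2 * ∑ i ∈ Finset.range m, s i + wdist G w x y := by
    linarith [wdist_triangle hconn hpos (pivotChain A p m x) x (pivotChain A p m y),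
      wdist_triangle hconn hpos x y (pivotChain A p m y), hx.wdist_le hconn hpos,
      hy.wdist_le hconn hpos, wdist_comm hconn hsymm hpos x (pivotChain A p m x)]
  have hhop := pivotChain_adj_or_eq_of_wdist_lt hconn hsymm hpos hA0 hp hs hm (hd.trans_lt h)
  refine ((hx.trans (.of_adj_or_eq hhop hd ?_)).trans (hy.symm (wdist_comm hconn hsymm hpos))).mono
    (by omega) (by linarith)
  linarith [wdist_nonneg hpos x y]

end HopWalks

section GeometricScale

variable {ℓ : ℕ} {ε D : ℝ}

def geomScale (ℓ : ℕ) (ε D : ℝ) (j : ℕ) : ℝ := ε ^ (ℓ - 1 - j) * D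

lemma geomScale_pos (hε : 0 < ε) (hD : 0 < D) (j : ℕ) : 0 < geomScale ℓ ε D j :=
  mul_pos (pow_pos hε _) hD

lemma geomScale_nonneg (hε : 0 ≤ ε) (hD : 0 ≤ D) (j : ℕ) : 0 ≤ geomScale ℓ ε D j :=
  mul_nonneg (pow_nonneg hε _) hD

lemma geomScale_monotone (hε : 0 ≤ ε) (hε1 : ε ≤ 1) (hD : 0 ≤ D) : Monotone (geomScale ℓ ε D) :=
  fun _ _ hij => mul_le_mul_of_nonneg_right (pow_le_pow_of_le_one hε hε1 (by omega)) hD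

lemma geomScale_le (hε : 0 ≤ ε) (hε1 : ε ≤ 1) (hD : 0 ≤ D) (j : ℕ) : geomScale ℓ ε D j ≤ D :=
  mul_le_of_le_one_left hD (pow_le_one₀ hε hε1)

lemma geomScale_eq_mul_succ {j : ℕ} (hj : j + 1 ≤ ℓ - 1) :
    geomScale ℓ ε D j = ε * geomScale ℓ ε D (j + 1) := by
  rw [geomScale, geomScale, ← mul_assoc, ← pow_succ', show ℓ - 1 - (j + 1) + 1 = ℓ - 1 - j by omega]

/-- The factor `6/5` bounds `ε / (1 - ε)` for `ε ≤ 1/6`. -/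
lemma sum_range_geomScale_le (hε : 0 ≤ ε) (hε6 : ε ≤ 1 / 6) (hD : 0 ≤ D) {m : ℕ}
    (hm : m ≤ ℓ - 1) : ∑ i ∈ Finset.range m, geomScale ℓ ε D i ≤ 6 / 5 * ε * geomScale ℓ ε D m := by
  induction m with
  | zero => simpa using mul_nonneg (by positivity) (geomScale_nonneg hε hD 0)
  | succ m ih =>
    rw [Finset.sum_range_succ, geomScale_eq_mul_succ hm]
    have := ih (by omega)
    rw [geomScale_eq_mul_succ hm] at this
    nlinarith [mul_nonneg (mul_nonneg hε (geomScale_nonneg (ℓ := ℓ) hε hD (m + 1)))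
      (by linarith : 0 ≤ 1 / 5 - 6 / 5 * ε)]

end GeometricScale

section WalkPrefix

variable {V : Type} {G : SimpleGraph V} {w : V → V → ℝ} {u v : V}

def prefixWeight (w : V → V → ℝ) (P : G.Walk u v) (k : ℕ) : ℝ :=
  ∑ i ∈ Finset.range k, w (P.getVert i) (P.getVert (i + 1))

@[simp] lemma prefixWeight_zero (P : G.Walk u v) : prefixWeight w P 0 = 0 :=
  Finset.sum_range_zero _

lemma prefixWeight_length (P : G.Walk u v) : prefixWeight w P P.length = walkWeight w P :=
  (walkWeight_eq_sum_getVert P).symm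

lemma wdist_getVert_le_prefixWeight_sub (hconn : G.Connected)
    (hpos : ∀ x y, G.Adj x y → 0 < w x y) (P : G.Walk u v) {a b : ℕ} (hab : a ≤ b)
    (hb : b ≤ P.length) :
    wdist G w (P.getVert a) (P.getVert b) ≤ prefixWeight w P b - prefixWeight w P a := by
  induction b with
  | zero => simp [Nat.le_zero.1 hab, wdist_self hpos]
  | succ b ih =>
    rcases hab.eq_or_lt with rfl | hlt
    · simp [wdist_self hpos]
    rw [prefixWeight, Finset.sum_range_succ, ← prefixWeight]
    linarith [ih (by omega) (by omega), wdist_triangle hconn hpos (P.getVert a) (P.getVert b)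
      (P.getVert (b + 1)), wdist_le_of_adj hpos (P.adj_getVert_succ (by omega : b < P.length))]

lemma prefixWeight_mem_Icc (hconn : G.Connected) (hpos : ∀ x y, G.Adj x y → 0 < w x y)
    (P : G.Walk u v) {k : ℕ} (hk : k ≤ P.length) :
    prefixWeight w P k ∈ Set.Icc 0 (walkWeight w P) := by
  have h₀ := wdist_getVert_le_prefixWeight_sub hconn hpos P (Nat.zero_le k) hk
  have h₁ := wdist_getVert_le_prefixWeight_sub hconn hpos P hk le_rfl
  rw [prefixWeight_length] at h₁
  rw [prefixWeight_zero, sub_zero] at h₀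
  exact ⟨by linarith [wdist_nonneg hpos (P.getVert 0) (P.getVert k)],
    by linarith [wdist_nonneg hpos (P.getVert k) (P.getVert P.length)]⟩

end WalkPrefix

section HopsetWalk

variable {V : Type} {G : SimpleGraph V} {w : V → V → ℝ} {ℓ : ℕ} {A : ℕ → Set V}
  {p : ℕ → V → V} {ε D : ℝ}

lemma hasWalkWithin_of_jump (hconn : G.Connected) (hsymm : ∀ x y, w x y = w y x)
    (hpos : ∀ x y, G.Adj x y → 0 < w x y) (hA0 : A 0 = Set.univ) (hp : IsPivotMap G w ℓ A p)
    (hε : 0 < ε) (hε6 : ε ≤ 1 / 6) (hD : 0 < D) {x y : V} {Δ : ℝ} (hxy : wdist G w x y ≤ Δ)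
    (h : Δ < min (geomScale ℓ ε D (stallLevel G w ℓ A p (geomScale ℓ ε D) x))
      (geomScale ℓ ε D (stallLevel G w ℓ A p (geomScale ℓ ε D) y)) / 2) :
    HasWalkWithin (hopGraph G w ℓ A p) (wdist G w) x y (2 * ℓ + 1)
      (Δ + 5 * ε * geomScale ℓ ε D
        (min (stallLevel G w ℓ A p (geomScale ℓ ε D) x)
          (stallLevel G w ℓ A p (geomScale ℓ ε D) y))) := by
  set s := geomScale ℓ ε D
  set m := min (stallLevel G w ℓ A p s x) (stallLevel G w ℓ A p s y) with hm
  rw [← (geomScale_monotone hε.le (by linarith) hD.le).map_min] at h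
  have hmℓ : m ≤ ℓ - 1 := (min_le_left _ _).trans (stallLevel_le x)
  have hsum := sum_range_geomScale_le hε.le hε6 hD.le hmℓ
  have hsm : 0 < s m := geomScale_pos hε hD m
  refine (hasWalkWithin_of_near hconn hsymm hpos hA0 hp (fun j => (geomScale_pos hε hD j).le) hm
    ?_).mono (by omega) ?_
  · nlinarith
  · nlinarith

theorem hasWalkWithin_hopGraph_of_walk (hconn : G.Connected) (hsymm : ∀ x y, w x y = w y x)
    (hpos : ∀ x y, G.Adj x y → 0 < w x y) (hℓ : 1 ≤ ℓ) (hA0 : A 0 = Set.univ)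
    (hp : IsPivotMap G w ℓ A p) (hε : 0 < ε) (hε6 : ε ≤ 1 / 6) {u v : V} (P : G.Walk u v)
    (hP : 0 < walkWeight w P) :
    ∃ M : ℕ, (M : ℝ) ≤ 4 * (1 / ε) ^ (ℓ - 1) + 2 ∧
      HasWalkWithin (hopGraph G w ℓ A p) (wdist G w) u v (M * (2 * ℓ + 1))
        ((1 + 30 * ℓ * ε) * walkWeight w P) := by
  classical
  set D := walkWeight w P
  set s := geomScale ℓ ε D
  set ρ := prefixWeight w P
  set t : ℕ → ℕ := fun k => stallLevel G w ℓ A p s (P.getVert k)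
  set r : ℕ → ℝ := fun k => s (t k) / 2
  obtain ⟨M, K, hK, hK0, hKM, hstep, hskip⟩ :=
    exists_greedy_jumps (fun a b => ρ b - ρ a < min (r a) (r b)) (Nat.zero_le P.length)
  set J : ℕ → Prop := fun i => ρ (K (i + 1)) - ρ (K i) < min (r (K i)) (r (K (i + 1)))
  set c : ℕ → ℝ := fun i => if J i then s (min (t (K i)) (t (K (i + 1)))) else 0
  have hKle : ∀ i ≤ M, K i ≤ P.length := fun i hi => hKM ▸ hK.monotone hi
  have hseg : ∀ i < M, HasWalkWithin (hopGraph G w ℓ A p) (wdist G w) (P.getVert (K i))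
      (P.getVert (K (i + 1))) (2 * ℓ + 1) (ρ (K (i + 1)) - ρ (K i) + 5 * ε * c i) := by
    intro i hi
    have hd := wdist_getVert_le_prefixWeight_sub hconn hpos P (hK i.lt_succ_self).le (hKle _ hi)
    by_cases hJ : J i
    · simp only [c, if_pos hJ]
      refine hasWalkWithin_of_jump hconn hsymm hpos hA0 hp hε hε6 hP hd ?_
      rwa [← min_div_div_right (zero_le_two : (0 : ℝ) ≤ 2)]
    · simp only [c, if_neg hJ, mul_zero, add_zero]
      have hedge := (hstep i hi).resolve_right hJ
      rw [hedge] at hd ⊢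
      have hadj := P.adj_getVert_succ (hedge ▸ hKle _ hi : K i + 1 ≤ P.length)
      exact (HasWalkWithin.of_adj_or_eq (Or.inl (Or.inl hadj)) hd
        ((wdist_nonneg hpos _ _).trans hd)).mono (by omega) le_rfl
  have hcount : ∀ θ > 0, (((Finset.range M).filter (fun i => θ ≤ r (K i))).card : ℝ) ≤
      2 * (D / θ) + 2 := fun θ hθ => card_filter_le_of_greedy hθ hP.le
    (fun i hi => prefixWeight_mem_Icc hconn hpos P (hKle i hi.le)) hskip
  have hmono : Monotone s := geomScale_monotone hε.le (by linarith) hP.le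
  have hM := card_le_of_card_filter_scale_le hmono (geomScale_pos hε hP 0) hcount
  have hc : ∑ i ∈ Finset.range M, c i ≤ ℓ * (6 * D) := by
    rw [← Finset.sum_filter]
    exact sum_scale_min_le (fun i => by have : t (K i) ≤ ℓ - 1 := stallLevel_le _; omega) hmono
      (geomScale_pos hε hP) (geomScale_le hε.le (by linarith) hP.le) hcount
      (Finset.filter_subset _ _)
  have hwalk := HasWalkWithin.of_forall_range (f := fun i => P.getVert (K i)) M hseg
  simp only [hK0, hKM, P.getVert_zero, P.getVert_length, Finset.sum_const, Finset.card_range,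
    smul_eq_mul, Finset.sum_add_distrib, Finset.sum_range_sub (fun i => ρ (K i)),
    ← Finset.mul_sum, prefixWeight_zero, ρ, prefixWeight_length] at hwalk
  have hs0 : D / s 0 = (1 / ε) ^ (ℓ - 1) := by
    simp only [s, geomScale, Nat.sub_zero, one_div, inv_pow]
    field_simp
  refine ⟨M, hs0 ▸ hM, hwalk.mono le_rfl ?_⟩
  nlinarith [mul_le_mul_of_nonneg_left hc (by positivity : (0 : ℝ) ≤ 5 * ε)]

theorem hasWalkWithin_hopGraph [Fintype V] (hconn : G.Connected) (hsymm : ∀ x y, w x y = w y x)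
    (hpos : ∀ x y, G.Adj x y → 0 < w x y) (hℓ : 1 ≤ ℓ) (hA0 : A 0 = Set.univ)
    (hp : IsPivotMap G w ℓ A p) (hε : 0 < ε) (hε6 : ε ≤ 1 / 6) (u v : V) :
    HasWalkWithin (hopGraph G w ℓ A p) (wdist G w) u v (100 * ℓ * ⌈(1 / ε) ^ (ℓ - 1)⌉₊)
      ((1 + 100 * ℓ * ε) * wdist G w u v) := by
  by_cases huv : u = v
  · subst huv
    exact (HasWalkWithin.refl u).mono (Nat.zero_le _) (by simp [wdist_self hpos])
  have hD := wdist_pos hconn hpos huv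
  obtain ⟨P, hP⟩ := exists_walkWeight_lt (w := w) hconn u v (mul_pos hε hD)
  have hPpos : 0 < walkWeight w P := hD.trans_le (wdist_le_walkWeight hpos P)
  obtain ⟨M, hM, hwalk⟩ :=
    hasWalkWithin_hopGraph_of_walk hconn hsymm hpos hℓ hA0 hp hε hε6 P hPpos
  refine hwalk.mono ?_ ?_
  · have hX := Nat.le_ceil ((1 / ε) ^ (ℓ - 1))
    have hM' : M ≤ 4 * ⌈(1 / ε) ^ (ℓ - 1)⌉₊ + 2 := by
      have : (M : ℝ) ≤ 4 * ⌈(1 / ε) ^ (ℓ - 1)⌉₊ + 2 := by linarith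
      exact_mod_cast this
    have hX1 : 0 < ⌈(1 / ε) ^ (ℓ - 1)⌉₊ := Nat.ceil_pos.2 (by positivity)
    nlinarith
  · calc (1 + 30 * ℓ * ε) * walkWeight w P ≤ (1 + 30 * ℓ * ε) * ((1 + ε) * wdist G w u v) :=
          mul_le_mul_of_nonneg_left (by linarith) (by positivity)
      _ ≤ (1 + 100 * ℓ * ε) * wdist G w u v := by
          rw [← mul_assoc]
          refine mul_le_mul_of_nonneg_right ?_ hD.le
          have hℓ' : (1 : ℝ) ≤ ℓ := by exact_mod_cast hℓ
          nlinarith [mul_le_mul_of_nonneg_left hε6 (by positivity : (0 : ℝ) ≤ ℓ * ε)]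

end HopsetWalk

/-- **Deterministic hopset stretch and hopbound for an arbitrary hierarchy.**
There is an absolute constant `c ≥ 1` such that for every Thorup–Zwick hierarchy over a
finite connected weighted graph `G`, every `0 < ε < 1/6` and all vertices `u, v`, there is
an `m`-hop path from `u` to `v` in `G ∪ H` with `m ≤ c·ℓ·⌈ε^(-(ℓ-1))⌉` and length at most
`(1 + c·ℓ·ε)·d_G(u,v)`. -/
theorem hopset_deterministic_stretch_and_hopbound :
    ∃ c : ℝ, 1 ≤ c ∧
      ∀ (V : Type) [Fintype V] (G : SimpleGraph V) (w : V → V → ℝ),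
        G.Connected →
        (∀ x y : V, w x y = w y x) →
        (∀ x y : V, G.Adj x y → 0 < w x y) →
      ∀ ℓ : ℕ, 2 ≤ ℓ →
      ∀ A : ℕ → Set V,
        A 0 = Set.univ → A ℓ = ∅ → (∀ i, A (i + 1) ⊆ A i) →
        (∀ i ≤ ℓ - 1, (A i).Nonempty) →
      ∀ p : ℕ → V → V,
        (∀ i, 1 ≤ i → i ≤ ℓ - 1 → ∀ v : V,
          p i v ∈ A i ∧ ∀ z ∈ A i, wdist G w v (p i v) ≤ wdist G w v z) →
      ∀ ε : ℝ, 0 < ε → ε < 1 / 6 →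
      ∀ u v : V,
        ∃ (m : ℕ) (σ : ℕ → V), σ 0 = u ∧ σ m = v ∧
          (m : ℝ) ≤ c * (ℓ : ℝ) * (⌈(1 / ε) ^ (ℓ - 1)⌉₊ : ℝ) ∧
          (∀ j < m,
            G.Adj (σ j) (σ (j + 1)) ∨ s(σ j, σ (j + 1)) ∈ tzHopset G w ℓ A p) ∧
          ∑ j ∈ Finset.range m, wdist G w (σ j) (σ (j + 1)) ≤
            (1 + c * (ℓ : ℝ) * ε) * wdist G w u v := by
  refine ⟨100, by norm_num, ?_⟩
  intro V _ G w hconn hsymm hpos ℓ hℓ A hA0 _ _ _ p hp ε hε hε6 u v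
  obtain ⟨m, σ, h0, hm, hmN, hadj, hsum⟩ :=
    (hasWalkWithin_hopGraph hconn hsymm hpos (by omega) hA0 hp hε hε6.le u v).exists_seq
  exact ⟨m, σ, h0, hm, by exact_mod_cast hmN,
    fun j hj => adj_or_mem_tzHopset_of_hopGraph_adj (hadj j hj), hsum⟩
end

section
/- (Expected bunch size at a fixed level) In the random Thorup–Zwick hierarchy of the context, for every integer i with 0 ≤ i ≤ ℓ−2, the expected number of ordered pairs (u,v) of vertices such that u ∈ A_i \ A_{i+1}, v ∈ A_i, and d_G(u,v) < d_G(u, A_{i+1}) is at most 2·n^{1+1/κ}. -/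
open MeasureTheory ProbabilityTheory

section Aux

variable {V Ω : Type} [MeasurableSpace Ω] {μ : Measure Ω}

lemma tz_col_prod (X : V × ℕ → Ω → Bool)
    (hInd : iIndepFun X μ)
    (z : V) (k : ℕ) (b : ℕ → Bool) :
    μ (⋂ j ∈ Finset.range k, {ω | X (z, j) ω = b j}) =
      ∏ j ∈ Finset.range k, μ {ω | X (z, j) ω = b j} := by
  classical
  have h := hInd.meas_biInter
      (S := (Finset.range k).map ⟨fun j => (z, j), fun a b h => by cases h; rfl⟩)
      (s := fun q => {ω | X q ω = b q.2})
      (fun q _ => ⟨{b q.2}, trivial, by ext ω; simp [Set.mem_preimage]⟩)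
  rw [Finset.prod_map] at h
  have hset : (⋂ q ∈ (Finset.range k).map
      (⟨fun j => (z, j), fun a b h => by cases h; rfl⟩ : ℕ ↪ V × ℕ),
      {ω | X q ω = b q.2}) = ⋂ j ∈ Finset.range k, {ω | X (z, j) ω = b j} := by
    ext ω
    simp only [Set.mem_iInter, Finset.mem_map, Function.Embedding.coeFn_mk]
    constructor
    · intro h j hj; exact h (z, j) ⟨j, hj, rfl⟩
    · rintro h q ⟨j, hj, rfl⟩; exact h j hj
  rw [hset] at h
  exact h

lemma tz_col_indep [IsProbabilityMeasure μ] (X : V × ℕ → Ω → Bool)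
    (hXm : ∀ q, Measurable (X q))
    (hInd : iIndepFun X μ)
    (C : V → Set Ω)
    (hC : ∀ z, MeasurableSet[⨆ q ∈ (Prod.fst ⁻¹' {z} : Set (V × ℕ)),
        MeasurableSpace.comap (X q) inferInstance] (C z)) :
    ∀ s : Finset V, μ (⋂ z ∈ s, C z) = ∏ z ∈ s, μ (C z) := by
  classical
  intro s
  induction s using Finset.induction_on with
  | empty => simp
  | @insert a s ha ih =>
    rw [Finset.set_biInter_insert, Finset.prod_insert ha, ← ih]
    have h_le : ∀ q : V × ℕ,
        MeasurableSpace.comap (X q) inferInstance ≤ ‹MeasurableSpace Ω› :=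
      fun q => (hXm q).comap_le
    have hdisj : Disjoint (Prod.fst ⁻¹' {a} : Set (V × ℕ)) (Prod.fst ⁻¹' ↑s) := by
      rw [Set.disjoint_left]
      rintro ⟨z, j⟩ hz hs
      simp only [Set.mem_preimage, Set.mem_singleton_iff] at hz
      simp only [Set.mem_preimage, Finset.mem_coe] at hs
      exact ha (hz ▸ hs)
    have hindep := indep_iSup_of_disjoint h_le hInd.iIndep hdisj
    have hCs : MeasurableSet[⨆ q ∈ (Prod.fst ⁻¹' (↑s) : Set (V × ℕ)),
        MeasurableSpace.comap (X q) inferInstance] (⋂ z ∈ s, C z) := by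
      refine MeasurableSet.biInter s.countable_toSet (fun z hz => ?_)
      have hmono : (⨆ q ∈ (Prod.fst ⁻¹' {z} : Set (V × ℕ)),
          MeasurableSpace.comap (X q) inferInstance) ≤
          ⨆ q ∈ (Prod.fst ⁻¹' (↑s) : Set (V × ℕ)),
          MeasurableSpace.comap (X q) inferInstance := by
        refine iSup₂_le fun q hq => ?_
        refine le_iSup₂ (f := fun (q : V × ℕ) (_ : q ∈ (Prod.fst ⁻¹' (↑s) : Set (V × ℕ))) =>
          MeasurableSpace.comap (X q) inferInstance) q ?_
        simp only [Set.mem_preimage, Set.mem_singleton_iff] at hq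
        simp only [Set.mem_preimage, Finset.mem_coe]
        exact hq ▸ hz
      exact hmono _ (hC z)
    exact (hindep.indepSet_of_measurableSet (hC a) hCs).measure_inter_eq_mul

lemma tz_sum_pow_le {α : Type} (s : Finset α) (f : α → ℕ) (n : ℕ)
    (hinj : Set.InjOn f s) (h2 : ∀ a ∈ s, 2 ≤ f a) (hfn : ∀ a ∈ s, f a ≤ n)
    {x : ℝ} (hx0 : 0 ≤ x) (hx1 : x < 1) :
    ∑ a ∈ s, x ^ (f a - 2) ≤ 1 / (1 - x) := by
  classical
  have h1x : 0 < 1 - x := by linarith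
  have hinj2 : ∀ a ∈ s, ∀ b ∈ s, f a - 2 = f b - 2 → a = b := by
    intro a ha b hb h
    exact hinj ha hb (by have := h2 a ha; have := h2 b hb; omega)
  have h1 : ∑ a ∈ s, x ^ (f a - 2) = ∑ k ∈ s.image (fun a => f a - 2), x ^ k :=
    (Finset.sum_image hinj2).symm
  have h2' : ∑ k ∈ s.image (fun a => f a - 2), x ^ k ≤ ∑ k ∈ Finset.range n, x ^ k := by
    refine Finset.sum_le_sum_of_subset_of_nonneg ?_ (fun k _ _ => pow_nonneg hx0 k)
    intro k hk
    simp only [Finset.mem_image] at hk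
    obtain ⟨a, ha, rfl⟩ := hk
    have := h2 a ha
    have := hfn a ha
    exact Finset.mem_range.mpr (by omega)
  have hkey : (∑ k ∈ Finset.range n, x ^ k) * (1 - x) = 1 - x ^ n := by
    linear_combination -geom_sum_mul x n
  have h3 : ∑ k ∈ Finset.range n, x ^ k = (1 - x ^ n) / (1 - x) := by
    field_simp [h1x.ne'] at hkey ⊢
    linarith
  have h4 : (1 - x ^ n) / (1 - x) ≤ 1 / (1 - x) := by
    gcongr
    have := pow_nonneg hx0 n; linarith
  calc ∑ a ∈ s, x ^ (f a - 2) = ∑ k ∈ s.image (fun a => f a - 2), x ^ k := h1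
    _ ≤ ∑ k ∈ Finset.range n, x ^ k := h2'
    _ = (1 - x ^ n) / (1 - x) := h3
    _ ≤ 1 / (1 - x) := h4

end Aux

/-- **Expected bunch size at a fixed level.**
In the random Thorup–Zwick hierarchy (each vertex of `A i` promoted to `A (i+1)`
independently with probability `n^(-2^i/κ)`, where `κ = 2^ℓ - 1`), for every `i ≤ ℓ-2` the
expected number of ordered pairs `(u,v)` with `u ∈ A i \ A (i+1)`, `v ∈ A i` and
`d_G(u,v) < d_G(u, A (i+1))` is at most `2·n^(1+1/κ)`. -/
theorem expected_bunch_size_at_fixed_level :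
    ∀ (V : Type) [Fintype V] (G : SimpleGraph V), G.Connected →
    2 ≤ Fintype.card V →
    ∀ ℓ : ℕ, 2 ≤ ℓ →
    ∀ κ : ℕ, κ = 2 ^ ℓ - 1 →
    ∀ (Ω : Type) [MeasurableSpace Ω] (μ : Measure Ω), IsProbabilityMeasure μ →
    ∀ X : V × ℕ → Ω → Bool,
      (∀ q, Measurable (X q)) →
      ProbabilityTheory.iIndepFun X μ →
      (∀ (v : V) (i : ℕ), i ≤ ℓ - 2 →
        μ {ω | X (v, i) ω = true} =
          ENNReal.ofReal ((Fintype.card V : ℝ) ^ (-((2 : ℝ) ^ i) / (κ : ℝ)))) →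
    ∀ A : ℕ → Ω → Set V,
      (∀ ω, A 0 ω = Set.univ) →
      (∀ i ω, A (i + 1) ω = {v ∈ A i ω | X (v, i) ω = true}) →
    ∀ i ≤ ℓ - 2,
      (∫ ω, (Set.ncard {q : V × V |
          q.1 ∈ A i ω ∧ q.1 ∉ A (i + 1) ω ∧ q.2 ∈ A i ω ∧
          ∀ z ∈ A (i + 1) ω, G.dist q.1 q.2 < G.dist q.1 z} : ℝ) ∂μ) ≤
        2 * (Fintype.card V : ℝ) ^ (1 + 1 / (κ : ℝ)) := by
  intro V instV G hG hn ℓ hℓ κ hκ Ω instΩ μ hμ X hXm hInd hXp A hA0 hAs i hi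
  classical
  set n := Fintype.card V with hn_def
  -- basic numeric facts
  have hκ3 : 3 ≤ κ := by
    have h4 : 4 ≤ 2 ^ ℓ := by
      calc (4:ℕ) = 2 ^ 2 := rfl
        _ ≤ 2 ^ ℓ := Nat.pow_le_pow_right (by norm_num) hℓ
    omega
  have hκR : (0:ℝ) < (κ:ℝ) := by exact_mod_cast Nat.pos_of_ne_zero (by omega)
  have hnR : (1:ℝ) < (n:ℝ) := by exact_mod_cast Nat.lt_of_lt_of_le one_lt_two hn
  have hn0 : (0:ℝ) < (n:ℝ) := by linarith
  set p : ℕ → ℝ := fun j => (n:ℝ) ^ (-((2:ℝ) ^ j) / (κ:ℝ)) with hp_def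
  have hp_pos : ∀ j, 0 < p j := fun j => Real.rpow_pos_of_pos hn0 _
  have hp_lt1 : ∀ j, p j < 1 := by
    intro j
    apply Real.rpow_lt_one_of_one_lt_of_neg hnR
    have h2j : (0:ℝ) < (2:ℝ) ^ j := by positivity
    rw [div_neg_iff]
    right
    exact ⟨by linarith, hκR⟩
  have hp_le1 : ∀ j, p j ≤ 1 := fun j => (hp_lt1 j).le
  set R : ℝ := ∏ j ∈ Finset.range i, p j with hR_def
  set Q : ℝ := ∏ j ∈ Finset.range (i+1), p j with hQ_def
  have hR_pos : 0 < R := Finset.prod_pos fun j _ => hp_pos j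
  have hR_le1 : R ≤ 1 := Finset.prod_le_one (fun j _ => (hp_pos j).le) (fun j _ => hp_le1 j)
  have hQ_eq : Q = R * p i := Finset.prod_range_succ p i
  have hQ_pos : 0 < Q := Finset.prod_pos fun j _ => hp_pos j
  have hQ_lt1 : Q < 1 := by
    rw [hQ_eq]
    calc R * p i ≤ 1 * p i := by
          apply mul_le_mul_of_nonneg_right hR_le1 (hp_pos i).le
      _ = p i := one_mul _
      _ < 1 := hp_lt1 i
  -- measures of atomic events
  have hmeas_atom : ∀ (q : V × ℕ) (b : Bool), MeasurableSet {ω | X q ω = b} := by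
    intro q b
    have : {ω | X q ω = b} = X q ⁻¹' {b} := by ext ω; simp
    rw [this]
    exact (hXm q) (measurableSet_singleton b)
  have hμt : ∀ (z : V) (j : ℕ), j ≤ ℓ - 2 →
      μ {ω | X (z, j) ω = true} = ENNReal.ofReal (p j) := fun z j hj => hXp z j hj
  have hμf : ∀ (z : V) (j : ℕ), j ≤ ℓ - 2 →
      μ {ω | X (z, j) ω = false} = 1 - ENNReal.ofReal (p j) := by
    intro z j hj
    have hc : {ω | X (z, j) ω = false} = {ω | X (z, j) ω = true}ᶜ := by
      ext ω; simp
    rw [hc, prob_compl_eq_one_sub (hmeas_atom _ _), hμt z j hj]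
  -- membership characterization
  have hAmem : ∀ (k : ℕ) (ω : Ω) (z : V), z ∈ A k ω ↔ ∀ j < k, X (z, j) ω = true := by
    intro k
    induction k with
    | zero => intro ω z; simp [hA0 ω]
    | succ k ih =>
      intro ω z
      rw [hAs k ω]
      constructor
      · rintro ⟨hz, hx⟩ j hj
        rcases Nat.lt_succ_iff_lt_or_eq.mp hj with h | h
        · exact (ih ω z).mp hz j h
        · exact h ▸ hx
      · intro h
        exact ⟨(ih ω z).mpr fun j hj => h j (hj.trans (Nat.lt_succ_self k)),
          h k (Nat.lt_succ_self k)⟩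
  -- the column events
  set bD : ℕ → Bool := fun j => decide (j < i) with hbD_def
  set D : V → Set Ω := fun z => ⋂ j ∈ Finset.range (i+1), {ω | X (z, j) ω = bD j} with hD_def
  set Ee : V → Set Ω := fun z => (⋂ j ∈ Finset.range (i+1), {ω | X (z, j) ω = true})ᶜ with hEe_def
  set C : V → V → V → Set Ω :=
    fun u v z => if z = u ∨ z = v then D z else Ee z with hC_def
  have hjle : ∀ j ∈ Finset.range (i+1), j ≤ ℓ - 2 :=
    fun j hj => le_trans (Nat.lt_succ_iff.mp (Finset.mem_range.mp hj)) hi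
  -- measures of column events
  have hμD : ∀ z, (μ (D z)).toReal = R * (1 - p i) := by
    intro z
    have hprod := tz_col_prod X hInd z (i+1) bD
    have hbDi : bD i = false := by simp [hbD_def]
    have hterm : ∀ j ∈ Finset.range i, μ {ω | X (z, j) ω = bD j} = ENNReal.ofReal (p j) := by
      intro j hj
      have hji : j < i := Finset.mem_range.mp hj
      have hbt : bD j = true := by simp [hbD_def, hji]
      rw [hbt, hμt z j ((Nat.le_of_lt hji).trans hi)]
    have hDval : μ (D z) = ENNReal.ofReal R * (1 - ENNReal.ofReal (p i)) := by
      simp only [hD_def]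
      rw [hprod, Finset.prod_range_succ, Finset.prod_congr rfl hterm, hbDi, hμf z i hi,
        ← ENNReal.ofReal_prod_of_nonneg (fun j _ => (hp_pos j).le)]
    rw [hDval, ENNReal.toReal_mul, ENNReal.toReal_ofReal hR_pos.le,
      ENNReal.toReal_sub_of_le (ENNReal.ofReal_le_one.mpr (hp_le1 i)) ENNReal.one_ne_top,
      ENNReal.toReal_ofReal (hp_pos i).le, ENNReal.toReal_one]
  have hμEe : ∀ z, (μ (Ee z)).toReal = 1 - Q := by
    intro z
    have hmeasI : MeasurableSet (⋂ j ∈ Finset.range (i+1), {ω | X (z, j) ω = true}) :=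
      Set.Finite.measurableSet_biInter (Finset.finite_toSet _) fun j _ => hmeas_atom _ _
    have hEval : μ (Ee z) = 1 - ENNReal.ofReal Q := by
      simp only [hEe_def]
      rw [prob_compl_eq_one_sub hmeasI, tz_col_prod X hInd z (i+1) (fun _ => true),
        Finset.prod_congr rfl (fun j hj => hμt z j (hjle j hj)),
        ← ENNReal.ofReal_prod_of_nonneg (fun j _ => (hp_pos j).le)]
    rw [hEval, ENNReal.toReal_sub_of_le (ENNReal.ofReal_le_one.mpr hQ_lt1.le) ENNReal.one_ne_top,
      ENNReal.toReal_ofReal hQ_pos.le, ENNReal.toReal_one]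
  -- measurability in column σ-algebras
  set M : V → MeasurableSpace Ω := fun z => ⨆ q ∈ (Prod.fst ⁻¹' {z} : Set (V × ℕ)),
    MeasurableSpace.comap (X q) inferInstance with hM_def
  have hatom : ∀ (z : V) (j : ℕ) (b : Bool), MeasurableSet[M z] {ω | X (z, j) ω = b} := by
    intro z j b
    have h1 : MeasurableSet[MeasurableSpace.comap (X (z, j)) inferInstance]
        {ω | X (z, j) ω = b} := ⟨{b}, trivial, by ext ω; simp⟩
    have hle := le_iSup₂ (f := fun (q : V × ℕ) (_ : q ∈ (Prod.fst ⁻¹' {z} : Set (V × ℕ))) =>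
      MeasurableSpace.comap (X q) inferInstance) (z, j) rfl
    exact hle _ h1
  have hMC : ∀ u v z, MeasurableSet[M z] (C u v z) := by
    intro u v z
    by_cases h : z = u ∨ z = v
    · have hCeq : C u v z = D z := by simp [hC_def, h]
      rw [hCeq]
      simp only [hD_def]
      exact MeasurableSet.biInter (Finset.range (i+1)).countable_toSet
        fun j _ => hatom z j (bD j)
    · have hCeq : C u v z = Ee z := by simp [hC_def, h]
      rw [hCeq]
      simp only [hEe_def]
      exact (MeasurableSet.biInter (Finset.range (i+1)).countable_toSet
        fun j _ => hatom z j true).compl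
  have hmeasC : ∀ u v z, MeasurableSet (C u v z) := by
    intro u v z
    have hle : M z ≤ instΩ := iSup₂_le fun q _ => (hXm q).comap_le
    exact hle _ (hMC u v z)
  -- the bunch events
  set Wf : V → V → Finset V :=
    fun u v => Finset.univ.filter fun z => G.dist u z ≤ G.dist u v with hWf_def
  set Ev : V × V → Set Ω := fun q => {ω | q.1 ∈ A i ω ∧ q.1 ∉ A (i+1) ω ∧ q.2 ∈ A i ω ∧
    ∀ z ∈ A (i+1) ω, G.dist q.1 q.2 < G.dist q.1 z} with hEv_def
  have hEset : ∀ u v : V, Ev (u, v) = ⋂ z ∈ Wf u v, C u v z := by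
    intro u v
    ext ω
    simp only [hEv_def, Set.mem_setOf_eq]
    constructor
    · rintro ⟨hu, hu', hv, hd⟩
      refine Set.mem_iInter₂.mpr fun z hz => ?_
      have hzd : G.dist u z ≤ G.dist u v := by
        simpa [hWf_def] using hz
      by_cases hzuv : z = u ∨ z = v
      · have hCeq : C u v z = D z := by simp [hC_def, hzuv]
        rw [hCeq]
        simp only [hD_def]
        refine Set.mem_iInter₂.mpr fun j hj => ?_
        rcases Nat.lt_succ_iff_lt_or_eq.mp (Finset.mem_range.mp hj) with hji | hji
        · have hbt : bD j = true := by simp [hbD_def, hji]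
          show X (z, j) ω = bD j
          rw [hbt]
          rcases hzuv with rfl | rfl
          · exact (hAmem i ω z).mp hu j hji
          · exact (hAmem i ω z).mp hv j hji
        · subst hji
          have hbf : bD j = false := by simp [hbD_def]
          show X (z, j) ω = bD j
          rw [hbf]
          by_contra hxt
          rw [Bool.not_eq_false] at hxt
          have hzA1 : z ∈ A (j+1) ω := by
            rw [hAs j ω]
            refine ⟨?_, hxt⟩
            rcases hzuv with rfl | rfl
            exacts [hu, hv]
          have hdz := hd z hzA1
          rcases hzuv with rfl | rfl
          · rw [SimpleGraph.dist_self] at hdz; omega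
          · omega
      · have hCeq : C u v z = Ee z := by simp [hC_def, hzuv]
        rw [hCeq]
        simp only [hEe_def, Set.mem_compl_iff]
        intro hall
        have hzA1 : z ∈ A (i+1) ω := by
          rw [hAmem (i+1) ω z]
          intro j hj
          exact Set.mem_iInter₂.mp hall j (Finset.mem_range.mpr hj)
        have hdz := hd z hzA1
        omega
    · intro hω
      have h : ∀ z : V, G.dist u z ≤ G.dist u v → ω ∈ C u v z := by
        intro z hzd
        exact Set.mem_iInter₂.mp hω z (by simp [hWf_def, hzd])
      have hCuD : C u v u = D u := by simp [hC_def]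
      have hCvD : C u v v = D v := by simp [hC_def]
      have hCu := h u (by rw [SimpleGraph.dist_self]; exact Nat.zero_le _)
      have hCv := h v (le_refl _)
      rw [hCuD] at hCu
      rw [hCvD] at hCv
      simp only [hD_def] at hCu hCv
      have hDu := Set.mem_iInter₂.mp hCu
      have hDv := Set.mem_iInter₂.mp hCv
      have hu : u ∈ A i ω := by
        rw [hAmem i ω u]
        intro j hj
        have hxx := hDu j (Finset.mem_range.mpr (by omega))
        simpa [hbD_def, hj] using hxx
      have hv : v ∈ A i ω := by
        rw [hAmem i ω v]
        intro j hj
        have hxx := hDv j (Finset.mem_range.mpr (by omega))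
        simpa [hbD_def, hj] using hxx
      have hXui : X (u, i) ω = false := by
        have hxx := hDu i (Finset.self_mem_range_succ i)
        simpa [hbD_def] using hxx
      have hu' : u ∉ A (i+1) ω := by
        rw [hAs i ω]
        rintro ⟨-, hx⟩
        rw [hXui] at hx
        exact Bool.false_ne_true hx
      refine ⟨hu, hu', hv, ?_⟩
      intro z hzA
      by_contra hlt
      push_neg at hlt
      have hCz := h z hlt
      have hzXall : ∀ j < i + 1, X (z, j) ω = true := (hAmem (i+1) ω z).mp hzA
      by_cases hzuv : z = u ∨ z = v
      · have hCeq : C u v z = D z := by simp [hC_def, hzuv]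
        rw [hCeq] at hCz
        simp only [hD_def] at hCz
        have hxx := Set.mem_iInter₂.mp hCz i (Finset.self_mem_range_succ i)
        simp only [Set.mem_setOf_eq] at hxx
        rw [hzXall i (Nat.lt_succ_self i)] at hxx
        simpa [hbD_def] using hxx.symm
      · have hCeq : C u v z = Ee z := by simp [hC_def, hzuv]
        rw [hCeq] at hCz
        simp only [hEe_def, Set.mem_compl_iff] at hCz
        exact hCz (Set.mem_iInter₂.mpr fun j hj =>
          hzXall j (Finset.mem_range.mp hj))
  have hEv_meas : ∀ q : V × V, MeasurableSet (Ev q) := by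
    intro q
    rw [show Ev q = Ev (q.1, q.2) from rfl, hEset q.1 q.2]
    exact Set.Finite.measurableSet_biInter (Finset.finite_toSet _)
      fun z _ => hmeasC q.1 q.2 z
  -- value of the events
  have hval : ∀ u v : V, (μ (Ev (u, v))).toReal =
      ∏ z ∈ Wf u v, (μ (C u v z)).toReal := by
    intro u v
    rw [hEset u v, tz_col_indep X hXm hInd (C u v) (hMC u v) (Wf u v),
      ENNReal.toReal_prod]
  have htC : ∀ u v z, (μ (C u v z)).toReal =
      if z = u ∨ z = v then R * (1 - p i) else 1 - Q := by
    intro u v z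
    by_cases h : z = u ∨ z = v <;> simp [hC_def, h, hμD, hμEe]
  have hW2 : ∀ u v : V, u ≠ v → ({u, v} : Finset V) ⊆ Wf u v := by
    intro u v huv
    refine Finset.insert_subset ?_ (Finset.singleton_subset_iff.mpr ?_) <;>
      simp [hWf_def]
  have hval_ne : ∀ u v : V, u ≠ v → (μ (Ev (u, v))).toReal =
      (R * (1 - p i)) ^ 2 * (1 - Q) ^ ((Wf u v).card - 2) := by
    intro u v huv
    rw [hval u v]
    have hsub := hW2 u v huv
    rw [← Finset.prod_sdiff hsub]
    have h1 : ∏ z ∈ ({u, v} : Finset V), (μ (C u v z)).toReal = (R * (1 - p i)) ^ 2 := by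
      rw [Finset.prod_pair huv, htC, htC]
      simp [sq]
    have hconst : ∀ z ∈ Wf u v \ {u, v}, (μ (C u v z)).toReal = 1 - Q := by
      intro z hz
      rw [htC, if_neg]
      rcases Finset.mem_sdiff.mp hz with ⟨-, hz2⟩
      simpa [Finset.mem_insert, Finset.mem_singleton] using hz2
    have h2 : ∏ z ∈ Wf u v \ {u, v}, (μ (C u v z)).toReal =
        (1 - Q) ^ ((Wf u v).card - 2) := by
      rw [Finset.prod_congr rfl hconst, Finset.prod_const, Finset.card_sdiff_of_subset hsub,
        Finset.card_pair huv]
    rw [h1, h2, mul_comm]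
  have hval_diag : ∀ u : V, (μ (Ev (u, u))).toReal = R * (1 - p i) := by
    intro u
    rw [hval u u]
    have hWuu : Wf u u = {u} := by
      ext z
      simp only [hWf_def, Finset.mem_filter, Finset.mem_univ, true_and, Finset.mem_singleton]
      rw [SimpleGraph.dist_self, Nat.le_zero]
      constructor
      · intro h0
        by_contra hne
        have hpos := hG.pos_dist_of_ne (fun h : u = z => hne (h.symm))
        omega
      · rintro rfl
        exact SimpleGraph.dist_self
    rw [hWuu, Finset.prod_singleton, htC]
    simp
  -- integral to sum of measures
  have hint : (∫ ω, (Set.ncard {q : V × V |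
      q.1 ∈ A i ω ∧ q.1 ∉ A (i + 1) ω ∧ q.2 ∈ A i ω ∧
      ∀ z ∈ A (i + 1) ω, G.dist q.1 q.2 < G.dist q.1 z} : ℝ) ∂μ) =
      ∑ q : V × V, (μ (Ev q)).toReal := by
    have hpoint : ∀ ω : Ω, ((Set.ncard {q : V × V |
        q.1 ∈ A i ω ∧ q.1 ∉ A (i + 1) ω ∧ q.2 ∈ A i ω ∧
        ∀ z ∈ A (i + 1) ω, G.dist q.1 q.2 < G.dist q.1 z} : ℕ) : ℝ) =
        ∑ q : V × V, Set.indicator (Ev q) (fun _ => (1:ℝ)) ω := by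
      intro ω
      rw [Set.ncard_eq_toFinset_card', Set.toFinset_setOf, Finset.card_filter]
      push_cast
      refine Finset.sum_congr rfl fun q _ => ?_
      rw [Set.indicator_apply]
      have hiff : ω ∈ Ev q ↔ (q.1 ∈ A i ω ∧ q.1 ∉ A (i + 1) ω ∧ q.2 ∈ A i ω ∧
          ∀ z ∈ A (i + 1) ω, G.dist q.1 q.2 < G.dist q.1 z) := by
        simp [hEv_def]
      by_cases hq : ω ∈ Ev q
      · rw [if_pos (hiff.mp hq), if_pos hq]
      · rw [if_neg (fun h => hq (hiff.mpr h)), if_neg hq]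
    calc (∫ ω, (Set.ncard {q : V × V |
        q.1 ∈ A i ω ∧ q.1 ∉ A (i + 1) ω ∧ q.2 ∈ A i ω ∧
        ∀ z ∈ A (i + 1) ω, G.dist q.1 q.2 < G.dist q.1 z} : ℝ) ∂μ)
        = ∫ ω, ∑ q : V × V, Set.indicator (Ev q) (fun _ => (1:ℝ)) ω ∂μ :=
          integral_congr_ae (Filter.Eventually.of_forall hpoint)
      _ = ∑ q : V × V, ∫ ω, Set.indicator (Ev q) (fun _ => (1:ℝ)) ω ∂μ :=
          integral_finset_sum _ (fun q _ => (integrable_const (1:ℝ)).indicator (hEv_meas q))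
      _ = ∑ q : V × V, (μ (Ev q)).toReal := by
          refine Finset.sum_congr rfl fun q _ => ?_
          rw [integral_indicator_const (1:ℝ) (hEv_meas q), smul_eq_mul, mul_one]; rfl
  -- rank function
  set e : V → ℕ := fun z => ((Fintype.equivFin V) z : ℕ) with he_def
  set key : V → V → ℕ := fun u z => n * G.dist u z + e z with hkey_def
  set rank : V → V → ℕ := fun u v => (Finset.univ.filter fun z => key u z ≤ key u v).card
    with hrank_def
  have he_lt : ∀ z, e z < n := fun z => ((Fintype.equivFin V) z).isLt
  have hkey_inj : ∀ u, Function.Injective (key u) := by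
    intro u a b h
    apply (Fintype.equivFin V).injective
    apply Fin.val_injective
    have ha : key u a % n = e a := by
      simp [hkey_def, Nat.mul_add_mod, Nat.mod_eq_of_lt (he_lt a)]
    have hb : key u b % n = e b := by
      simp [hkey_def, Nat.mul_add_mod, Nat.mod_eq_of_lt (he_lt b)]
    show e a = e b
    rw [← ha, ← hb, h]
  have hrank_le_W : ∀ u v, rank u v ≤ (Wf u v).card := by
    intro u v
    refine Finset.card_le_card fun z hz => ?_
    simp only [Finset.mem_filter, Finset.mem_univ, true_and] at hz
    simp only [hWf_def, Finset.mem_filter, Finset.mem_univ, true_and]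
    by_contra hlt
    push_neg at hlt
    have h1 : key u v < n * (G.dist u v + 1) := by
      calc key u v = n * G.dist u v + e v := rfl
        _ < n * G.dist u v + n := by have := he_lt v; omega
        _ = n * (G.dist u v + 1) := by ring
    have h2 : n * (G.dist u v + 1) ≤ key u z := by
      calc n * (G.dist u v + 1) ≤ n * G.dist u z := Nat.mul_le_mul_left n hlt
        _ ≤ n * G.dist u z + e z := Nat.le_add_right _ _
        _ = key u z := rfl
    omega
  have hrank_ge2 : ∀ u v, u ≠ v → 2 ≤ rank u v := by
    intro u v huv
    have h1 : ({u, v} : Finset V) ⊆ Finset.univ.filter fun z => key u z ≤ key u v := by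
      refine Finset.insert_subset ?_ (Finset.singleton_subset_iff.mpr ?_)
      · simp only [Finset.mem_filter, Finset.mem_univ, true_and]
        have hd : 1 ≤ G.dist u v := hG.pos_dist_of_ne huv
        calc key u u = n * G.dist u u + e u := rfl
          _ = e u := by rw [SimpleGraph.dist_self]; ring
          _ ≤ n := (he_lt u).le
          _ ≤ n * G.dist u v := Nat.le_mul_of_pos_right n hd
          _ ≤ n * G.dist u v + e v := Nat.le_add_right _ _
          _ = key u v := rfl
      · simp only [Finset.mem_filter, Finset.mem_univ, true_and]
        exact le_refl _
    calc 2 = ({u, v} : Finset V).card := (Finset.card_pair huv).symm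
      _ ≤ _ := Finset.card_le_card h1
  have hrank_le_n : ∀ u v, rank u v ≤ n := fun u v => by
    simpa using Finset.card_filter_le Finset.univ fun z => key u z ≤ key u v
  have hrank_inj : ∀ u, Function.Injective (rank u) := by
    intro u
    have hmono : ∀ x y : V, key u x < key u y → rank u x < rank u y := by
      intro x y hxy
      refine Finset.card_lt_card ((Finset.ssubset_iff_of_subset ?_).mpr ⟨y, ?_, ?_⟩)
      · intro z hz
        simp only [Finset.mem_filter, Finset.mem_univ, true_and] at hz ⊢
        omega
      · simp only [Finset.mem_filter, Finset.mem_univ, true_and]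
        exact le_refl _
      · simp only [Finset.mem_filter, Finset.mem_univ, true_and]
        omega
    intro a b hab
    by_contra hne
    have hk : key u a ≠ key u b := fun h => hne (hkey_inj u h)
    rcases Nat.lt_or_ge (key u a) (key u b) with h | h
    · exact absurd hab (Nat.ne_of_lt (hmono a b h))
    · have hlt : key u b < key u a := lt_of_le_of_ne h (Ne.symm hk)
      exact absurd hab.symm (Nat.ne_of_lt (hmono b a hlt))
  -- per-u bound
  have hper_u : ∀ u : V, ∑ v : V, (μ (Ev (u, v))).toReal ≤ R / p i := by
    intro u
    rw [← Finset.add_sum_erase Finset.univ _ (Finset.mem_univ u)]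
    have hx0 : (0:ℝ) ≤ 1 - Q := by linarith
    have hx1 : 1 - Q < 1 := by linarith
    have hstep1 : ∀ v ∈ Finset.univ.erase u, (μ (Ev (u, v))).toReal ≤
        (R * (1 - p i)) ^ 2 * (1 - Q) ^ (rank u v - 2) := by
      intro v hv
      have hvu : v ≠ u := Finset.ne_of_mem_erase hv
      rw [hval_ne u v (Ne.symm hvu)]
      refine mul_le_mul_of_nonneg_left ?_ (by positivity)
      exact pow_le_pow_of_le_one hx0 (by linarith)
        (Nat.sub_le_sub_right (hrank_le_W u v) 2)
    have hsum : ∑ v ∈ Finset.univ.erase u, (μ (Ev (u, v))).toReal ≤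
        (R * (1 - p i)) ^ 2 * (1 / Q) := by
      calc ∑ v ∈ Finset.univ.erase u, (μ (Ev (u, v))).toReal
          ≤ ∑ v ∈ Finset.univ.erase u, (R * (1 - p i)) ^ 2 * (1 - Q) ^ (rank u v - 2) :=
            Finset.sum_le_sum hstep1
        _ = (R * (1 - p i)) ^ 2 * ∑ v ∈ Finset.univ.erase u, (1 - Q) ^ (rank u v - 2) := by
            rw [Finset.mul_sum]
        _ ≤ (R * (1 - p i)) ^ 2 * (1 / (1 - (1 - Q))) := by
            refine mul_le_mul_of_nonneg_left ?_ (by positivity)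
            exact tz_sum_pow_le _ (rank u) n ((hrank_inj u).injOn)
              (fun v hv => hrank_ge2 u v (Ne.symm (Finset.ne_of_mem_erase hv)))
              (fun v _ => hrank_le_n u v) hx0 hx1
        _ = (R * (1 - p i)) ^ 2 * (1 / Q) := by rw [sub_sub_cancel]
    have hcomb : R * (1 - p i) + (R * (1 - p i)) ^ 2 * (1 / Q) = R * (1 - p i) / p i := by
      rw [hQ_eq]
      field_simp [(hp_pos i).ne', hR_pos.ne']
      ring
    calc (μ (Ev (u, u))).toReal + ∑ v ∈ Finset.univ.erase u, (μ (Ev (u, v))).toReal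
        ≤ R * (1 - p i) + (R * (1 - p i)) ^ 2 * (1 / Q) := by
          rw [hval_diag u]; linarith
      _ = R * (1 - p i) / p i := hcomb
      _ ≤ R / p i := by
          have hRp : R * (1 - p i) ≤ R := by nlinarith [hR_pos.le, (hp_pos i).le]
          exact (div_le_div_iff_of_pos_right (hp_pos i)).mpr hRp
  -- final computation
  have hfinal_eq : (n:ℝ) * (R / p i) = (n:ℝ) ^ (1 + 1/(κ:ℝ)) := by
    have hgeo : ∑ j ∈ Finset.range i, (2:ℝ) ^ j = 2 ^ i - 1 := by
      rw [geom_sum_eq (by norm_num : (2:ℝ) ≠ 1)]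
      norm_num
    have hRpow : R = (n:ℝ) ^ (-((2:ℝ) ^ i - 1) / (κ:ℝ)) := by
      calc R = ∏ j ∈ Finset.range i, (n:ℝ) ^ (-((2:ℝ) ^ j) / (κ:ℝ)) := rfl
        _ = (n:ℝ) ^ (∑ j ∈ Finset.range i, -((2:ℝ) ^ j) / (κ:ℝ)) :=
            (Real.rpow_sum_of_pos hn0 _ _).symm
        _ = (n:ℝ) ^ (-((2:ℝ) ^ i - 1) / (κ:ℝ)) := by
            congr 1
            rw [← Finset.sum_div]
            congr 1
            rw [Finset.sum_neg_distrib, hgeo]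
    have hpipow : p i = (n:ℝ) ^ (-((2:ℝ) ^ i) / (κ:ℝ)) := rfl
    rw [hRpow, hpipow]
    calc (n:ℝ) * ((n:ℝ) ^ (-((2:ℝ) ^ i - 1) / (κ:ℝ)) / (n:ℝ) ^ (-((2:ℝ) ^ i) / (κ:ℝ)))
        = (n:ℝ) ^ (1:ℝ) * (n:ℝ) ^ (-((2:ℝ) ^ i - 1) / (κ:ℝ) - -((2:ℝ) ^ i) / (κ:ℝ)) := by
          rw [Real.rpow_one, Real.rpow_sub hn0]
      _ = (n:ℝ) ^ ((1:ℝ) + (-((2:ℝ) ^ i - 1) / (κ:ℝ) - -((2:ℝ) ^ i) / (κ:ℝ))) :=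
          (Real.rpow_add hn0 _ _).symm
      _ = (n:ℝ) ^ (1 + 1/(κ:ℝ)) := by
          congr 1
          field_simp
          ring
  calc (∫ ω, (Set.ncard {q : V × V |
      q.1 ∈ A i ω ∧ q.1 ∉ A (i + 1) ω ∧ q.2 ∈ A i ω ∧
      ∀ z ∈ A (i + 1) ω, G.dist q.1 q.2 < G.dist q.1 z} : ℝ) ∂μ)
      = ∑ q : V × V, (μ (Ev q)).toReal := hint
    _ = ∑ u : V, ∑ v : V, (μ (Ev (u, v))).toReal := Fintype.sum_prod_type _
    _ ≤ ∑ _u : V, R / p i := Finset.sum_le_sum fun u _ => hper_u u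
    _ = (n:ℝ) * (R / p i) := by
        rw [Finset.sum_const, Finset.card_univ, nsmul_eq_mul]
    _ = (n:ℝ) ^ (1 + 1/(κ:ℝ)) := hfinal_eq
    _ ≤ 2 * (n:ℝ) ^ (1 + 1/(κ:ℝ)) := by
        have := Real.rpow_nonneg hn0.le (1 + 1/(κ:ℝ)); linarith
end

section
/- (Expected total size of the Thorup–Zwick emulator) In the random Thorup–Zwick hierarchy of the context, the expected value of N + |A_{ℓ−1}|² is at most 2·ℓ·n^{1+1/κ}, where N is the number of ordered pairs (u,v) of vertices for which there exists an integer i with 0 ≤ i ≤ ℓ−2 such that u ∈ A_i \ A_{i+1}, v ∈ A_i, and d_G(u,v) < d_G(u, A_{i+1}). (Consequently, since at most ℓ·n additional pivot edges are ever added, the expected number of edges of the Thorup–Zwick emulator is O(log₂(κ+1)·n^{1+1/κ}).) -/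
open MeasureTheory

open Finset

set_option linter.unusedSectionVars false
set_option maxHeartbeats 1000000

namespace TZaux

noncomputable def pp (r K : ℝ) (j : ℕ) : ℝ := r ^ (-((2:ℝ) ^ j) / K)
noncomputable def qq (r K : ℝ) (i : ℕ) : ℝ := r ^ (-((2:ℝ) ^ i - 1) / K)

lemma rpow_sum_eq {r : ℝ} (hr : 0 < r) (s : Finset ℕ) (a : ℕ → ℝ) :
    r ^ (∑ j ∈ s, a j) = ∏ j ∈ s, r ^ (a j) := by
  induction s using Finset.cons_induction with
  | empty => simp
  | cons x s hx ih => rw [Finset.sum_cons, Finset.prod_cons, Real.rpow_add hr, ih]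

section ppqq

variable {r K : ℝ}

lemma pp_pos (hr : 1 ≤ r) (j : ℕ) : 0 < pp r K j :=
  Real.rpow_pos_of_pos (lt_of_lt_of_le one_pos hr) _

lemma pp_le_one (hr : 1 ≤ r) (hK : 0 < K) (j : ℕ) : pp r K j ≤ 1 := by
  apply Real.rpow_le_one_of_one_le_of_nonpos hr
  apply div_nonpos_of_nonpos_of_nonneg _ hK.le
  have : (0:ℝ) < 2 ^ j := by positivity
  linarith

lemma qq_pos (hr : 1 ≤ r) (i : ℕ) : 0 < qq r K i :=
  Real.rpow_pos_of_pos (lt_of_lt_of_le one_pos hr) _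

lemma qq_le_one (hr : 1 ≤ r) (hK : 0 < K) (i : ℕ) : qq r K i ≤ 1 := by
  apply Real.rpow_le_one_of_one_le_of_nonpos hr
  apply div_nonpos_of_nonpos_of_nonneg _ hK.le
  have : (1:ℝ) ≤ 2 ^ i := one_le_pow₀ (by norm_num)
  linarith

lemma qq_zero : qq r K 0 = 1 := by simp [qq]

lemma qq_succ (hr : 1 ≤ r) (i : ℕ) : qq r K (i+1) = qq r K i * pp r K i := by
  rw [qq, qq, pp, ← Real.rpow_add (lt_of_lt_of_le one_pos hr)]
  congr 1
  rw [← add_div]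
  congr 1
  ring

lemma prod_pp (hr : 1 ≤ r) (i : ℕ) : ∏ j ∈ Finset.range i, pp r K j = qq r K i := by
  simp only [pp]
  rw [← rpow_sum_eq (lt_of_lt_of_le one_pos hr)]
  unfold qq
  congr 1
  rw [← Finset.sum_div]
  congr 1
  rw [Finset.sum_neg_distrib, geom_sum_eq (by norm_num : (2:ℝ) ≠ 1)]
  ring

end ppqq


variable {V : Type} [Fintype V] {Ω : Type} [MeasurableSpace Ω]

/-- The event that `v ∈ A i`. -/
def Memb (X : V × ℕ → Ω → Bool) (i : ℕ) (v : V) : Set Ω :=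
  {ω | ∀ j < i, X (v, j) ω = true}

lemma memb_succ (X : V × ℕ → Ω → Bool) (i : ℕ) (v : V) :
    Memb X (i+1) v = Memb X i v ∩ (X (v,i)) ⁻¹' {true} := by
  ext ω
  simp only [Memb, Set.mem_inter_iff, Set.mem_setOf_eq, Set.mem_preimage,
    Set.mem_singleton_iff, Nat.lt_succ_iff_lt_or_eq]
  constructor
  · exact fun h => ⟨fun j hj => h j (Or.inl hj), h i (Or.inr rfl)⟩
  · rintro ⟨h1, h2⟩ j (hj | rfl)
    · exact h1 j hj
    · exact h2

lemma memb_eq_biInter (X : V × ℕ → Ω → Bool) (i : ℕ) (v : V) :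
    Memb X i v = ⋂ j ∈ Finset.range i, (X (v, j)) ⁻¹' {true} := by
  ext ω; simp [Memb]

lemma measurableSet_memb {X : V × ℕ → Ω → Bool} (hXm : ∀ q, Measurable (X q))
    (i : ℕ) (v : V) : MeasurableSet (Memb X i v) := by
  rw [memb_eq_biInter]
  exact Finset.measurableSet_biInter _ fun j _ => (hXm _) (by measurability)

/-- characterization of the levels. -/
lemma memb_char {X : V × ℕ → Ω → Bool} {A : ℕ → Ω → Set V}
    (hA0 : ∀ ω, A 0 ω = Set.univ)
    (hAS : ∀ i ω, A (i + 1) ω = {v ∈ A i ω | X (v, i) ω = true}) :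
    ∀ i ω v, v ∈ A i ω ↔ ω ∈ Memb X i v := by
  intro i
  induction i with
  | zero => intro ω v; simp [hA0, Memb]
  | succ i ih =>
    intro ω v
    rw [hAS i ω, memb_succ]
    simp only [Set.mem_setOf_eq, Set.mem_inter_iff, Set.mem_preimage, Set.mem_singleton_iff]
    rw [ih ω v]


/-- Independence of finitely many per-vertex events, each depending only on the
coordinates of its own vertex. -/
lemma grouped {μ : Measure Ω} [IsProbabilityMeasure μ] {X : V × ℕ → Ω → Bool}
    (hXm : ∀ q, Measurable (X q))
    (hXi : ProbabilityTheory.iIndepFun X μ)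
    (m : ℕ) (S : V → Set ((Fin (m+1)) → Bool)) (W : Finset V) (P : V → Set Ω)
    (hP : ∀ w ∈ W, P w = (fun ω (j : Fin (m+1)) => X (w, (j:ℕ)) ω) ⁻¹' (S w)) :
    μ (⋂ w ∈ W, P w) = ∏ w ∈ W, μ (P w) := by
  classical
  induction W using Finset.induction with
  | empty => simp
  | @insert a s ha ih =>
    rw [Finset.set_biInter_insert, Finset.prod_insert ha]
    have hPa := hP a (Finset.mem_insert_self a s)
    set F₁ : Finset (V × ℕ) := {a} ×ˢ Finset.range (m+1) with hF₁
    set F₂ : Finset (V × ℕ) := s ×ˢ Finset.range (m+1) with hF₂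
    have hdis : Disjoint F₁ F₂ := by
      rw [Finset.disjoint_left]
      rintro ⟨w, j⟩ h1 h2
      rw [hF₁, Finset.mem_product] at h1
      rw [hF₂, Finset.mem_product] at h2
      simp only [Finset.mem_singleton] at h1
      exact ha (h1.1 ▸ h2.1)
    have hind := hXi.indepFun_finset F₁ F₂ hdis hXm
    set g₁ : Ω → (F₁ → Bool) := fun ω q => X q ω with hg₁
    set g₂ : Ω → (F₂ → Bool) := fun ω q => X q ω with hg₂
    set T₁ : Set (F₁ → Bool) :=
      {b | (fun j : Fin (m+1) => b ⟨(a, (j:ℕ)),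
        by simp [hF₁, Finset.mem_product, j.isLt]⟩) ∈ S a} with hT₁
    set T₂ : Set (F₂ → Bool) :=
      {b | ∀ w (hw : w ∈ s), (fun j : Fin (m+1) => b ⟨(w, (j:ℕ)),
        by simp [hF₂, Finset.mem_product, hw, j.isLt]⟩) ∈ S w} with hT₂
    have e₁ : P a = g₁ ⁻¹' T₁ := by rw [hPa]; rfl
    have e₂ : (⋂ w ∈ s, P w) = g₂ ⁻¹' T₂ := by
      ext ω
      simp only [Set.mem_iInter, Set.mem_preimage, hT₂, Set.mem_setOf_eq, hg₂]
      constructor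
      · intro h w hw
        have h2 := h w hw
        rw [hP w (Finset.mem_insert_of_mem hw)] at h2
        exact h2
      · intro h w hw
        rw [hP w (Finset.mem_insert_of_mem hw)]
        exact h w hw
    rw [e₁, e₂, hind.measure_inter_preimage_eq_mul T₁ T₂
        MeasurableSet.of_discrete MeasurableSet.of_discrete, ← e₁, ← e₂,
      ih (fun w hw => hP w (Finset.mem_insert_of_mem hw))]


section prob

variable {μ : Measure Ω} [IsProbabilityMeasure μ] {X : V × ℕ → Ω → Bool} {r K : ℝ} {L : ℕ}

lemma prob_memb (hr : 1 ≤ r)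
    (hXi : ProbabilityTheory.iIndepFun X μ)
    (hXp : ∀ (v : V) (j : ℕ), j ≤ L →
      μ {ω | X (v, j) ω = true} = ENNReal.ofReal (pp r K j))
    {i : ℕ} (hi : i ≤ L + 1) (v : V) :
    μ (Memb X i v) = ENNReal.ofReal (qq r K i) := by
  classical
  have hset : Memb X i v
      = ⋂ q ∈ ({v} ×ˢ Finset.range i), (X q) ⁻¹' ((fun _ => ({true} : Set Bool)) q) := by
    ext ω; simp [Memb, Finset.mem_product]
  rw [hset, hXi.measure_inter_preimage_eq_mul _ (fun q _ => MeasurableSet.of_discrete),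
    Finset.prod_product, Finset.prod_singleton]
  have hcong : ∀ j ∈ Finset.range i,
      μ ((X (v, j)) ⁻¹' {true}) = ENNReal.ofReal (pp r K j) := by
    intro j hj
    have : (X (v, j)) ⁻¹' {true} = {ω | X (v, j) ω = true} := by ext ω; simp
    rw [this, hXp v j (by simp only [Finset.mem_range] at hj; omega)]
  rw [Finset.prod_congr rfl hcong,
    ← ENNReal.ofReal_prod_of_nonneg (fun j _ => (pp_pos hr j).le), prod_pp hr]

lemma prob_false (hr : 1 ≤ r) (hXm : ∀ q, Measurable (X q))
    (hXp : ∀ (v : V) (j : ℕ), j ≤ L →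
      μ {ω | X (v, j) ω = true} = ENNReal.ofReal (pp r K j))
    {i : ℕ} (hi : i ≤ L) (v : V) :
    μ ((X (v, i)) ⁻¹' {false}) = ENNReal.ofReal (1 - pp r K i) := by
  have h1 : ((X (v, i)) ⁻¹' {false}) = ((X (v, i)) ⁻¹' {true})ᶜ := by
    ext ω; cases h : X (v, i) ω <;> simp [h]
  have h2 : (X (v, i)) ⁻¹' {true} = {ω | X (v, i) ω = true} := by ext ω; simp
  rw [h1, prob_compl_eq_one_sub ((hXm _) MeasurableSet.of_discrete), h2, hXp v i hi,
    ENNReal.ofReal_sub _ (pp_pos hr i).le, ENNReal.ofReal_one]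

lemma prob_membx (hr : 1 ≤ r) (hXm : ∀ q, Measurable (X q))
    (hXi : ProbabilityTheory.iIndepFun X μ)
    (hXp : ∀ (v : V) (j : ℕ), j ≤ L →
      μ {ω | X (v, j) ω = true} = ENNReal.ofReal (pp r K j))
    {i : ℕ} (hi : i ≤ L) (v : V) :
    μ (Memb X i v ∩ (X (v, i)) ⁻¹' {false})
      = ENNReal.ofReal (qq r K i * (1 - pp r K i)) := by
  classical
  set sets : V × ℕ → Set Bool := fun q => if q.2 = i then {false} else {true} with hsets
  have hset : Memb X i v ∩ (X (v, i)) ⁻¹' {false}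
      = ⋂ q ∈ ({v} ×ˢ Finset.range (i+1)), (X q) ⁻¹' sets q := by
    ext ω
    simp only [Set.mem_inter_iff, Memb, Set.mem_setOf_eq, Set.mem_preimage, Set.mem_iInter,
      Finset.mem_product, Finset.mem_singleton, Finset.mem_range, hsets]
    constructor
    · rintro ⟨h1, h2⟩ ⟨w, j⟩ ⟨hw, hj⟩
      dsimp only at hw ⊢
      subst hw
      by_cases hji : j = i
      · subst hji; simp [h2]
      · simp only [if_neg hji, Set.mem_singleton_iff]
        exact h1 j (by omega)
    · intro h
      constructor
      · intro j hj
        have h3 := h ⟨v, j⟩ ⟨rfl, by omega⟩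
        simpa [Nat.ne_of_lt hj] using h3
      · have h3 := h ⟨v, i⟩ ⟨rfl, by omega⟩
        simpa using h3
  rw [hset, hXi.measure_inter_preimage_eq_mul _ (fun q _ => MeasurableSet.of_discrete),
    Finset.prod_product, Finset.prod_singleton, Finset.prod_range_succ]
  have hterm : μ ((X (v, i)) ⁻¹' sets (v, i)) = ENNReal.ofReal (1 - pp r K i) := by
    have h4 : sets (v, i) = {false} := if_pos rfl
    rw [h4]
    exact prob_false hr hXm hXp hi v
  have hcong : ∀ j ∈ Finset.range i,
      μ ((X (v, j)) ⁻¹' sets (v, j)) = ENNReal.ofReal (pp r K j) := by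
    intro j hj
    simp only [Finset.mem_range] at hj
    have h5 : sets (v, j) = {true} := if_neg (by simp; omega)
    rw [h5]
    have h2 : (X (v, j)) ⁻¹' {true} = {ω | X (v, j) ω = true} := by ext ω; simp
    rw [h2, hXp v j (by omega)]
  rw [Finset.prod_congr rfl hcong, hterm,
    ← ENNReal.ofReal_prod_of_nonneg (fun j _ => (pp_pos hr j).le), prod_pp hr,
    ← ENNReal.ofReal_mul (qq_pos hr i).le]

lemma prob_notmemb (hr : 1 ≤ r) (hXm : ∀ q, Measurable (X q))
    (hXi : ProbabilityTheory.iIndepFun X μ)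
    (hXp : ∀ (v : V) (j : ℕ), j ≤ L →
      μ {ω | X (v, j) ω = true} = ENNReal.ofReal (pp r K j))
    {i : ℕ} (hi : i ≤ L + 1) (v : V) :
    μ ((Memb X i v)ᶜ) = ENNReal.ofReal (1 - qq r K i) := by
  rw [prob_compl_eq_one_sub (measurableSet_memb hXm i v), prob_memb hr hXi hXp hi v,
    ENNReal.ofReal_sub _ (qq_pos hr i).le, ENNReal.ofReal_one]

end prob



section events

variable {μ : Measure Ω} [IsProbabilityMeasure μ] {X : V × ℕ → Ω → Bool} {r K : ℝ} {L : ℕ}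

lemma membx_pre (X : V × ℕ → Ω → Bool) (w : V) (i : ℕ) :
    Memb X i w ∩ (X (w, i)) ⁻¹' {false}
      = (fun ω (j : Fin (i+1)) => X (w, (j:ℕ)) ω) ⁻¹'
        {b : Fin (i+1) → Bool |
          (∀ j : Fin (i+1), (j:ℕ) < i → b j = true) ∧ b ⟨i, lt_add_one i⟩ = false} := by
  ext ω
  simp only [Set.mem_inter_iff, Memb, Set.mem_setOf_eq, Set.mem_preimage, Set.mem_singleton_iff]
  constructor
  · rintro ⟨h1, h2⟩
    exact ⟨fun j hj => h1 j hj, h2⟩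
  · rintro ⟨h1, h2⟩
    exact ⟨fun j hj => h1 ⟨j, by omega⟩ hj, h2⟩

lemma notmemb_pre (X : V × ℕ → Ω → Bool) (w : V) (i : ℕ) :
    (Memb X (i+1) w)ᶜ = (fun ω (j : Fin (i+1)) => X (w, (j:ℕ)) ω) ⁻¹'
      {b : Fin (i+1) → Bool | ¬ ∀ j : Fin (i+1), b j = true} := by
  ext ω
  simp only [Set.mem_compl_iff, Memb, Set.mem_setOf_eq, Set.mem_preimage]
  constructor
  · intro h hall
    exact h (fun j hj => hall ⟨j, hj⟩)
  · intro h hall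
    exact h (fun j => hall (j:ℕ) j.isLt)

/-- The event contributing to `N` for the pair `(u,v)` at level `i`. -/
def EiSet [DecidableEq V] (G : SimpleGraph V) (X : V × ℕ → Ω → Bool) (u v : V) (i : ℕ) :
    Set Ω :=
  (Memb X i u ∩ (Memb X (i+1) u)ᶜ) ∩
    (Memb X i v ∩ ⋂ z ∈ Finset.univ.filter (fun z => G.dist u z ≤ G.dist u v),
      (Memb X (i+1) z)ᶜ)

lemma Ei_le_diag [DecidableEq V] (G : SimpleGraph V) (hr : 1 ≤ r)
    (hXm : ∀ q, Measurable (X q))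
    (hXi : ProbabilityTheory.iIndepFun X μ)
    (hXp : ∀ (v : V) (j : ℕ), j ≤ L →
      μ {ω | X (v, j) ω = true} = ENNReal.ofReal (pp r K j))
    {i : ℕ} (hi : i ≤ L) (u : V) :
    μ (EiSet G X u u i) ≤ ENNReal.ofReal (qq r K i * (1 - pp r K i)) := by
  rw [← prob_membx hr hXm hXi hXp hi u]
  apply measure_mono
  rintro ω ⟨⟨h1, h2⟩, -⟩
  refine ⟨h1, ?_⟩
  simp only [Set.mem_preimage, Set.mem_singleton_iff]
  cases h : X (u, i) ω
  · rfl
  · exact absurd (by rw [memb_succ]; exact ⟨h1, by simp [h]⟩) h2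

lemma Ei_le_offdiag [DecidableEq V] (G : SimpleGraph V) (hr : 1 ≤ r) (hK : 0 < K)
    (hXm : ∀ q, Measurable (X q))
    (hXi : ProbabilityTheory.iIndepFun X μ)
    (hXp : ∀ (v : V) (j : ℕ), j ≤ L →
      μ {ω | X (v, j) ω = true} = ENNReal.ofReal (pp r K j))
    {i : ℕ} (hi : i ≤ L) {u v : V} (huv : v ≠ u) (T : Finset V)
    (hTu : u ∉ T) (hTv : v ∉ T) (hT : ∀ w ∈ T, G.dist u w ≤ G.dist u v) :
    μ (EiSet G X u v i) ≤ ENNReal.ofReal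
      ((qq r K i * (1 - pp r K i)) * (qq r K i * (1 - pp r K i))
        * (1 - qq r K (i+1)) ^ T.card) := by
  classical
  set P : V → Set Ω := fun w =>
    if w = u then Memb X i u ∩ (X (u, i)) ⁻¹' {false}
    else if w = v then Memb X i v ∩ (X (v, i)) ⁻¹' {false}
    else (Memb X (i+1) w)ᶜ with hPdef
  have hsub : EiSet G X u v i ⊆ ⋂ w ∈ insert u (insert v T), P w := by
    rintro ω ⟨⟨h1, h2⟩, h3, h4⟩
    simp only [Set.mem_iInter] at h4 ⊢
    have hXfalse : ∀ w, ω ∈ Memb X i w → ω ∉ Memb X (i+1) w → X (w, i) ω = false := by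
      intro w hm hnm
      cases h : X (w, i) ω
      · rfl
      · exact absurd (by rw [memb_succ]; exact ⟨hm, by simp [h]⟩) hnm
    have hout : ∀ w, G.dist u w ≤ G.dist u v → ω ∉ Memb X (i+1) w := by
      intro w hw
      exact h4 w (Finset.mem_filter.mpr ⟨Finset.mem_univ w, hw⟩)
    intro w hw
    rcases Finset.mem_insert.mp hw with rfl | hw
    · rw [hPdef]
      simp only [if_pos rfl]
      exact ⟨h1, by simpa using hXfalse w h1 h2⟩
    rcases Finset.mem_insert.mp hw with rfl | hw
    · rw [hPdef]
      simp only [if_neg huv, if_pos rfl]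
      exact ⟨h3, by simpa using hXfalse w h3 (hout w le_rfl)⟩
    · have hwu : w ≠ u := fun h => hTu (h ▸ hw)
      have hwv : w ≠ v := fun h => hTv (h ▸ hw)
      rw [hPdef]
      simp only [if_neg hwu, if_neg hwv]
      exact hout w (hT w hw)
  have hPS : ∀ w ∈ insert u (insert v T), P w =
      (fun ω (j : Fin (i+1)) => X (w, (j:ℕ)) ω) ⁻¹'
        ((fun w' => if w' = u ∨ w' = v then
            {b : Fin (i+1) → Bool |
              (∀ j : Fin (i+1), (j:ℕ) < i → b j = true) ∧ b ⟨i, lt_add_one i⟩ = false}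
          else {b : Fin (i+1) → Bool | ¬ ∀ j : Fin (i+1), b j = true}) w) := by
    intro w _
    rw [hPdef]
    dsimp only
    by_cases h1 : w = u
    · rw [if_pos h1, if_pos (Or.inl h1), h1]
      exact membx_pre X u i
    by_cases h2 : w = v
    · rw [if_neg h1, if_pos h2, if_pos (Or.inr h2), h2]
      exact membx_pre X v i
    · rw [if_neg h1, if_neg h2, if_neg (by tauto : ¬ (w = u ∨ w = v))]
      exact notmemb_pre X w i
  have hgroup := grouped hXm hXi i _ (insert u (insert v T)) P hPS
  have huT : u ∉ insert v T := by
    simp only [Finset.mem_insert]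
    push_neg
    exact ⟨fun h => huv h.symm, hTu⟩
  calc μ (EiSet G X u v i) ≤ μ (⋂ w ∈ insert u (insert v T), P w) := measure_mono hsub
    _ = ∏ w ∈ insert u (insert v T), μ (P w) := hgroup
    _ = μ (P u) * (μ (P v) * ∏ w ∈ T, μ (P w)) := by
        rw [Finset.prod_insert huT, Finset.prod_insert hTv]
    _ = ENNReal.ofReal (qq r K i * (1 - pp r K i)) *
        (ENNReal.ofReal (qq r K i * (1 - pp r K i)) *
          ENNReal.ofReal (1 - qq r K (i+1)) ^ T.card) := by
        congr 1
        · rw [hPdef]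
          simp only [if_pos rfl]
          exact prob_membx hr hXm hXi hXp hi u
        congr 1
        · rw [hPdef]
          simp only [if_neg huv, if_pos rfl]
          exact prob_membx hr hXm hXi hXp hi v
        · rw [Finset.prod_congr rfl (fun w hw => ?_), Finset.prod_const]
          rw [hPdef]
          have hwu : w ≠ u := fun h => hTu (h ▸ hw)
          have hwv : w ≠ v := fun h => hTv (h ▸ hw)
          simp only [if_neg hwu, if_neg hwv]
          exact prob_notmemb hr hXm hXi hXp (by omega) w
    _ ≤ _ := by
        have hq1 : (0:ℝ) ≤ qq r K i * (1 - pp r K i) :=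
          mul_nonneg (qq_pos hr i).le (by have := pp_le_one hr hK i; linarith)
        have hq2 : (0:ℝ) ≤ 1 - qq r K (i+1) := by
          have := qq_le_one hr hK (i+1); linarith
        rw [← ENNReal.ofReal_pow hq2, ← ENNReal.ofReal_mul hq1, ← ENNReal.ofReal_mul hq1]
        apply le_of_eq
        congr 1
        ring

end events


section rank

lemma rank_strict {key : V → ℕ} (hkey : Function.Injective key) {a b : V} (h : key a < key b) :
    (Finset.univ.filter (fun w => key w < key a)).card
      < (Finset.univ.filter (fun w => key w < key b)).card := by
  classical
  apply Finset.card_lt_card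
  rw [Finset.ssubset_iff_of_subset (by
    intro w hw
    simp only [Finset.mem_filter, Finset.mem_univ, true_and] at hw ⊢
    omega)]
  exact ⟨a, by simp [h], by simp⟩

lemma rank_lt_card {key : V → ℕ} (v : V) :
    (Finset.univ.filter (fun w => key w < key v)).card < Fintype.card V := by
  classical
  rw [← Finset.card_univ]
  apply Finset.card_lt_card
  rw [Finset.ssubset_iff_of_subset (Finset.subset_univ _)]
  exact ⟨v, Finset.mem_univ v, by simp⟩

lemma sum_inj_le {g : ℕ → ℝ} (hg : ∀ k, 0 ≤ g k) {f : V → ℕ}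
    (hf : Function.Injective f) (hlt : ∀ v, f v < Fintype.card V) (s : Finset V) :
    ∑ v ∈ s, g (f v) ≤ ∑ k ∈ Finset.range (Fintype.card V), g k := by
  classical
  rw [← Finset.sum_image (fun a _ b _ h => hf h)]
  apply Finset.sum_le_sum_of_subset_of_nonneg
  · intro k hk
    simp only [Finset.mem_image] at hk
    obtain ⟨v, -, rfl⟩ := hk
    exact Finset.mem_range.mpr (hlt v)
  · exact fun k _ _ => hg k

lemma geom_le {x : ℝ} (h0 : 0 ≤ x) (h1 : x < 1) (m : ℕ) :
    ∑ k ∈ Finset.range m, x ^ k ≤ 1 / (1 - x) := by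
  rw [geom_sum_eq h1.ne m]
  have h2 : (x ^ m - 1) / (x - 1) = (1 - x ^ m) / (1 - x) := by
    rw [← neg_div_neg_eq]
    ring_nf
  rw [h2, div_le_div_iff₀ (by linarith) (by linarith)]
  nlinarith [pow_nonneg h0 m]

end rank

section sumv

variable {μ : Measure Ω} [IsProbabilityMeasure μ] {X : V × ℕ → Ω → Bool} {r K : ℝ} {L : ℕ}

lemma sum_Ei_le [DecidableEq V] (G : SimpleGraph V)
    (hn : 2 ≤ Fintype.card V) (hrdef : r = (Fintype.card V : ℝ)) (hK : 0 < K)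
    (hXm : ∀ q, Measurable (X q))
    (hXi : ProbabilityTheory.iIndepFun X μ)
    (hXp : ∀ (v : V) (j : ℕ), j ≤ L →
      μ {ω | X (v, j) ω = true} = ENNReal.ofReal (pp r K j))
    {i : ℕ} (hi : i ≤ L) (u : V) :
    ∑ v : V, (μ (EiSet G X u v i)).toReal ≤ r ^ ((1:ℝ) / K) := by
  have hr : 1 ≤ r := by
    rw [hrdef]
    exact_mod_cast le_trans (by norm_num) hn
  have hrpos : 0 < r := lt_of_lt_of_le one_pos hr
  set n := Fintype.card V with hn'
  set p := pp r K i with hp'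
  set q := qq r K i with hq'
  set Q := qq r K (i+1) with hQ'
  have hp0 : 0 < p := pp_pos hr i
  have hp1 : p ≤ 1 := pp_le_one hr hK i
  have hq0 : 0 < q := qq_pos hr i
  have hq1 : q ≤ 1 := qq_le_one hr hK i
  have hQeq : Q = q * p := qq_succ hr i
  have hQ0 : 0 < Q := qq_pos hr (i+1)
  have hQ1 : Q ≤ 1 := qq_le_one hr hK (i+1)
  -- the ranking
  set key : V → ℕ := fun w => G.dist u w * n + (Fintype.equivFin V w : ℕ) with hkey'
  have hnpos : 0 < n := by omega
  have hkeyinj : Function.Injective key := by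
    intro a b hab
    have hmod : ∀ a : V, key a % n = (Fintype.equivFin V a : ℕ) := by
      intro a
      rw [hkey']
      simp only
      rw [Nat.mul_comm, Nat.mul_add_mod, Nat.mod_eq_of_lt (Fin.isLt _)]
    have h2 : (Fintype.equivFin V a : ℕ) = (Fintype.equivFin V b : ℕ) := by
      rw [← hmod a, ← hmod b, hab]
    exact (Fintype.equivFin V).injective (Fin.ext h2)
  have hkeymono : ∀ w v : V, key w < key v → G.dist u w ≤ G.dist u v := by
    intro w v h
    by_contra hcon
    push_neg at hcon
    have h1 : G.dist u v + 1 ≤ G.dist u w := hcon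
    have h2 : (G.dist u v + 1) * n ≤ G.dist u w * n := Nat.mul_le_mul_right n h1
    have h3 : (Fintype.equivFin V v : ℕ) < n := Fin.isLt _
    have h4 : (Fintype.equivFin V w : ℕ) < n := Fin.isLt _
    rw [hkey'] at h
    simp only at h
    nlinarith
  set rank : V → ℕ := fun v => (Finset.univ.filter (fun w => key w < key v)).card with hrank'
  have hrankinj : Function.Injective rank := by
    intro a b hab
    by_contra hne
    rcases (hkeyinj.ne hne).lt_or_gt with h | h
    · exact absurd hab (Nat.ne_of_lt (rank_strict hkeyinj h))
    · exact absurd hab.symm (Nat.ne_of_lt (rank_strict hkeyinj h))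
  have hranklt : ∀ v, rank v < n := fun v => rank_lt_card v
  -- per-vertex bounds
  have hA0 : 0 ≤ q * (1 - p) := mul_nonneg hq0.le (by linarith)
  have hQ10 : 0 ≤ 1 - Q := by linarith
  have hQ11 : 1 - Q < 1 := by linarith
  have hdiag : (μ (EiSet G X u u i)).toReal ≤ q * (1 - p) :=
    ENNReal.toReal_le_of_le_ofReal hA0 (Ei_le_diag G hr hXm hXi hXp hi u)
  have hoff : ∀ v : V, v ≠ u →
      (μ (EiSet G X u v i)).toReal ≤ q * (1 - p) * (q * (1 - p)) * (1 - Q) ^ (rank v - 1) := by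
    intro v hv
    set T : Finset V := (Finset.univ.filter (fun w => key w < key v)).erase u with hT'
    have hTu : u ∉ T := Finset.notMem_erase u _
    have hTv : v ∉ T := by
      intro hmem
      have := (Finset.mem_erase.mp hmem).2
      simp only [Finset.mem_filter] at this
      omega
    have hT : ∀ w ∈ T, G.dist u w ≤ G.dist u v := by
      intro w hw
      have := (Finset.mem_erase.mp hw).2
      simp only [Finset.mem_filter, Finset.mem_univ, true_and] at this
      exact hkeymono w v this
    have hcard : rank v - 1 ≤ T.card := by
      rw [hT']
      exact Finset.pred_card_le_card_erase
    have h1 := Ei_le_offdiag G hr hK hXm hXi hXp hi hv T hTu hTv hT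
    have h2 : (μ (EiSet G X u v i)).toReal
        ≤ q * (1 - p) * (q * (1 - p)) * (1 - Q) ^ T.card :=
      ENNReal.toReal_le_of_le_ofReal
        (by positivity) h1
    calc (μ (EiSet G X u v i)).toReal ≤ q * (1 - p) * (q * (1 - p)) * (1 - Q) ^ T.card := h2
      _ ≤ q * (1 - p) * (q * (1 - p)) * (1 - Q) ^ (rank v - 1) := by
          apply mul_le_mul_of_nonneg_left (pow_le_pow_of_le_one hQ10 (by linarith) hcard)
          positivity
  -- sum it up
  have hsplit : ∑ v : V, (μ (EiSet G X u v i)).toReal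
      = (μ (EiSet G X u u i)).toReal
        + ∑ v ∈ Finset.univ.erase u, (μ (EiSet G X u v i)).toReal :=
    (Finset.add_sum_erase _ _ (Finset.mem_univ u)).symm
  have hsum2 : ∑ v ∈ Finset.univ.erase u, (μ (EiSet G X u v i)).toReal
      ≤ q * (1 - p) * (q * (1 - p)) * (1 / Q + 1) := by
    calc ∑ v ∈ Finset.univ.erase u, (μ (EiSet G X u v i)).toReal
        ≤ ∑ v ∈ Finset.univ.erase u,
            q * (1 - p) * (q * (1 - p)) * (1 - Q) ^ (rank v - 1) :=
          Finset.sum_le_sum fun v hv => hoff v (Finset.ne_of_mem_erase hv)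
      _ = q * (1 - p) * (q * (1 - p)) * ∑ v ∈ Finset.univ.erase u, (1 - Q) ^ (rank v - 1) := by
          rw [Finset.mul_sum]
      _ ≤ q * (1 - p) * (q * (1 - p)) * (1 / Q + 1) := by
          apply mul_le_mul_of_nonneg_left _ (by positivity)
          calc ∑ v ∈ Finset.univ.erase u, (1 - Q) ^ (rank v - 1)
              ≤ ∑ k ∈ Finset.range n, (1 - Q) ^ (k - 1) :=
                sum_inj_le (g := fun k => (1 - Q) ^ (k - 1))
                  (fun k => pow_nonneg hQ10 _) hrankinj hranklt _
            _ ≤ 1 / Q + 1 := by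
                rw [show n = (n - 1) + 1 by omega, Finset.sum_range_succ']
                simp only [Nat.add_sub_cancel, Nat.zero_sub, pow_zero]
                have := geom_le hQ10 hQ11 (n - 1)
                rw [sub_sub_cancel] at this
                linarith
  have hdivle : q * (1 - p) + q * (1 - p) * (q * (1 - p)) * (1 / Q + 1) ≤ q / p := by
    rw [hQeq, le_div_iff₀ hp0]
    have hqp : q * p ≠ 0 := by positivity
    field_simp
    have hkey2 : q * (1 - p) ^ 2 ≤ 1 := by nlinarith [sq_nonneg (1 - p)]
    nlinarith [mul_nonneg (mul_nonneg (mul_nonneg hq0.le hq0.le)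
      (mul_nonneg hp0.le hp0.le)) (sub_nonneg.mpr hkey2),
      mul_nonneg hp0.le (sub_nonneg.mpr hkey2)]
  have hdiveq : q / p = r ^ ((1:ℝ) / K) := by
    rw [hq', hp', qq, pp, ← Real.rpow_sub hrpos]
    congr 1
    field_simp
    ring
  calc ∑ v : V, (μ (EiSet G X u v i)).toReal
      ≤ q * (1 - p) + q * (1 - p) * (q * (1 - p)) * (1 / Q + 1) := by
        rw [hsplit]; exact add_le_add hdiag hsum2
    _ ≤ q / p := hdivle
    _ = r ^ ((1:ℝ) / K) := hdiveq

end sumv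


section apart

variable {μ : Measure Ω} [IsProbabilityMeasure μ] {X : V × ℕ → Ω → Bool} {r K : ℝ} {L : ℕ}

lemma memb_pre_full (X : V × ℕ → Ω → Bool) (w : V) :
    Memb X (L+1) w = (fun ω (j : Fin (L+1)) => X (w, (j:ℕ)) ω) ⁻¹'
      {b : Fin (L+1) → Bool | ∀ j : Fin (L+1), b j = true} := by
  ext ω
  simp only [Memb, Set.mem_setOf_eq, Set.mem_preimage]
  constructor
  · intro h j
    exact h j j.isLt
  · intro h j hj
    exact h ⟨j, hj⟩

lemma prob_EA_offdiag [DecidableEq V] (hr : 1 ≤ r)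
    (hXm : ∀ q, Measurable (X q))
    (hXi : ProbabilityTheory.iIndepFun X μ)
    (hXp : ∀ (v : V) (j : ℕ), j ≤ L →
      μ {ω | X (v, j) ω = true} = ENNReal.ofReal (pp r K j))
    {u v : V} (huv : u ≠ v) :
    μ (Memb X (L+1) u ∩ Memb X (L+1) v)
      = ENNReal.ofReal (qq r K (L+1) * qq r K (L+1)) := by
  have hgr := grouped hXm hXi L
    (fun _ => {b : Fin (L+1) → Bool | ∀ j : Fin (L+1), b j = true})
    {u, v} (fun w => Memb X (L+1) w) (fun w _ => memb_pre_full X w)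
  have hset : ⋂ w ∈ ({u, v} : Finset V), Memb X (L+1) w
      = Memb X (L+1) u ∩ Memb X (L+1) v := by
    simp
  rw [← hset, hgr, Finset.prod_pair huv,
    prob_memb hr hXi hXp le_rfl u, prob_memb hr hXi hXp le_rfl v,
    ← ENNReal.ofReal_mul (qq_pos hr (L+1)).le]

lemma ncard_cast_eq_sum {α : Type} [Fintype α] (S : Set α) [∀ a, Decidable (a ∈ S)] :
    ((S.ncard : ℝ)) = ∑ a ∈ Finset.univ, if a ∈ S then (1:ℝ) else 0 := by
  rw [Finset.sum_boole]
  congr 1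
  rw [← Nat.card_coe_set_eq, Nat.card_eq_fintype_card]
  have h := Fintype.card_subtype (fun a => a ∈ S)
  convert h using 2

lemma measurableSet_EiSet [DecidableEq V] (G : SimpleGraph V)
    (hXm : ∀ q, Measurable (X q)) (u v : V) (i : ℕ) :
    MeasurableSet (EiSet G X u v i) := by
  apply MeasurableSet.inter
  · exact (measurableSet_memb hXm i u).inter (measurableSet_memb hXm (i+1) u).compl
  · exact (measurableSet_memb hXm i v).inter
      (Finset.measurableSet_biInter _ fun z _ => (measurableSet_memb hXm (i+1) z).compl)

lemma integrable_ind {E : Set Ω} [∀ ω, Decidable (ω ∈ E)] (hE : MeasurableSet E) :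
    Integrable (fun ω => if ω ∈ E then (1:ℝ) else 0) μ := by
  have h : (fun ω => if ω ∈ E then (1:ℝ) else 0) = E.indicator (fun _ => (1:ℝ)) := by
    funext ω
    rw [Set.indicator_apply]
  rw [h, integrable_indicator_iff hE]
  exact integrableOn_const (measure_lt_top μ E).ne

lemma integral_ind {E : Set Ω} [∀ ω, Decidable (ω ∈ E)] (hE : MeasurableSet E) :
    ∫ ω, (if ω ∈ E then (1:ℝ) else 0) ∂μ = (μ E).toReal := by
  have h : (fun ω => if ω ∈ E then (1:ℝ) else 0) = E.indicator (fun _ => (1:ℝ)) := by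
    funext ω
    rw [Set.indicator_apply]
  rw [h, integral_indicator_const (1:ℝ) hE, smul_eq_mul, mul_one]
  rfl

end apart

end TZaux

open TZaux in
/-- **Expected total size of the Thorup–Zwick emulator.**
In the random Thorup–Zwick hierarchy (each vertex of `A i` promoted to `A (i+1)`
independently with probability `n^(-2^i/κ)`, where `κ = 2^ℓ - 1`), the expected value of
`N + |A (ℓ-1)|²` is at most `2·ℓ·n^(1+1/κ)`, where `N` is the number of ordered pairs
`(u,v)` for which there exists `i ≤ ℓ-2` with `u ∈ A i \ A (i+1)`, `v ∈ A i` and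
`d_G(u,v) < d_G(u, A (i+1))`. -/
theorem expected_total_size_thorup_zwick_emulator :
    ∀ (V : Type) [Fintype V] (G : SimpleGraph V), G.Connected →
    2 ≤ Fintype.card V →
    ∀ ℓ : ℕ, 2 ≤ ℓ →
    ∀ κ : ℕ, κ = 2 ^ ℓ - 1 →
    ∀ (Ω : Type) [MeasurableSpace Ω] (μ : Measure Ω), IsProbabilityMeasure μ →
    ∀ X : V × ℕ → Ω → Bool,
      (∀ q, Measurable (X q)) →
      ProbabilityTheory.iIndepFun X μ →
      (∀ (v : V) (i : ℕ), i ≤ ℓ - 2 →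
        μ {ω | X (v, i) ω = true} =
          ENNReal.ofReal ((Fintype.card V : ℝ) ^ (-((2 : ℝ) ^ i) / (κ : ℝ)))) →
    ∀ A : ℕ → Ω → Set V,
      (∀ ω, A 0 ω = Set.univ) →
      (∀ i ω, A (i + 1) ω = {v ∈ A i ω | X (v, i) ω = true}) →
    (∫ ω, ((Set.ncard {q : V × V | ∃ i ≤ ℓ - 2,
          q.1 ∈ A i ω ∧ q.1 ∉ A (i + 1) ω ∧ q.2 ∈ A i ω ∧
          ∀ z ∈ A (i + 1) ω, G.dist q.1 q.2 < G.dist q.1 z} : ℝ) +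
        ((Set.ncard (A (ℓ - 1) ω) : ℝ)) ^ 2) ∂μ) ≤
      2 * (ℓ : ℝ) * (Fintype.card V : ℝ) ^ (1 + 1 / (κ : ℝ)) := by
  intro V _ G hconn hn ℓ hℓ κ hκ Ω _ μ hμ X hXm hXi hXp A hA0 hAS
  classical
  set L : ℕ := ℓ - 2 with hLdef
  have hL1 : ℓ - 1 = L + 1 := by omega
  set r : ℝ := (Fintype.card V : ℝ) with hrdef
  set K : ℝ := (κ : ℝ) with hKdef
  have hκ3 : 3 ≤ κ := by
    subst hκ
    have h4 : 4 ≤ 2 ^ ℓ := by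
      calc (4:ℕ) = 2 ^ 2 := by norm_num
        _ ≤ 2 ^ ℓ := Nat.pow_le_pow_right (by norm_num) hℓ
    omega
  have hK : 0 < K := by rw [hKdef]; exact_mod_cast (by omega : (0:ℕ) < κ)
  have hr : 1 ≤ r := by rw [hrdef]; exact_mod_cast Nat.one_le_of_lt hn
  have hrpos : 0 < r := lt_of_lt_of_le one_pos hr
  have hXp' : ∀ (v : V) (j : ℕ), j ≤ L →
      μ {ω | X (v, j) ω = true} = ENNReal.ofReal (pp r K j) := by
    intro v j hj
    rw [hXp v j hj]
    rfl
  have hmemb := memb_char (X := X) hA0 hAS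
  set EN : V × V → Set Ω :=
    fun qv => ⋃ i ∈ Finset.range (ℓ - 1), EiSet G X qv.1 qv.2 i with hEN
  set EA : V × V → Set Ω :=
    fun qv => Memb X (ℓ - 1) qv.1 ∩ Memb X (ℓ - 1) qv.2 with hEA
  -- pointwise identification of the counting terms
  have hNset : ∀ ω, {q : V × V | ∃ i ≤ ℓ - 2,
      q.1 ∈ A i ω ∧ q.1 ∉ A (i + 1) ω ∧ q.2 ∈ A i ω ∧
      ∀ z ∈ A (i + 1) ω, G.dist q.1 q.2 < G.dist q.1 z} = {q : V × V | ω ∈ EN q} := by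
    intro ω
    ext ⟨u, v⟩
    simp only [Set.mem_setOf_eq, hEN, Set.mem_iUnion, Finset.mem_range]
    constructor
    · rintro ⟨i, hi, h1, h2, h3, h4⟩
      refine ⟨i, ⟨by omega, ?_⟩⟩
      refine ⟨⟨(hmemb i ω u).1 h1, fun hc => h2 ((hmemb (i+1) ω u).2 hc)⟩,
        (hmemb i ω v).1 h3, ?_⟩
      simp only [Set.mem_iInter]
      intro z hz
      simp only [Finset.mem_filter, Finset.mem_univ, true_and] at hz
      intro hc
      have := h4 z ((hmemb (i+1) ω z).2 hc)
      omega
    · rintro ⟨i, hi, ⟨⟨h1, h2⟩, h3, h4⟩⟩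
      refine ⟨i, by omega, (hmemb i ω u).2 h1,
        fun hc => h2 ((hmemb (i+1) ω u).1 hc), (hmemb i ω v).2 h3, ?_⟩
      intro z hz
      by_contra hc
      push_neg at hc
      have hzmem : z ∈ Finset.univ.filter (fun z => G.dist u z ≤ G.dist u v) :=
        Finset.mem_filter.mpr ⟨Finset.mem_univ z, hc⟩
      simp only [Set.mem_iInter] at h4
      exact (h4 z hzmem) ((hmemb (i+1) ω z).1 hz)
  have hEAmem : ∀ (ω : Ω) (u v : V),
      ω ∈ EA (u, v) ↔ (u ∈ A (ℓ - 1) ω ∧ v ∈ A (ℓ - 1) ω) := by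
    intro ω u v
    simp only [hEA, Set.mem_inter_iff]
    rw [← hmemb (ℓ-1) ω u, ← hmemb (ℓ-1) ω v]
  have hAc : ∀ ω, ∑ q ∈ (Finset.univ : Finset (V × V)), (if ω ∈ EA q then (1:ℝ) else 0)
      = ((Set.ncard (A (ℓ - 1) ω) : ℝ)) ^ 2 := by
    intro ω
    calc ∑ q ∈ (Finset.univ : Finset (V × V)), (if ω ∈ EA q then (1:ℝ) else 0)
        = ∑ u : V, ∑ v : V, (if ω ∈ EA (u, v) then (1:ℝ) else 0) := by
          rw [Fintype.sum_prod_type]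
      _ = ∑ u : V, ∑ v : V, (if u ∈ A (ℓ-1) ω then (1:ℝ) else 0)
            * (if v ∈ A (ℓ-1) ω then (1:ℝ) else 0) := by
          apply Finset.sum_congr rfl
          intro u _
          apply Finset.sum_congr rfl
          intro v _
          by_cases h1 : u ∈ A (ℓ-1) ω <;> by_cases h2 : v ∈ A (ℓ-1) ω <;>
            simp [hEAmem ω u v, h1, h2]
      _ = (∑ u : V, if u ∈ A (ℓ-1) ω then (1:ℝ) else 0)
            * (∑ v : V, if v ∈ A (ℓ-1) ω then (1:ℝ) else 0) :=
          (Finset.sum_mul_sum _ _ _ _).symm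
      _ = ((Set.ncard (A (ℓ - 1) ω) : ℝ)) ^ 2 := by
          rw [← ncard_cast_eq_sum (A (ℓ-1) ω), sq]
  have hint : ∀ ω, ((Set.ncard {q : V × V | ∃ i ≤ ℓ - 2,
        q.1 ∈ A i ω ∧ q.1 ∉ A (i + 1) ω ∧ q.2 ∈ A i ω ∧
        ∀ z ∈ A (i + 1) ω, G.dist q.1 q.2 < G.dist q.1 z} : ℝ) +
      ((Set.ncard (A (ℓ - 1) ω) : ℝ)) ^ 2)
      = ∑ q ∈ (Finset.univ : Finset (V × V)),
          ((if ω ∈ EN q then (1:ℝ) else 0) + (if ω ∈ EA q then (1:ℝ) else 0)) := by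
    intro ω
    rw [Finset.sum_add_distrib]
    congr 1
    · rw [hNset ω, ncard_cast_eq_sum]
      apply Finset.sum_congr rfl
      intro q _
      simp only [Set.mem_setOf_eq]
    · exact (hAc ω).symm
  -- measurability
  have hENmeas : ∀ q : V × V, MeasurableSet (EN q) := fun q =>
    Finset.measurableSet_biUnion _ (fun i _ => measurableSet_EiSet G hXm _ _ i)
  have hEAmeas : ∀ q : V × V, MeasurableSet (EA q) := fun q =>
    (measurableSet_memb hXm _ _).inter (measurableSet_memb hXm _ _)
  -- compute the integral
  have hint2 : (∫ ω, ((Set.ncard {q : V × V | ∃ i ≤ ℓ - 2,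
        q.1 ∈ A i ω ∧ q.1 ∉ A (i + 1) ω ∧ q.2 ∈ A i ω ∧
        ∀ z ∈ A (i + 1) ω, G.dist q.1 q.2 < G.dist q.1 z} : ℝ) +
        ((Set.ncard (A (ℓ - 1) ω) : ℝ)) ^ 2) ∂μ)
      = ∑ q ∈ (Finset.univ : Finset (V × V)),
          ((μ (EN q)).toReal + (μ (EA q)).toReal) := by
    rw [integral_congr_ae (Filter.Eventually.of_forall hint)]
    rw [integral_finset_sum]
    · apply Finset.sum_congr rfl
      intro q _
      rw [integral_add (integrable_ind (hENmeas q)) (integrable_ind (hEAmeas q)),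
        integral_ind (hENmeas q), integral_ind (hEAmeas q)]
    · intro q _
      exact (integrable_ind (hENmeas q)).add (integrable_ind (hEAmeas q))
  rw [hint2, Finset.sum_add_distrib]
  -- bound the N part
  have hNbound : ∑ q ∈ (Finset.univ : Finset (V × V)), (μ (EN q)).toReal
      ≤ ((ℓ:ℝ) - 1) * r ^ (1 + 1/K) := by
    have h1 : ∀ q : V × V, (μ (EN q)).toReal
        ≤ ∑ i ∈ Finset.range (ℓ-1), (μ (EiSet G X q.1 q.2 i)).toReal := by
      intro q
      have hne : (∑ i ∈ Finset.range (ℓ-1), μ (EiSet G X q.1 q.2 i)) ≠ ⊤ :=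
        (ENNReal.sum_lt_top.mpr fun i _ => measure_lt_top μ _).ne
      calc (μ (EN q)).toReal
          ≤ (∑ i ∈ Finset.range (ℓ-1), μ (EiSet G X q.1 q.2 i)).toReal := by
            apply ENNReal.toReal_mono hne
            rw [hEN]
            exact measure_biUnion_finset_le _ _
        _ = ∑ i ∈ Finset.range (ℓ-1), (μ (EiSet G X q.1 q.2 i)).toReal :=
            ENNReal.toReal_sum (fun i _ => (measure_lt_top μ _).ne)
    calc ∑ q ∈ (Finset.univ : Finset (V × V)), (μ (EN q)).toReal
        ≤ ∑ q ∈ (Finset.univ : Finset (V × V)),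
            ∑ i ∈ Finset.range (ℓ-1), (μ (EiSet G X q.1 q.2 i)).toReal :=
          Finset.sum_le_sum (fun q _ => h1 q)
      _ = ∑ u : V, ∑ v : V, ∑ i ∈ Finset.range (ℓ-1),
            (μ (EiSet G X u v i)).toReal := by
          rw [Fintype.sum_prod_type]
      _ = ∑ u : V, ∑ i ∈ Finset.range (ℓ-1), ∑ v : V,
            (μ (EiSet G X u v i)).toReal := by
          exact Finset.sum_congr rfl (fun u _ => Finset.sum_comm)
      _ ≤ ∑ u : V, ∑ i ∈ Finset.range (ℓ-1), r ^ ((1:ℝ)/K) := by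
          apply Finset.sum_le_sum
          intro u _
          apply Finset.sum_le_sum
          intro i hi
          exact sum_Ei_le G hn hrdef hK hXm hXi hXp'
            (by simp only [Finset.mem_range] at hi; omega) u
      _ = (Fintype.card V : ℝ) * ((ℓ - 1 : ℕ) * r ^ ((1:ℝ)/K)) := by
          simp [Finset.sum_const, Finset.card_univ, nsmul_eq_mul, mul_assoc]
      _ = ((ℓ:ℝ) - 1) * r ^ (1 + 1/K) := by
          rw [Real.rpow_add hrpos, Real.rpow_one]
          rw [Nat.cast_sub (by omega : 1 ≤ ℓ)]
          push_cast
          rw [← hrdef]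
          ring
  -- bound the A part
  have hqL0 : 0 < qq r K (ℓ-1) := qq_pos hr _
  have hqL1 : qq r K (ℓ-1) ≤ 1 := qq_le_one hr hK _
  have hdiagEA : ∀ u : V, (μ (EA (u,u))).toReal = qq r K (ℓ-1) := by
    intro u
    have h : EA (u,u) = Memb X (ℓ-1) u := by rw [hEA]; exact Set.inter_self _
    rw [h, hL1, prob_memb hr hXi hXp' le_rfl u, ← hL1,
      ENNReal.toReal_ofReal hqL0.le]
  have hoffEA : ∀ u v : V, u ≠ v →
      (μ (EA (u,v))).toReal = qq r K (ℓ-1) * qq r K (ℓ-1) := by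
    intro u v huv
    have h : EA (u,v) = Memb X (L+1) u ∩ Memb X (L+1) v := by rw [hEA, hL1]
    rw [h, prob_EA_offdiag hr hXm hXi hXp' huv, ← hL1,
      ENNReal.toReal_ofReal (by positivity)]
  have hnq : r * qq r K (ℓ-1) ≤ r ^ (1 + 1/K) := by
    calc r * qq r K (ℓ-1) ≤ r * 1 := by
          apply mul_le_mul_of_nonneg_left hqL1 hrpos.le
      _ = r ^ (1:ℝ) := by rw [mul_one, Real.rpow_one]
      _ ≤ r ^ (1 + 1/K) := Real.rpow_le_rpow_of_exponent_le hr
          (le_add_of_nonneg_right (by positivity))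
  have hKval : K = 2 ^ ℓ - 1 := by
    rw [hKdef, hκ]
    have h1 : (1:ℕ) ≤ 2 ^ ℓ := Nat.one_le_two_pow
    push_cast [Nat.cast_sub h1]
    ring
  have hn2q2 : (r * qq r K (ℓ-1)) * (r * qq r K (ℓ-1)) = r ^ (1 + 1/K) := by
    have h1 : r * qq r K (ℓ-1) = r ^ (1 + -((2:ℝ) ^ (ℓ-1) - 1) / K) := by
      rw [qq, Real.rpow_add hrpos, Real.rpow_one]
    rw [h1, ← Real.rpow_add hrpos]
    congr 1
    have h2l : (2:ℝ) ^ ℓ = 2 * 2 ^ (ℓ-1) := by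
      rw [← pow_succ']
      congr 1
      omega
    field_simp
    nlinarith [h2l, hKval]
  have hAbound : ∑ q ∈ (Finset.univ : Finset (V × V)), (μ (EA q)).toReal
      ≤ 2 * r ^ (1 + 1/K) := by
    calc ∑ q ∈ (Finset.univ : Finset (V × V)), (μ (EA q)).toReal
        = ∑ u : V, ∑ v : V, (μ (EA (u, v))).toReal := by rw [Fintype.sum_prod_type]
      _ = ∑ u : V, ((μ (EA (u,u))).toReal
            + ∑ v ∈ Finset.univ.erase u, (μ (EA (u,v))).toReal) :=
          Finset.sum_congr rfl (fun u _ =>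
            (Finset.add_sum_erase _ _ (Finset.mem_univ u)).symm)
      _ = ∑ u : V, (qq r K (ℓ-1)
            + ∑ v ∈ Finset.univ.erase u, qq r K (ℓ-1) * qq r K (ℓ-1)) := by
          apply Finset.sum_congr rfl
          intro u _
          rw [hdiagEA u]
          congr 1
          exact Finset.sum_congr rfl (fun v hv =>
            hoffEA u v (Ne.symm (Finset.ne_of_mem_erase hv)))
      _ ≤ ∑ u : V, (qq r K (ℓ-1)
            + (Fintype.card V : ℝ) * (qq r K (ℓ-1) * qq r K (ℓ-1))) := by
          apply Finset.sum_le_sum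
          intro u _
          apply add_le_add le_rfl
          rw [Finset.sum_const, nsmul_eq_mul]
          apply mul_le_mul_of_nonneg_right _ (by positivity)
          calc ((Finset.univ.erase u).card : ℝ) ≤ (Finset.univ.card : ℝ) := by
                exact_mod_cast Finset.card_le_card (Finset.erase_subset _ _)
            _ = (Fintype.card V : ℝ) := by rw [Finset.card_univ]
      _ = r * qq r K (ℓ-1) + (r * qq r K (ℓ-1)) * (r * qq r K (ℓ-1)) := by
          rw [Finset.sum_const, Finset.card_univ, nsmul_eq_mul, ← hrdef]
          ring
      _ ≤ r ^ (1 + 1/K) + r ^ (1 + 1/K) := add_le_add hnq (le_of_eq hn2q2)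
      _ = 2 * r ^ (1 + 1/K) := by ring
  have hfinal : ((ℓ:ℝ) - 1) * r ^ (1 + 1/K) + 2 * r ^ (1 + 1/K)
      ≤ 2 * (ℓ:ℝ) * r ^ (1 + 1/K) := by
    have hpow : 0 ≤ r ^ (1 + 1/K) := Real.rpow_nonneg hrpos.le _
    have hl2 : (2:ℝ) ≤ (ℓ:ℝ) := by exact_mod_cast hℓ
    nlinarith
  calc ∑ q ∈ (Finset.univ : Finset (V × V)), (μ (EN q)).toReal
        + ∑ q ∈ (Finset.univ : Finset (V × V)), (μ (EA q)).toReal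
      ≤ ((ℓ:ℝ) - 1) * r ^ (1 + 1/K) + 2 * r ^ (1 + 1/K) := add_le_add hNbound hAbound
    _ ≤ 2 * (ℓ:ℝ) * r ^ (1 + 1/K) := hfinal
end

section
/- (Sublinear additive error from a universal near-additive bound) Let k ≥ 2 and d ≥ k^{k−1} be real numbers, and let D be a real number such that D ≤ (1+ε)·d + (k/ε)^{k−2} for every real ε with 0 < ε ≤ 1. Then D ≤ d + 2·k·d^{1 − 1/(k−1)}. -/
open Real

/-- The choice `ε = k / d ^ (1 / (k - 1))` balances the two error terms: `ε * d` and
`(k / ε) ^ (k - 2)` both become multiples of `d ^ (1 - 1 / (k - 1))`. -/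
lemma mul_add_div_rpow_eq_at_balanced_eps {k d : ℝ} (hk0 : k ≠ 0) (hk1 : k ≠ 1) (hd : 0 < d) :
    (1 + k / d ^ (1 / (k - 1))) * d + (k / (k / d ^ (1 / (k - 1)))) ^ (k - 2) =
      d + (k + 1) * d ^ (1 - 1 / (k - 1)) := by
  have hsub : k - 1 ≠ 0 := sub_ne_zero.2 hk1
  have hexp : 1 / (k - 1) * (k - 2) = 1 - 1 / (k - 1) := by field_simp; ring
  have hmain : k / d ^ (1 / (k - 1)) * d = k * d ^ (1 - 1 / (k - 1)) := by
    rw [rpow_sub hd, rpow_one]; ring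
  rw [div_div_cancel₀ hk0, ← rpow_mul hd.le, hexp, add_mul, hmain]
  ring

lemma le_rpow_one_div_of_rpow_le {x d p : ℝ} (hx : 0 ≤ x) (hp : 0 < p) (h : x ^ p ≤ d) :
    x ≤ d ^ (1 / p) := by
  rw [one_div, le_rpow_inv_iff_of_pos hx ((rpow_nonneg hx p).trans h) hp]
  exact h

/-- **Sublinear additive error from a universal near-additive bound.**
Let `k ≥ 2` and `d ≥ k^(k-1)` be real numbers, and let `D` be a real number such that
`D ≤ (1+ε)·d + (k/ε)^(k-2)` for every `0 < ε ≤ 1`. Then `D ≤ d + 2·k·d^(1 - 1/(k-1))`.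
(All powers are real powers.) -/
theorem sublinear_additive_error_from_universal_bound (k d D : ℝ)
    (hk : 2 ≤ k) (hd : k ^ (k - 1) ≤ d)
    (hD : ∀ ε : ℝ, 0 < ε → ε ≤ 1 → D ≤ (1 + ε) * d + (k / ε) ^ (k - 2)) :
    D ≤ d + 2 * k * d ^ (1 - 1 / (k - 1)) := by
  have hk0 : 0 < k := by linarith
  have hd0 : 0 < d := (rpow_pos_of_pos hk0 _).trans_le hd
  have hkd : k ≤ d ^ (1 / (k - 1)) := le_rpow_one_div_of_rpow_le hk0.le (by linarith) hd
  have hbound := hD (k / d ^ (1 / (k - 1))) (by positivity)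
    ((div_le_one (by positivity)).2 hkd)
  rw [mul_add_div_rpow_eq_at_balanced_eps hk0.ne' (by linarith) hd0] at hbound
  have hpow : 0 ≤ d ^ (1 - 1 / (k - 1)) := by positivity
  nlinarith
end
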